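/- arXiv:1904.12260 — 12 statements merged into one kernel-verified Lean document; each statement's English description precedes it below -/
import Mathlib

section
/- For every complex number s with Re(s) > 0 and every real K ≥ 0, the integral ∫₀^∞ (√y − K)⁺ e^{−sy} dy equals (√π / (2 s^{3/2})) · erfc(K √s), where √s and s^{3/2} denote principal-branch complex powers. -/
open MeasureTheory Real Complex Set

open Filter Topology

lemma quadTendsto {α : ℝ} (hα : 0 < α) (β d : ℝ) :
    Tendsto (fun t : ℝ => α*t^2 + β*t + d) atTop atTop := by
  refine tendsto_atTop_mono' atTop ?_ (tendsto_atTop_add_const_right _ d tendsto_id)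
  filter_upwards [eventually_ge_atTop ((1 - β)/α), eventually_ge_atTop 0] with t h1 h2
  have h3 : 1 - β ≤ α * t := by rwa [div_le_iff₀ hα, mul_comm] at h1
  simp only [id]
  nlinarith

lemma expNegQuadTendsto {α : ℝ} (hα : 0 < α) (β d : ℝ) :
    Tendsto (fun t : ℝ => rexp (-(α*t^2 + β*t + d))) atTop (𝓝 0) :=
  Real.tendsto_exp_atBot.comp (tendsto_neg_atTop_atBot.comp (quadTendsto hα β d))

lemma integrable_exp_quad {α : ℝ} (hα : 0 < α) (β : ℝ) :
    Integrable (fun u : ℝ => rexp (-α*u^2 + β*u)) := by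
  have h := (integrable_cexp_quadratic (b := (α:ℂ)) (by simpa using hα) (β:ℂ) 0).norm
  refine h.congr (Filter.Eventually.of_forall fun u => ?_)
  simp only [Complex.norm_exp]
  congr 1
  have : -(α:ℂ) * u^2 + β*u + 0 = ((-α*u^2 + β*u : ℝ) : ℂ) := by push_cast; ring
  rw [this, Complex.ofReal_re]

lemma integrableOn_pow_mul_exp_quad {α : ℝ} (hα : 0 < α) (β : ℝ) (n : ℕ) :
    IntegrableOn (fun u : ℝ => u ^ n * rexp (-α*u^2 + β*u)) (Ioi 0) := by
  refine Integrable.mono' (((integrable_exp_quad hα (β+1)).restrict (s := Ioi 0)).const_mul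
    (n.factorial : ℝ)) ?_ ?_
  · exact ((continuous_pow n).mul (by continuity)).aestronglyMeasurable
  · filter_upwards [ae_restrict_mem measurableSet_Ioi] with u hu
    have hu0 : (0:ℝ) ≤ u := le_of_lt hu
    have hpow : u ^ n ≤ (n.factorial : ℝ) * rexp u := by
      have h := Real.pow_div_factorial_le_exp u hu0 n
      rw [div_le_iff₀ (by positivity)] at h
      linarith [h, mul_comm (rexp u) (n.factorial : ℝ)]
    rw [Real.norm_eq_abs]; rw [_root_.abs_of_nonneg (by positivity : (0:ℝ) ≤ u ^ n * rexp (-α*u^2 + β*u))]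
    calc u ^ n * rexp (-α*u^2 + β*u) ≤ ((n.factorial : ℝ) * rexp u) * rexp (-α*u^2 + β*u) := by
          exact mul_le_mul_of_nonneg_right hpow (by positivity)
      _ = (n.factorial : ℝ) * rexp (-α*u^2 + (β+1)*u) := by rw [mul_assoc, ← Real.exp_add]; ring_nf


lemma re_neg_sq (a c : ℂ) (u : ℝ) :
    (-(a + c*u)^2).re = -(a^2).re - 2*(a*c).re*u - (c^2).re*u^2 := by
  have h : -(a + c*↑u)^2 = -(a^2) - (2*(a*c))*(↑u) - (c^2)*(↑(u^2):ℂ) := by push_cast; ring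
  rw [h]
  simp [Complex.sub_re, Complex.neg_re, Complex.mul_re, Complex.ofReal_re, Complex.ofReal_im, ← Complex.ofReal_pow]

lemma integrableOn_pow_mul_cexp {c : ℂ} (hc : 0 < (c^2).re) (a : ℂ) (n : ℕ) :
    IntegrableOn (fun u : ℝ => (u:ℂ) ^ n * Complex.exp (-(a + c*u)^2)) (Ioi 0) := by
  refine Integrable.mono' ((integrableOn_pow_mul_exp_quad hc (-2*(a*c).re) n).const_mul
    (rexp (-(a^2).re))) ?_ ?_
  · exact Continuous.aestronglyMeasurable (by continuity)
  · filter_upwards [ae_restrict_mem measurableSet_Ioi] with u hu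
    rw [norm_mul, norm_pow, Complex.norm_real, Complex.norm_exp, re_neg_sq,
      Real.norm_eq_abs, _root_.abs_of_nonneg (le_of_lt hu)]
    have h2 : rexp (-(a^2).re - 2*(a*c).re*u - (c^2).re*u^2)
        = rexp (-(a^2).re) * rexp (-(c^2).re*u^2 + (-2*(a*c).re)*u) := by
      rw [← Real.exp_add]; ring_nf
    rw [h2]; exact le_of_eq (by ring)


noncomputable def Gi (z : ℂ) : ℂ := ∫ v in Ioi (0:ℝ), Complex.exp (-(z + (v:ℂ))^2)

lemma hasDerivAt_cexp_sq (b x : ℂ) :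
    HasDerivAt (fun w : ℂ => Complex.exp (-(w+b)^2)) (-2*(x+b)*Complex.exp (-(x+b)^2)) x := by
  have h : HasDerivAt (fun w : ℂ => -(w+b)^2) (-(2*(x+b))) x := by
    simpa using (((hasDerivAt_id x).add_const b).fun_pow 2).fun_neg
  exact h.cexp.congr_deriv (by ring)

lemma hasDerivAt_cexp_sq' (b x : ℂ) :
    HasDerivAt (fun w : ℂ => Complex.exp (-(b+w)^2)) (-2*(b+x)*Complex.exp (-(b+x)^2)) x := by
  have h : HasDerivAt (fun w : ℂ => -(b+w)^2) (-(2*(b+x))) x := by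
    simpa using (((hasDerivAt_id x).const_add b).fun_pow 2).fun_neg
  exact h.cexp.congr_deriv (by ring)

lemma Gi_norm_le {z : ℂ} (hz : 1/2 ≤ z.re) : ‖Gi z‖ ≤ rexp (-(z^2).re) := by
  have hint : IntegrableOn (fun v : ℝ => Complex.exp (-(z + v)^2)) (Ioi 0) := by
    simpa using integrableOn_pow_mul_cexp (c := 1) (by simp) z 0
  have hexp : IntegrableOn (fun v : ℝ => rexp (-v)) (Ioi 0) := by
    simpa using exp_neg_integrableOn_Ioi 0 one_pos
  refine (norm_integral_le_integral_norm _).trans ?_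
  have h2 : ∫ v in Ioi (0:ℝ), ‖Complex.exp (-(z + v)^2)‖
      ≤ ∫ v in Ioi (0:ℝ), rexp (-(z^2).re) * rexp (-v) := by
    refine setIntegral_mono_on hint.norm (hexp.const_mul _) measurableSet_Ioi ?_
    intro v hv
    rw [Complex.norm_exp, ← Real.exp_add]
    apply Real.exp_le_exp.2
    have h3 : (-(z + (1:ℂ)*v)^2).re = -(z^2).re - 2*(z*1).re*v - ((1:ℂ)^2).re*v^2 :=
      re_neg_sq z 1 v
    simp only [one_mul, mul_one, one_pow, Complex.one_re] at h3
    rw [h3]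
    have hv0 : (0:ℝ) < v := hv
    nlinarith
  refine h2.trans (le_of_eq ?_)
  rw [integral_const_mul, integral_exp_neg_Ioi_zero, mul_one]

lemma tendsto_cexp_ray {a c : ℂ} (hc2 : 0 < (c^2).re) :
    Tendsto (fun t : ℝ => Complex.exp (-(a + c*t)^2)) atTop (𝓝 0) := by
  refine squeeze_zero_norm (fun t => ?_) (expNegQuadTendsto hc2 (2*(a*c).re) ((a^2).re))
  rw [Complex.norm_exp, re_neg_sq]
  exact le_of_eq (by ring_nf)

lemma tendsto_Gi_ray {a c : ℂ} (hcre : 0 < c.re) (hc2 : 0 < (c^2).re) :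
    Tendsto (fun t : ℝ => Gi (a + c*t)) atTop (𝓝 0) := by
  have hre : Tendsto (fun t : ℝ => (a + c*t).re) atTop atTop := by
    have he : (fun t : ℝ => (a + c*t).re) = fun t => c.re * t + a.re := by
      funext t
      simp [Complex.add_re, Complex.mul_re, Complex.ofReal_re, Complex.ofReal_im]
      ring
    rw [he]
    exact tendsto_atTop_add_const_right _ _ (tendsto_id.const_mul_atTop hcre)
  refine squeeze_zero_norm' ?_ (expNegQuadTendsto hc2 (2*(a*c).re) ((a^2).re))
  filter_upwards [hre.eventually_ge_atTop (1/2)] with t ht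
  refine (Gi_norm_le ht).trans (le_of_eq ?_)
  congr 1
  have h3 : -((a + c*(t:ℂ))^2).re = -(a^2).re - 2*(a*c).re*t - (c^2).re*t^2 := by
    rw [← Complex.neg_re]; exact re_neg_sq a c t
  rw [h3]; ring

lemma Gi_hasDerivAt (z₀ : ℂ) : HasDerivAt Gi (-Complex.exp (-z₀^2)) z₀ := by
  set Y : ℝ := |z₀.im| + 1 with hY
  set m : ℝ := z₀.re - 1 with hm
  have h0int : IntegrableOn (fun v : ℝ => rexp (-1*v^2 + (-2*m)*v)) (Ioi 0) := by
    simpa using integrableOn_pow_mul_exp_quad one_pos (-2*m) 0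
  have h1int : IntegrableOn (fun v : ℝ => v * rexp (-1*v^2 + (-2*m)*v)) (Ioi 0) := by
    simpa using integrableOn_pow_mul_exp_quad one_pos (-2*m) 1
  have hb : ∀ᵐ (v : ℝ) ∂(volume.restrict (Ioi (0:ℝ))), ∀ x ∈ Metric.ball z₀ 1,
      ‖-2*(x + (v:ℂ))*Complex.exp (-(x + (v:ℂ))^2)‖
        ≤ 2*rexp (Y^2) * ((‖z₀‖+1) * rexp (-1*v^2 + (-2*m)*v)
          + v * rexp (-1*v^2 + (-2*m)*v)) := by
    filter_upwards [ae_restrict_mem measurableSet_Ioi] with v hv x hx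
    have hv0 : (0:ℝ) ≤ v := le_of_lt hv
    have hxz : ‖x - z₀‖ ≤ 1 := le_of_lt (by rwa [Metric.mem_ball, dist_eq_norm] at hx)
    have hxn : ‖x‖ ≤ ‖z₀‖ + 1 := by
      have : ‖x‖ = ‖z₀ + (x - z₀)‖ := by ring_nf
      rw [this]
      exact (norm_add_le _ _).trans (by linarith)
    have hnx : ‖x + (v:ℂ)‖ ≤ (‖z₀‖ + 1) + v := by
      refine (norm_add_le _ _).trans ?_
      rw [Complex.norm_real, Real.norm_eq_abs, _root_.abs_of_nonneg hv0]
      linarith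
    have him : |x.im| ≤ Y := by
      have h1 : |x.im - z₀.im| ≤ ‖x - z₀‖ := by
        rw [← Complex.sub_im]
        exact Complex.abs_im_le_norm (x - z₀)
      have h2 : |x.im| ≤ |z₀.im| + |x.im - z₀.im| := by
        have := abs_add_le z₀.im (x.im - z₀.im)
        simpa using this
      rw [hY]; linarith
    have hre : m ≤ x.re := by
      have h1 : |x.re - z₀.re| ≤ ‖x - z₀‖ := by
        rw [← Complex.sub_re]
        exact Complex.abs_re_le_norm (x - z₀)
      have h2 := abs_le.1 (h1.trans hxz)
      rw [hm]; linarith [h2.1]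
    have hnorm : ‖-2*(x + (v:ℂ))*Complex.exp (-(x + (v:ℂ))^2)‖
        = 2 * ‖x + (v:ℂ)‖ * rexp ((-(x + (v:ℂ))^2).re) := by
      rw [norm_mul, norm_mul, Complex.norm_exp]
      norm_num
    have hsq : ((x + (v:ℂ))^2).re = (x.re + v)^2 - x.im^2 := by
      simp [pow_two, Complex.mul_re, Complex.add_re, Complex.add_im, Complex.ofReal_re,
        Complex.ofReal_im]
    have hrebound : (-(x + (v:ℂ))^2).re ≤ Y^2 + (-1*v^2 + (-2*m)*v) := by
      rw [Complex.neg_re, hsq]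
      have h3 : x.im^2 ≤ Y^2 := by
        rw [← _root_.sq_abs x.im]
        have hYnn : (0:ℝ) ≤ Y := by rw [hY]; positivity
        nlinarith [abs_nonneg x.im]
      nlinarith [sq_nonneg x.re, mul_le_mul_of_nonneg_right hre hv0]
    rw [hnorm]
    calc 2 * ‖x + (v:ℂ)‖ * rexp ((-(x + (v:ℂ))^2).re)
        ≤ 2 * ((‖z₀‖ + 1) + v) * rexp (Y^2 + (-1*v^2 + (-2*m)*v)) := by
          gcongr
      _ = 2*rexp (Y^2) * ((‖z₀‖+1) * rexp (-1*v^2 + (-2*m)*v)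
          + v * rexp (-1*v^2 + (-2*m)*v)) := by
          rw [Real.exp_add]; ring
  have key := hasDerivAt_integral_of_dominated_loc_of_deriv_le
    (μ := volume.restrict (Ioi (0:ℝ)))
    (F := fun (x : ℂ) (v : ℝ) => Complex.exp (-(x + v)^2))
    (F' := fun (x : ℂ) (v : ℝ) => -2*(x + v)*Complex.exp (-(x + v)^2))
    (x₀ := z₀)
    (bound := fun v => 2*rexp (Y^2) * ((‖z₀‖+1) * rexp (-1*v^2 + (-2*m)*v)
      + v * rexp (-1*v^2 + (-2*m)*v)))
    (Metric.ball_mem_nhds z₀ one_pos)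
    (Eventually.of_forall fun x => Continuous.aestronglyMeasurable (by continuity))
    (by simpa [IntegrableOn] using integrableOn_pow_mul_cexp (c := 1) (by simp) z₀ 0)
    (Continuous.aestronglyMeasurable (by continuity))
    (h_bound := hb)
    (bound_integrable := by
      have := ((h0int.const_mul (‖z₀‖+1)).add h1int).const_mul (2*rexp (Y^2))
      exact this.congr (Eventually.of_forall fun v => by simp [mul_add]))
    (h_diff := by
      filter_upwards [ae_restrict_mem measurableSet_Ioi] with v _ x _
      exact hasDerivAt_cexp_sq (v:ℂ) x)
  -- conclusion
  have hFTC : (∫ v in Ioi (0:ℝ), -2*(z₀+(v:ℂ))*Complex.exp (-(z₀+(v:ℂ))^2))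
      = 0 - Complex.exp (-(z₀+(((0:ℝ)):ℂ))^2) := by
    refine integral_Ioi_of_hasDerivAt_of_tendsto'
      (fun v _ => (hasDerivAt_cexp_sq' z₀ (v:ℂ)).comp_ofReal) key.1 ?_
    have := tendsto_cexp_ray (a := z₀) (c := 1) (by norm_num)
    simpa using this
  have hkey := key.2
  rw [hFTC] at hkey
  have h4 : (0:ℂ) - Complex.exp (-(z₀+(((0:ℝ)):ℂ))^2) = -Complex.exp (-z₀^2) := by
    simp
  rw [h4] at hkey
  exact hkey

lemma cexp_rotation {c : ℂ} (hcre : 0 < c.re) (hc2 : 0 < (c^2).re) (a : ℂ) :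
    ∫ u in Ioi (0:ℝ), Complex.exp (-(a + c*u)^2) = c⁻¹ * Gi a := by
  have hc0 : c ≠ 0 := fun h => by simp [h] at hcre
  have hG : ∀ t : ℝ, HasDerivAt (fun t : ℝ => -c⁻¹ * Gi (a + c*t))
      (Complex.exp (-(a + c*t)^2)) t := by
    intro t
    have h1 : HasDerivAt (fun w : ℂ => a + c*w) c (t:ℂ) := by
      simpa using ((hasDerivAt_id ((t:ℝ):ℂ)).const_mul c).const_add a
    have h2 : HasDerivAt (fun w : ℂ => Gi (a + c*w))
        (-Complex.exp (-(a + c*t)^2) * c) (t:ℂ) :=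
      by exact (Gi_hasDerivAt (a + c*(t:ℂ))).comp ((t:ℝ):ℂ) h1
    have h3 := (h2.comp_ofReal).const_mul (-c⁻¹)
    refine h3.congr_deriv ?_
    rw [neg_mul, neg_mul, mul_neg, neg_neg, mul_left_comm, inv_mul_cancel₀ hc0, mul_one]
  have hint : IntegrableOn (fun u : ℝ => Complex.exp (-(a + c*u)^2)) (Ioi 0) := by
    simpa using integrableOn_pow_mul_cexp hc2 a 0
  have htend : Tendsto (fun t : ℝ => -c⁻¹ * Gi (a + c*t)) atTop (𝓝 0) := by
    have := (tendsto_Gi_ray hcre hc2 (a := a)).const_mul (-c⁻¹)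
    simpa using this
  have := integral_Ioi_of_hasDerivAt_of_tendsto' (fun t _ => hG t) hint htend
  rw [this]
  simp

lemma hasDerivAt_cexp_negsq (z : ℂ) :
    HasDerivAt (fun w : ℂ => Complex.exp (-w^2)) (-2*z*Complex.exp (-z^2)) z := by
  simpa using hasDerivAt_cexp_sq 0 z


/-- The complementary error function on `ℂ`:
`erfc z = (2/√π) ∫₀^∞ e^{−(z+u)²} du`. -/
noncomputable def erfc (z : ℂ) : ℂ :=
  (2 / Real.sqrt Real.pi) * ∫ u in Set.Ioi (0 : ℝ), Complex.exp (-(z + (u : ℂ)) ^ 2)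

/-- For `Re s > 0` and `K ≥ 0`,
`∫₀^∞ (√y − K)⁺ e^{−sy} dy = (√π / (2 s^{3/2})) · erfc(K √s)`. -/
theorem stmt0 (s : ℂ) (hs : 0 < s.re) (K : ℝ) (hK : 0 ≤ K) :
    ∫ y in Set.Ioi (0 : ℝ),
        ((max (Real.sqrt y - K) 0 : ℝ) : ℂ) * Complex.exp (-s * (y : ℂ))
      = ((Real.sqrt Real.pi : ℂ) / (2 * s ^ ((3 : ℂ) / 2))) *
        erfc ((K : ℂ) * s ^ ((1 : ℂ) / 2)) := by
  have hs0 : s ≠ 0 := fun h => by simp [h] at hs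
  set c : ℂ := s ^ ((1:ℂ)/2) with hcdef
  have hc2 : c^2 = s := by
    rw [hcdef, sq, ← Complex.cpow_add _ _ hs0]
    norm_num
  have hcre : 0 < c.re := by
    rw [hcdef, Complex.cpow_def_of_ne_zero hs0, Complex.exp_re]
    apply mul_pos (Real.exp_pos _)
    apply Real.cos_pos_of_mem_Ioo
    have harg : |s.arg| < π/2 := Complex.abs_arg_lt_pi_div_two_iff.2 (Or.inl hs)
    have harg' := abs_lt.1 harg
    have h12 : ((1:ℂ)/2) = (((1/2:ℝ)):ℂ) := by norm_num
    have him : (Complex.log s * ((1:ℂ)/2)).im = s.arg * (1/2) := by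
      rw [h12, Complex.mul_im]
      simp [Complex.ofReal_re, Complex.ofReal_im, Complex.log_im]
    rw [him]
    constructor
    · nlinarith [Real.pi_pos, harg'.1]
    · nlinarith [Real.pi_pos, harg'.2]
  have hc0 : c ≠ 0 := fun h => by simp [h] at hcre
  have hc2re : 0 < (c^2).re := by rw [hc2]; exact hs
  set a : ℂ := (K:ℂ) * c with hadef
  -- Step A : restrict to Ioi (K^2)
  have hAeq : EqOn (fun y : ℝ => ((max (Real.sqrt y - K) 0 : ℝ) : ℂ) * Complex.exp (-s * (y:ℂ)))
      (fun y : ℝ => (Ioi (K^2)).indicator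
        (fun y : ℝ => ((Real.sqrt y - K : ℝ):ℂ) * Complex.exp (-s * (y:ℂ))) y) (Ioi 0) := by
    intro y _
    show ((max (Real.sqrt y - K) 0 : ℝ) : ℂ) * Complex.exp (-s * (y:ℂ))
      = (Ioi (K^2)).indicator (fun y : ℝ => ((Real.sqrt y - K : ℝ):ℂ)
          * Complex.exp (-s * (y:ℂ))) y
    rcases le_or_gt y (K^2) with h | h
    · rw [indicator_of_notMem (by simpa using h)]
      have h1 : Real.sqrt y ≤ K := by
        rw [show K = Real.sqrt (K^2) by rw [Real.sqrt_sq hK]]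
        exact Real.sqrt_le_sqrt h
      have hmax : max (Real.sqrt y - K) 0 = 0 := max_eq_right (by linarith)
      simp [hmax]
    · rw [indicator_of_mem (by simpa using h)]
      have h1 : K < Real.sqrt y := by
        rw [show K = Real.sqrt (K^2) by rw [Real.sqrt_sq hK]]
        exact Real.sqrt_lt_sqrt (sq_nonneg K) h
      rw [max_eq_left (by linarith)]
  rw [setIntegral_congr_fun measurableSet_Ioi hAeq, setIntegral_indicator measurableSet_Ioi,
    show Ioi (0:ℝ) ∩ Ioi (K^2) = Ioi (K^2) by rw [Ioi_inter_Ioi]; congr 1; simp [sq_nonneg K]]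
  -- Step B : substitution y = (K+u)^2
  have himg : (fun u : ℝ => (K+u)^2) '' (Ioi 0) = Ioi (K^2) := by
    ext y; constructor
    · rintro ⟨u, hu, rfl⟩
      have hu0 : (0:ℝ) < u := hu
      simp only [mem_Ioi]
      nlinarith
    · intro hy
      have hy' : K^2 < y := hy
      have hy0 : (0:ℝ) ≤ y := le_trans (sq_nonneg K) hy'.le
      refine ⟨Real.sqrt y - K, ?_, ?_⟩
      · simp only [mem_Ioi, sub_pos]
        rw [show K = Real.sqrt (K^2) by rw [Real.sqrt_sq hK]]
        exact Real.sqrt_lt_sqrt (sq_nonneg K) hy'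
      · show (K + (Real.sqrt y - K))^2 = y
        rw [show K + (Real.sqrt y - K) = Real.sqrt y by ring, Real.sq_sqrt hy0]
  have hderiv : ∀ u ∈ Ioi (0:ℝ), HasDerivWithinAt (fun u : ℝ => (K+u)^2) (2*(K+u)) (Ioi 0) u := by
    intro u _
    have := ((hasDerivAt_id u).const_add K).fun_pow 2
    simpa using this.hasDerivWithinAt
  have hinj : InjOn (fun u : ℝ => (K+u)^2) (Ioi 0) := by
    intro x hx y hy hxy
    simp only at hxy
    have hx0 : (0:ℝ) < x := hx
    have hy0 : (0:ℝ) < y := hy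
    have h2 : (x - y) * (2*K + x + y) = 0 := by linear_combination hxy
    rcases mul_eq_zero.1 h2 with h | h
    · linarith
    · linarith
  rw [← himg, integral_image_eq_integral_abs_deriv_smul measurableSet_Ioi hderiv hinj]
  -- Step B' : simplify integrand
  have hBeq : EqOn (fun u : ℝ => |2*(K+u)| •
        ((fun y : ℝ => ((Real.sqrt y - K : ℝ):ℂ) * Complex.exp (-s * (y:ℂ))) ((K+u)^2)))
      (fun u : ℝ => (2*(K:ℂ)*u + 2*(u:ℂ)^2) * Complex.exp (-(a + c*u)^2)) (Ioi 0) := by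
    intro u hu
    have hu0 : (0:ℝ) < u := hu
    have h1 : Real.sqrt ((K+u)^2) = K + u := Real.sqrt_sq (by linarith)
    have h2 : -(a + c*(u:ℂ))^2 = -s * ((((K+u)^2 : ℝ)):ℂ) := by
      rw [hadef, ← hc2]; push_cast; ring
    simp only [h1, Complex.real_smul, ← h2, _root_.abs_of_nonneg (by linarith : (0:ℝ) ≤ 2*(K+u))]
    push_cast
    ring
  rw [setIntegral_congr_fun measurableSet_Ioi hBeq]
  -- Step C : integration by parts
  have hW1 : IntegrableOn (fun u : ℝ => (u:ℂ) * Complex.exp (-(a + c*u)^2)) (Ioi 0) := by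
    simpa using integrableOn_pow_mul_cexp hc2re a 1
  have hW2 : IntegrableOn (fun u : ℝ => (u:ℂ)^2 * Complex.exp (-(a + c*u)^2)) (Ioi 0) :=
    integrableOn_pow_mul_cexp hc2re a 2
  have hE : IntegrableOn (fun u : ℝ => Complex.exp (-(a + c*u)^2)) (Ioi 0) := by
    simpa using integrableOn_pow_mul_cexp hc2re a 0
  have hψ : IntegrableOn (fun u : ℝ => (2*(K:ℂ)*u + 2*(u:ℂ)^2) * Complex.exp (-(a + c*u)^2))
      (Ioi 0) := by
    have h := (hW1.const_mul (2*(K:ℂ))).add (hW2.const_mul 2)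
    exact h.congr (Eventually.of_forall fun u => by simp only [Pi.add_apply]; ring)
  set φ : ℝ → ℂ := fun u => -s⁻¹ * ((u:ℂ) * Complex.exp (-(a + c*u)^2)) with hφdef
  have hφd : ∀ u : ℝ, HasDerivAt φ ((2*(K:ℂ)*u + 2*(u:ℂ)^2) * Complex.exp (-(a + c*u)^2)
      - s⁻¹ * Complex.exp (-(a + c*u)^2)) u := by
    intro u
    have h1 : HasDerivAt (fun u : ℝ => ((u:ℂ))) 1 u := (hasDerivAt_id u).ofReal_comp
    have hi : HasDerivAt (fun w : ℂ => a + c*w) c ((u:ℝ):ℂ) := by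
      simpa using ((hasDerivAt_id ((u:ℝ):ℂ)).const_mul c).const_add a
    have h3 := ((hasDerivAt_cexp_negsq (a + c*(u:ℝ):ℂ)).comp ((u:ℝ):ℂ) hi).comp_ofReal
    have h4 := (h1.mul h3).const_mul (-s⁻¹)
    refine h4.congr_deriv ?_
    simp only [Function.comp_apply]
    rw [hadef, ← hc2]
    field_simp
    ring
  have hφ0 : Tendsto φ atTop (𝓝 0) := by
    have hg : Tendsto (fun u : ℝ =>
        ‖s⁻¹‖ * rexp (-((c^2).re*u^2 + (2*(a*c).re - 1)*u + (a^2).re))) atTop (𝓝 0) := by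
      have := (expNegQuadTendsto hc2re (2*(a*c).re - 1) ((a^2).re)).const_mul ‖s⁻¹‖
      simpa using this
    refine squeeze_zero_norm' ?_ hg
    filter_upwards [eventually_ge_atTop 1] with u hu
    have hu0 : (0:ℝ) ≤ u := by linarith
    have hle : u ≤ rexp u := by linarith [Real.add_one_le_exp u]
    have hn : ‖φ u‖ = ‖s⁻¹‖ * (u * rexp ((-(a + c*u)^2).re)) := by
      rw [hφdef]
      simp only [norm_mul, norm_neg, Complex.norm_real, Real.norm_eq_abs,
        Complex.norm_exp, _root_.abs_of_nonneg hu0]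
    rw [hn]
    calc ‖s⁻¹‖ * (u * rexp ((-(a + c*u)^2).re))
        ≤ ‖s⁻¹‖ * (rexp u * rexp ((-(a + c*u)^2).re)) := by gcongr
      _ = ‖s⁻¹‖ * rexp (u + (-(a + c*(u:ℝ):ℂ)^2).re) := by rw [← Real.exp_add]
      _ ≤ ‖s⁻¹‖ * rexp (-((c^2).re*u^2 + (2*(a*c).re - 1)*u + (a^2).re)) := by
          refine le_of_eq ?_
          congr 1
          rw [re_neg_sq]
          ring
  have hmain : (∫ u in Ioi (0:ℝ), (2*(K:ℂ)*u + 2*(u:ℂ)^2) * Complex.exp (-(a + c*u)^2))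
      = s⁻¹ * ∫ u in Ioi (0:ℝ), Complex.exp (-(a + c*u)^2) := by
    have h1 := integral_Ioi_of_hasDerivAt_of_tendsto' (fun u _ => hφd u)
      (hψ.sub (hE.const_mul s⁻¹)) hφ0
    have h0 : φ 0 = 0 := by simp [hφdef]
    rw [h0, sub_zero] at h1
    rw [integral_sub hψ (hE.const_mul s⁻¹), integral_const_mul, sub_eq_zero] at h1
    exact h1
  rw [hmain, cexp_rotation hcre hc2re a]
  have herfc : erfc a = (2/((Real.sqrt Real.pi : ℝ):ℂ)) * Gi a := rfl
  have h32 : s ^ ((3:ℂ)/2) = s * c := by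
    rw [show ((3:ℂ)/2) = 1 + (1:ℂ)/2 by norm_num, Complex.cpow_add _ _ hs0, Complex.cpow_one,
      ← hcdef]
  rw [h32, herfc]
  have hπ : ((Real.sqrt Real.pi : ℝ):ℂ) ≠ 0 :=
    Complex.ofReal_ne_zero.2 (ne_of_gt (Real.sqrt_pos.2 Real.pi_pos))
  field_simp
end

section
/- Let μ be a probability measure on [0,∞) and α > 0 with ∫₀^∞ e^{αx} dμ(x) < ∞, and define φ(ζ) := ∫₀^∞ e^{iζx} dμ(x) for ζ ∈ ℂ with Im(ζ) ≥ −α. Assume sup_{v∈ℝ} |φ(v−iα)| < ∞. Let B_V > 0, C_V ≥ 0, K ≥ √C_V, s > 0, ε > 0, let γ be the Gaussian measure N(0, ε²s) on ℝ, and set A(u) := (√|B_V u + C_V| − K)·1_{u > (K²−C_V)/B_V} for u ∈ ℝ. Then ∫₀^∞ ∫_ℝ A(x+y) dγ(y) dμ(x) = (1/2π) ∫_ℝ ĝ(v,α;K) · φ(−v−iα) · exp(−ε²(−v−iα)²s/2) dv. -/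
open MeasureTheory Real Complex Set
open scoped NNReal ENNReal

/-- Fourier transform of the VIX call payoff:
`ĝ(v,α;K) = ∫₀^∞ (√(B x + C) − K)⁺ e^{(iv−α)x} dx`. -/
noncomputable def ghat (B C K : ℝ) (v α : ℝ) : ℂ :=
  ∫ x in Set.Ioi (0 : ℝ),
    ((max (Real.sqrt (B * x + C) - K) 0 : ℝ) : ℂ) *
      Complex.exp ((Complex.I * v - α) * (x : ℂ))

/-- Extended characteristic function `φ(ζ) = ∫₀^∞ e^{iζx} dμ(x)`. -/
noncomputable def charFn (μ : MeasureTheory.Measure ℝ) (ζ : ℂ) : ℂ :=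
  ∫ x, Complex.exp (Complex.I * ζ * (x : ℂ)) ∂μ

/-- Extended VIX call payoff on `ℝ`: `A(u) = (√|B u + C| − K)·1_{u > (K²−C)/B}`. -/
noncomputable def payoffExt (B C K : ℝ) (u : ℝ) : ℝ :=
  if (K ^ 2 - C) / B < u then Real.sqrt |B * u + C| - K else 0

/-- Gaussian-smoothed approximate pricing formula (Proposition 3.6). -/
theorem stmt3 (μ : MeasureTheory.Measure ℝ) [IsProbabilityMeasure μ]
    (hsupp : μ (Set.Iio 0) = 0)
    (α : ℝ) (hα : 0 < α)
    (hexp : MeasureTheory.Integrable (fun x : ℝ => Real.exp (α * x)) μ)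
    (hbdd : ∃ M : ℝ, ∀ v : ℝ, ‖charFn μ ((v : ℂ) - Complex.I * α)‖ ≤ M)
    (B C K : ℝ) (hB : 0 < B) (hC : 0 ≤ C) (hK : Real.sqrt C ≤ K)
    (s ε : ℝ) (hs : 0 < s) (hε : 0 < ε) :
    ∫ x, ((∫ y, payoffExt B C K (x + y)
            ∂(ProbabilityTheory.gaussianReal 0 (ε ^ 2 * s).toNNReal) : ℝ) : ℂ) ∂μ
      = (1 / (2 * Real.pi)) *
        ∫ v : ℝ, ghat B C K v α * charFn μ (-(v : ℂ) - Complex.I * α) *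
          Complex.exp (-(ε : ℂ) ^ 2 * (-(v : ℂ) - Complex.I * α) ^ 2 * s / 2) := by
  -- basic notation
  set σ : ℝ := ε ^ 2 * s with hσdef
  have hσ : 0 < σ := by positivity
  have hσn : (ε ^ 2 * s).toNNReal ≠ 0 := by
    simp only [ne_eq, Real.toNNReal_eq_zero, not_le]
    positivity
  have hσc : (((ε ^ 2 * s).toNNReal) : ℝ) = σ := Real.coe_toNNReal _ hσ.le
  set g : ℝ → ℝ := fun t => max (Real.sqrt (B * t + C) - K) 0 with hgdef
  set ρ : ℝ → ℝ := fun u => ProbabilityTheory.gaussianPDFReal 0 (ε ^ 2 * s).toNNReal u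
    with hρdef
  have hρ_eq : ∀ u : ℝ, ρ u = (Real.sqrt (2 * π * σ))⁻¹ * rexp (-u ^ 2 / (2 * σ)) := by
    intro u
    simp only [hρdef, ProbabilityTheory.gaussianPDFReal, hσc, sub_zero]
  have hρnn : ∀ u : ℝ, 0 ≤ ρ u := fun u =>
    ProbabilityTheory.gaussianPDFReal_nonneg 0 _ u
  have hgnn : ∀ t : ℝ, 0 ≤ g t := fun t => le_max_right _ _
  have hgcont : Continuous g :=
    ((Real.continuous_sqrt.comp ((continuous_const.mul continuous_id).add continuous_const)).sub continuous_const).max continuous_const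
  have hK0 : 0 ≤ K := le_trans (Real.sqrt_nonneg C) hK
  have hCK : C ≤ K ^ 2 := by nlinarith [Real.sq_sqrt hC, Real.sqrt_nonneg C]
  have ht0 : 0 ≤ (K ^ 2 - C) / B := div_nonneg (by linarith) hB.le
  -- payoff identities
  have hpay_pos : ∀ t : ℝ, 0 < t → payoffExt B C K t = g t := by
    intro t ht
    unfold payoffExt
    by_cases h : (K ^ 2 - C) / B < t
    · have hBt : K ^ 2 < B * t + C := by
        rw [div_lt_iff₀ hB] at h; linarith
      have h1 : 0 ≤ B * t + C := by nlinarith [sq_nonneg K]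
      have h2 : K ≤ Real.sqrt (B * t + C) := by
        calc K = Real.sqrt (K ^ 2) := (Real.sqrt_sq hK0).symm
        _ ≤ _ := Real.sqrt_le_sqrt hBt.le
      rw [if_pos h, _root_.abs_of_nonneg h1]
      simp only [hgdef]
      exact (max_eq_left (by linarith)).symm
    · rw [if_neg h]
      push_neg at h
      have hb : B * t + C ≤ K ^ 2 := by
        rw [le_div_iff₀ hB] at h; linarith
      have h2 : Real.sqrt (B * t + C) ≤ K := by
        calc Real.sqrt (B * t + C) ≤ Real.sqrt (K ^ 2) := Real.sqrt_le_sqrt hb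
        _ = K := Real.sqrt_sq hK0
      simp only [hgdef]
      exact (max_eq_right (by linarith)).symm
  have hpay_zero : ∀ t : ℝ, t ≤ 0 → payoffExt B C K t = 0 := by
    intro t ht
    exact if_neg (not_lt.mpr (le_trans ht ht0))
  -- integrability of g t e^{-αt}
  have Hg : IntegrableOn (fun t : ℝ => g t * rexp (-α * t)) (Ioi 0) := by
    have h1 : IntegrableOn (fun t : ℝ => t * rexp (-α * t)) (Ioi 0) := by
      simpa using integrableOn_rpow_mul_exp_neg_mul_rpow (p := 1) (s := 1)
        (by norm_num) (by norm_num) hα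
    have h2 := exp_neg_integrableOn_Ioi 0 hα
    have hbound : IntegrableOn (fun t : ℝ => (B * t + (C + 1)) * rexp (-α * t)) (Ioi 0) :=
      IntegrableOn.congr_fun ((h1.const_mul B).add (h2.const_mul (C + 1)))
        (fun t _ => by simp only [Pi.add_apply]; ring) measurableSet_Ioi
    refine hbound.mono' ((hgcont.mul (Real.continuous_exp.comp (continuous_const.mul continuous_id))).aestronglyMeasurable) ?_
    filter_upwards [ae_restrict_mem measurableSet_Ioi] with t ht
    have ht' : (0:ℝ) < t := ht
    have h3 : 0 ≤ B * t + C := by positivity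
    have h4 : Real.sqrt (B * t + C) ≤ B * t + C + 1 := by
      nlinarith [Real.sq_sqrt h3, Real.sqrt_nonneg (B * t + C), sq_nonneg (Real.sqrt (B * t + C) - 1)]
    have h5 : g t ≤ B * t + (C + 1) := by
      refine max_le (by linarith) (by positivity)
    rw [Real.norm_eq_abs, _root_.abs_of_nonneg (mul_nonneg (hgnn t) (Real.exp_nonneg _))]
    exact mul_le_mul_of_nonneg_right h5 (Real.exp_nonneg _)
  -- Step 1: the Gaussian smoothing as a convolution integral
  have step1 : ∀ x : ℝ,
      (∫ y, payoffExt B C K (x + y) ∂(ProbabilityTheory.gaussianReal 0 (ε ^ 2 * s).toNNReal))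
        = ∫ t in Ioi (0:ℝ), g t * ρ (t - x) := by
    intro x
    rw [ProbabilityTheory.gaussianReal_of_var_ne_zero 0 hσn]
    have hwd : volume.withDensity (ProbabilityTheory.gaussianPDF 0 (ε ^ 2 * s).toNNReal)
        = volume.withDensity (fun y => ((Real.toNNReal (ρ y) : ℝ≥0) : ℝ≥0∞)) := rfl
    have hmeas : Measurable (fun y => Real.toNNReal (ρ y)) :=
      (ProbabilityTheory.measurable_gaussianPDFReal 0 _).real_toNNReal
    rw [hwd, integral_withDensity_eq_integral_smul hmeas]
    have hsmul : ∀ y : ℝ, (Real.toNNReal (ρ y) : ℝ≥0) • payoffExt B C K (x + y)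
        = payoffExt B C K (x + y) * ρ y := by
      intro y
      rw [NNReal.smul_def, Real.coe_toNNReal _ (hρnn y), smul_eq_mul, mul_comm]
    simp_rw [hsmul]
    have hshift := integral_add_right_eq_self (μ := volume)
      (fun t : ℝ => payoffExt B C K t * ρ (t - x)) x
    have hshift' : (∫ y : ℝ, payoffExt B C K (x + y) * ρ y)
        = ∫ t : ℝ, payoffExt B C K t * ρ (t - x) := by
      rw [← hshift]
      congr 1
      ext y
      rw [add_comm x y, add_sub_cancel_right]
    rw [hshift',
      ← setIntegral_eq_integral_of_forall_compl_eq_zero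
        (s := Ioi (0:ℝ)) (fun t ht => by
          rw [hpay_zero t (by simpa using ht), zero_mul])]
    exact setIntegral_congr_fun measurableSet_Ioi (fun t ht => by rw [hpay_pos t ht])
  -- Key: the Gaussian Fourier integral
  have keyV : ∀ t x : ℝ,
      (∫ v : ℝ, cexp ((I * v - α) * t) * cexp (I * (-(v:ℂ) - I * α) * x) *
          cexp (-(ε:ℂ) ^ 2 * (-(v:ℂ) - I * α) ^ 2 * s / 2))
        = ((2 * π : ℝ) : ℂ) * ((ρ (t - x) : ℝ) : ℂ) := by
    intro t x
    have hexpand : ∀ v : ℝ,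
        cexp ((I * v - α) * t) * cexp (I * (-(v:ℂ) - I * α) * x) *
          cexp (-(ε:ℂ) ^ 2 * (-(v:ℂ) - I * α) ^ 2 * s / 2)
        = cexp (((-(σ/2) : ℝ) : ℂ) * (v:ℂ) ^ 2 + (I * ((t - x - σ * α : ℝ) : ℂ)) * (v:ℂ) +
            ((σ * α ^ 2 / 2 - α * t + α * x : ℝ) : ℂ)) := by
      intro v
      rw [← Complex.exp_add, ← Complex.exp_add]
      congr 1
      push_cast [hσdef]
      linear_combination (-(α:ℂ) * x - (ε:ℂ)^2 * s * α^2 / 2) * Complex.I_sq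
    simp_rw [hexpand]
    rw [integral_cexp_quadratic (by rw [Complex.ofReal_re]; linarith) _ _]
    have h1 : (↑π / -(((-(σ/2) : ℝ)) : ℂ)) = ((2 * π / σ : ℝ) : ℂ) := by
      rw [show -(((-(σ/2) : ℝ)) : ℂ) = ((σ/2 : ℝ) : ℂ) by push_cast; ring,
        ← Complex.ofReal_div]
      norm_cast
      field_simp
    have h2 : ((2 * π / σ : ℝ) : ℂ) ^ (1/2 : ℂ)
        = ((Real.sqrt (2 * π / σ) : ℝ) : ℂ) := by
      rw [show ((1:ℂ)/2) = ((1/2 : ℝ) : ℂ) by norm_num,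
        ← Complex.ofReal_cpow (by positivity) (1/2 : ℝ), Real.sqrt_eq_rpow]
    have h3 : ((σ * α ^ 2 / 2 - α * t + α * x : ℝ) : ℂ) -
        (I * ((t - x - σ * α : ℝ) : ℂ)) ^ 2 / (4 * ((-(σ/2) : ℝ) : ℂ))
        = ((-(t - x) ^ 2 / (2 * σ) : ℝ) : ℂ) := by
      have hσc' : (σ : ℂ) ≠ 0 := by exact_mod_cast hσ.ne'
      rw [mul_pow, Complex.I_sq]
      push_cast
      field_simp
      ring
    rw [h1, h2, h3, ← Complex.ofReal_exp]
    have hsq : Real.sqrt (2 * π / σ) = 2 * π * (Real.sqrt (2 * π * σ))⁻¹ := by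
      have hpos : (0:ℝ) < Real.sqrt (2 * π * σ) :=
        Real.sqrt_pos.mpr (by positivity)
      rw [eq_comm, mul_inv_eq_iff_eq_mul₀ hpos.ne', ← Real.sqrt_mul (by positivity),
        show (2*π/σ) * (2*π*σ) = (2*π)^2 by field_simp,
        Real.sqrt_sq (by positivity)]
    rw [hρ_eq, hsq]
    push_cast
    ring
  -- norms of the exponential factors
  have hnormRI : ∀ a b : ℝ, ‖cexp (((a : ℝ) : ℂ) + ((b : ℝ) : ℂ) * I)‖ = rexp a := by
    intro a b
    rw [Complex.norm_exp]
    simp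
  have hn1 : ∀ v t : ℝ, ‖cexp ((I * v - α) * t)‖ = rexp (-α * t) := by
    intro v t
    rw [show (I * (v:ℂ) - α) * t = ((-α * t : ℝ) : ℂ) + ((v * t : ℝ) : ℂ) * I by
      push_cast; ring, hnormRI]
  have hn2 : ∀ v x : ℝ, ‖cexp (I * (-(v:ℂ) - I * α) * x)‖ = rexp (α * x) := by
    intro v x
    rw [show I * (-(v:ℂ) - I * α) * x = ((α * x : ℝ) : ℂ) + ((-v * x : ℝ) : ℂ) * I by
      push_cast; linear_combination (-(x:ℂ)*α) * Complex.I_sq, hnormRI]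
  have hn3 : ∀ v : ℝ, ‖cexp (-(ε:ℂ) ^ 2 * (-(v:ℂ) - I * α) ^ 2 * s / 2)‖
      = rexp (σ * α ^ 2 / 2 - σ / 2 * v ^ 2) := by
    intro v
    rw [show -(ε:ℂ) ^ 2 * (-(v:ℂ) - I * α) ^ 2 * s / 2
        = ((σ * α ^ 2 / 2 - σ / 2 * v ^ 2 : ℝ) : ℂ) + ((-σ * α * v : ℝ) : ℂ) * I by
      push_cast [hσdef]; linear_combination (-(ε:ℂ)^2 * s * α^2 / 2) * Complex.I_sq,
      hnormRI]
  -- ghat facts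
  have ghat_eq : ∀ v : ℝ, ghat B C K v α
      = ∫ t in Ioi (0:ℝ), ((g t : ℝ) : ℂ) * cexp ((I * v - α) * t) := fun v => rfl
  set Cg : ℝ := ∫ t in Ioi (0:ℝ), g t * rexp (-α * t) with hCgdef
  have hghat_bound : ∀ v : ℝ, ‖ghat B C K v α‖ ≤ Cg := by
    intro v
    rw [ghat_eq]
    refine (norm_integral_le_integral_norm _).trans_eq ?_
    refine setIntegral_congr_fun measurableSet_Ioi (fun t ht => ?_)
    rw [norm_mul, hn1, Complex.norm_real, Real.norm_eq_abs, _root_.abs_of_nonneg (hgnn t)]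
  have hghat_cont : Continuous (fun v : ℝ => ghat B C K v α) := by
    rw [funext ghat_eq]
    refine continuous_of_dominated (bound := fun t => g t * rexp (-α * t)) ?_ ?_ Hg ?_
    · intro v
      exact ((Complex.continuous_ofReal.comp hgcont).mul
        (Complex.continuous_exp.comp
          (continuous_const.mul Complex.continuous_ofReal))).aestronglyMeasurable
    · intro v
      refine ae_of_all _ (fun t => le_of_eq ?_)
      rw [norm_mul, hn1, Complex.norm_real, Real.norm_eq_abs, _root_.abs_of_nonneg (hgnn t)]
    · refine ae_of_all _ (fun t => ?_)
      exact continuous_const.mul (Complex.continuous_exp.comp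
        (((continuous_const.mul Complex.continuous_ofReal).sub continuous_const).mul
          continuous_const))
  -- integrable Gaussian bound in v
  have hE_int : Integrable (fun v : ℝ => rexp (σ * α ^ 2 / 2 - σ / 2 * v ^ 2)) := by
    have h := (integrable_exp_neg_mul_sq (show (0:ℝ) < σ/2 by positivity)).const_mul
      (rexp (σ * α ^ 2 / 2))
    refine h.congr (ae_of_all _ (fun v => ?_))
    show rexp (σ * α ^ 2 / 2) * rexp (-(σ/2) * v ^ 2) = rexp (σ * α ^ 2 / 2 - σ / 2 * v ^ 2)
    rw [← Real.exp_add]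
    congr 1
    ring
  have hE_cont : Continuous (fun v : ℝ =>
      cexp (-(ε:ℂ) ^ 2 * (-(v:ℂ) - I * α) ^ 2 * s / 2)) :=
    Complex.continuous_exp.comp (((continuous_const.mul
      ((Complex.continuous_ofReal.neg.sub continuous_const).pow 2)).mul
        continuous_const).div_const 2)
  -- keyX : the v-t Fubini for fixed x
  have keyX : ∀ x : ℝ,
      (∫ v : ℝ, ghat B C K v α * cexp (I * (-(v:ℂ) - I * α) * x) *
          cexp (-(ε:ℂ) ^ 2 * (-(v:ℂ) - I * α) ^ 2 * s / 2))
        = ((2 * π : ℝ) : ℂ) * ((∫ t in Ioi (0:ℝ), g t * ρ (t - x) : ℝ) : ℂ) := by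
    intro x
    have hexp1 : ∀ v : ℝ, ghat B C K v α * cexp (I * (-(v:ℂ) - I * α) * x) *
          cexp (-(ε:ℂ) ^ 2 * (-(v:ℂ) - I * α) ^ 2 * s / 2)
        = ∫ t in Ioi (0:ℝ), ((g t : ℝ) : ℂ) * cexp ((I * v - α) * t) *
            (cexp (I * (-(v:ℂ) - I * α) * x) *
              cexp (-(ε:ℂ) ^ 2 * (-(v:ℂ) - I * α) ^ 2 * s / 2)) := by
      intro v
      rw [ghat_eq, mul_assoc, ← integral_mul_const]
    have hFub : Integrable (Function.uncurry fun (v : ℝ) (t : ℝ) =>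
        ((g t : ℝ) : ℂ) * cexp ((I * v - α) * t) *
          (cexp (I * (-(v:ℂ) - I * α) * x) *
            cexp (-(ε:ℂ) ^ 2 * (-(v:ℂ) - I * α) ^ 2 * s / 2)))
        (volume.prod (volume.restrict (Ioi 0))) := by
      have hbint : Integrable (fun p : ℝ × ℝ =>
          (rexp (α * x) * rexp (σ * α ^ 2 / 2 - σ / 2 * p.1 ^ 2)) * (g p.2 * rexp (-α * p.2)))
          (volume.prod (volume.restrict (Ioi 0))) :=
        (hE_int.const_mul (rexp (α * x))).mul_prod Hg
      refine hbint.mono' ?_ (ae_of_all _ (fun p => ?_))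
      · refine Continuous.aestronglyMeasurable ?_
        have c1 : Continuous fun p : ℝ × ℝ => ((g p.2 : ℝ) : ℂ) :=
          Complex.continuous_ofReal.comp (hgcont.comp continuous_snd)
        have c2 : Continuous fun p : ℝ × ℝ => cexp ((I * p.1 - α) * p.2) :=
          Complex.continuous_exp.comp
            (((continuous_const.mul (Complex.continuous_ofReal.comp continuous_fst)).sub
              continuous_const).mul (Complex.continuous_ofReal.comp continuous_snd))
        have c3 : Continuous fun p : ℝ × ℝ => cexp (I * (-(p.1:ℂ) - I * α) * x) :=
          Complex.continuous_exp.comp ((continuous_const.mul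
            (((Complex.continuous_ofReal.comp continuous_fst).neg).sub
              continuous_const)).mul continuous_const)
        have c4 : Continuous fun p : ℝ × ℝ =>
            cexp (-(ε:ℂ) ^ 2 * (-(p.1:ℂ) - I * α) ^ 2 * s / 2) :=
          hE_cont.comp continuous_fst
        exact (c1.mul c2).mul (c3.mul c4)
      · obtain ⟨v, t⟩ := p
        rw [Function.uncurry_apply_pair, norm_mul, norm_mul, norm_mul, hn1, hn2, hn3,
          Complex.norm_real, Real.norm_eq_abs, _root_.abs_of_nonneg (hgnn _)]
        exact le_of_eq (by ring)
    rw [integral_congr_ae (ae_of_all _ hexp1), integral_integral_swap hFub]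
    have hinner : ∀ t : ℝ, (∫ v : ℝ, ((g t : ℝ) : ℂ) * cexp ((I * v - α) * t) *
          (cexp (I * (-(v:ℂ) - I * α) * x) *
            cexp (-(ε:ℂ) ^ 2 * (-(v:ℂ) - I * α) ^ 2 * s / 2)))
        = ((2 * π : ℝ) : ℂ) * ((g t * ρ (t - x) : ℝ) : ℂ) := by
      intro t
      have : (fun v : ℝ => ((g t : ℝ) : ℂ) * cexp ((I * v - α) * t) *
            (cexp (I * (-(v:ℂ) - I * α) * x) *
              cexp (-(ε:ℂ) ^ 2 * (-(v:ℂ) - I * α) ^ 2 * s / 2)))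
          = fun v : ℝ => ((g t : ℝ) : ℂ) * (cexp ((I * v - α) * t) *
              cexp (I * (-(v:ℂ) - I * α) * x) *
                cexp (-(ε:ℂ) ^ 2 * (-(v:ℂ) - I * α) ^ 2 * s / 2)) := by
        funext v; ring
      rw [this, integral_const_mul, keyV t x]
      push_cast
      ring
    rw [integral_congr_ae (ae_of_all _ hinner), integral_const_mul]
    congr 1
    exact integral_ofReal (𝕜 := ℂ)
  -- Fubini in (v, x) over volume × μ
  have hΦint : Integrable (Function.uncurry fun (v : ℝ) (x : ℝ) =>
      ghat B C K v α * cexp (I * (-(v:ℂ) - I * α) * x) *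
        cexp (-(ε:ℂ) ^ 2 * (-(v:ℂ) - I * α) ^ 2 * s / 2)) (volume.prod μ) := by
    have hbint : Integrable (fun p : ℝ × ℝ =>
        (Cg * rexp (σ * α ^ 2 / 2 - σ / 2 * p.1 ^ 2)) * rexp (α * p.2)) (volume.prod μ) :=
      (hE_int.const_mul Cg).mul_prod hexp
    refine hbint.mono' ?_ (ae_of_all _ (fun p => ?_))
    · refine Continuous.aestronglyMeasurable ?_
      have c1 : Continuous fun p : ℝ × ℝ => ghat B C K p.1 α := hghat_cont.comp continuous_fst
      have c2 : Continuous fun p : ℝ × ℝ => cexp (I * (-(p.1:ℂ) - I * α) * p.2) :=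
        Complex.continuous_exp.comp ((continuous_const.mul
          (((Complex.continuous_ofReal.comp continuous_fst).neg).sub continuous_const)).mul
            (Complex.continuous_ofReal.comp continuous_snd))
      have c3 : Continuous fun p : ℝ × ℝ =>
          cexp (-(ε:ℂ) ^ 2 * (-(p.1:ℂ) - I * α) ^ 2 * s / 2) := hE_cont.comp continuous_fst
      exact (c1.mul c2).mul c3
    · obtain ⟨v, x⟩ := p
      rw [Function.uncurry_apply_pair, norm_mul, norm_mul, hn2, hn3]
      calc ‖ghat B C K v α‖ * rexp (α * x) * rexp (σ * α ^ 2 / 2 - σ / 2 * v ^ 2)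
          ≤ Cg * rexp (α * x) * rexp (σ * α ^ 2 / 2 - σ / 2 * v ^ 2) := by
            have h := hghat_bound v
            gcongr
        _ = Cg * rexp (σ * α ^ 2 / 2 - σ / 2 * v ^ 2) * rexp (α * x) := by ring
  -- pull the characteristic function integral out
  have hchar : ∀ v : ℝ, ghat B C K v α * charFn μ (-(v:ℂ) - I * α) *
        cexp (-(ε:ℂ) ^ 2 * (-(v:ℂ) - I * α) ^ 2 * s / 2)
      = ∫ x, ghat B C K v α * cexp (I * (-(v:ℂ) - I * α) * x) *
          cexp (-(ε:ℂ) ^ 2 * (-(v:ℂ) - I * α) ^ 2 * s / 2) ∂μ := by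
    intro v
    rw [show charFn μ (-(v:ℂ) - I * α) = ∫ x, cexp (I * (-(v:ℂ) - I * α) * x) ∂μ from rfl]
    rw [show ghat B C K v α * (∫ x, cexp (I * (-(v:ℂ) - I * α) * x) ∂μ) *
          cexp (-(ε:ℂ) ^ 2 * (-(v:ℂ) - I * α) ^ 2 * s / 2)
        = (ghat B C K v α * cexp (-(ε:ℂ) ^ 2 * (-(v:ℂ) - I * α) ^ 2 * s / 2)) *
          ∫ x, cexp (I * (-(v:ℂ) - I * α) * x) ∂μ from by ring, ← integral_const_mul]
    exact integral_congr_ae (ae_of_all _ (fun x => by ring))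
  rw [integral_congr_ae (ae_of_all _ hchar), integral_integral_swap hΦint,
    integral_congr_ae (ae_of_all _ keyX), integral_const_mul, ← mul_assoc,
    show (1 / (2 * (π:ℂ))) * ((2 * π : ℝ):ℂ) = 1 from by
      have hπ : (π:ℂ) ≠ 0 := Complex.ofReal_ne_zero.mpr Real.pi_ne_zero
      push_cast
      field_simp, one_mul]
  simp only [← hσdef] at step1
  exact integral_congr_ae (ae_of_all _ (fun x => by beta_reduce; rw [step1 x]))
end

section
/- Let a, b, λ > 0 and z ∈ ℂ with Re(z) < b²/2. Then ∫₀^∞ (e^{zx} − 1) · (λa/(2√(2π))) x^{−3/2} (1 + b²x) e^{−b²x/2} dx = λ a z (b² − 2z)^{−1/2}, where the complex square root is the principal branch. -/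
open MeasureTheory Real Complex Set Filter

set_option linter.unusedVariables false

section Stmt6Aux
variable {b : ℝ} {z : ℂ}

lemma aux_gauss (s : ℂ) (hs : 0 < s.re) :
    ∫ x in Ioi (0:ℝ), ((x ^ (-(1:ℝ)/2) : ℝ) : ℂ) * Complex.exp (-s * x)
      = (↑π / s) ^ (1/2 : ℂ) := by
  have h2 : (2:ℝ) ≠ 0 := two_ne_zero
  rw [← MeasureTheory.integral_comp_rpow_Ioi
      (fun y : ℝ => ((y ^ (-(1:ℝ)/2) : ℝ) : ℂ) * Complex.exp (-s * y)) h2]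
  have step : ∫ x in Ioi (0:ℝ),
      (|(2:ℝ)| * x ^ ((2:ℝ) - 1)) •
        ((((x ^ (2:ℝ)) ^ (-(1:ℝ)/2) : ℝ) : ℂ) * Complex.exp (-s * ((x ^ (2:ℝ) : ℝ) : ℂ)))
      = ∫ x in Ioi (0:ℝ), (2:ℂ) * Complex.exp (-s * (x:ℂ)^2) := by
    refine setIntegral_congr_fun measurableSet_Ioi (fun x hx => ?_)
    have hx0 : (0:ℝ) < x := hx
    have e1 : x ^ ((2:ℝ) - 1) = x := by norm_num
    have e2 : x ^ (2:ℝ) = x ^ (2:ℕ) := by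
      rw [← Real.rpow_natCast x 2]; norm_num
    have e3 : (x ^ (2:ℝ)) ^ (-(1:ℝ)/2) = x⁻¹ := by
      rw [← Real.rpow_mul hx0.le]
      norm_num [Real.rpow_neg_one]
    have hxc : (x:ℂ) ≠ 0 := Complex.ofReal_ne_zero.mpr hx0.ne'
    rw [e1, e3, e2]
    simp only [Complex.real_smul]
    push_cast
    rw [abs_of_pos (by norm_num : (0:ℝ) < 2)]
    push_cast
    field_simp
  rw [step, MeasureTheory.integral_const_mul, integral_gaussian_complex_Ioi hs]
  ring

lemma aux_cpow (w : ℂ) (hw : 0 < w.re) :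
    (↑π / (w/2)) ^ (1/2:ℂ) = (Real.sqrt (2*π) : ℂ) * w ^ (-(1:ℂ)/2) := by
  have hw0 : w ≠ 0 := fun h => by simp [h] at hw
  have harg : w.arg ≠ π := by
    rw [Ne, Complex.arg_eq_pi_iff]
    rintro ⟨h1, -⟩; linarith
  have h2π : (0:ℝ) < 2*π := by positivity
  have hinv0 : w⁻¹ ≠ 0 := inv_ne_zero hw0
  have e1 : (↑π / (w/2)) = ((2*π:ℝ):ℂ) * w⁻¹ := by
    push_cast; field_simp
  rw [e1, Complex.cpow_def_of_ne_zero
      (mul_ne_zero (Complex.ofReal_ne_zero.mpr h2π.ne') hinv0),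
      Complex.log_ofReal_mul h2π hinv0, add_mul, Complex.exp_add]
  have t1 : Complex.exp ((Real.log (2*π) : ℂ) * (1/2)) = (Real.sqrt (2*π) : ℂ) := by
    rw [Real.sqrt_eq_rpow, Complex.ofReal_cpow h2π.le,
      Complex.cpow_def_of_ne_zero (Complex.ofReal_ne_zero.mpr h2π.ne'),
      ← Complex.ofReal_log h2π.le]
    norm_num
  have t2 : Complex.exp (Complex.log w⁻¹ * (1/2)) = w ^ (-(1:ℂ)/2) := by
    rw [← Complex.cpow_def_of_ne_zero hinv0, Complex.inv_cpow w _ harg, ← Complex.cpow_neg]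
    norm_num
  rw [t1, t2]

lemma aux_H_integrable (hb : 0 < b) (hz : z.re < b^2/2) :
    IntegrableOn (fun x : ℝ =>
      Complex.exp (z*x) * ((x ^ (-(1:ℝ)/2) * Real.exp (-b^2*x/2) : ℝ) : ℂ)) (Ioi 0) := by
  have hσ : 0 < b^2/2 - z.re := by linarith
  have hbound : IntegrableOn (fun x:ℝ => x ^ (-(1:ℝ)/2) * Real.exp (-(b^2/2 - z.re) * x))
      (Ioi 0) := by
    have := integrableOn_rpow_mul_exp_neg_mul_rpow (s := -(1:ℝ)/2) (p := 1)
      (by norm_num) one_pos hσ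
    simpa [Real.rpow_one] using this
  refine hbound.mono' ?_ ?_
  · apply Measurable.aestronglyMeasurable
    fun_prop
  · filter_upwards [ae_restrict_mem measurableSet_Ioi] with x hx
    have hx0 : (0:ℝ) < x := hx
    have h1 : ‖Complex.exp (z*x)‖ = Real.exp (z.re * x) := by
      rw [Complex.norm_exp]
      congr 1
      simp [Complex.mul_re]
    rw [norm_mul, h1, Complex.norm_real, Real.norm_eq_abs,
      _root_.abs_of_nonneg (by positivity : (0:ℝ) ≤ x ^ (-(1:ℝ)/2) * Real.exp (-b^2*x/2))]
    rw [show x ^ (-(1:ℝ)/2) * Real.exp (-(b^2/2 - z.re) * x)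
        = Real.exp (z.re * x) * (x ^ (-(1:ℝ)/2) * Real.exp (-b^2*x/2)) by
      rw [mul_comm (Real.exp (z.re * x)), mul_assoc, ← Real.exp_add]
      ring_nf]

lemma aux_A_integrable (hb : 0 < b) (hz : z.re < b^2/2) :
    IntegrableOn (fun x : ℝ => (Complex.exp (z*x) - 1) *
      ((x ^ (-(3:ℝ)/2) * (1 + b^2*x) * Real.exp (-b^2*x/2) : ℝ) : ℂ)) (Ioi 0) := by
  have hσ : 0 < b^2/2 - z.re := by linarith
  set c₀ : ℝ := min 1 (1/(‖z‖ + 1)) with hc₀def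
  have habs : (0:ℝ) ≤ ‖z‖ := norm_nonneg z
  have hc₀ : 0 < c₀ := lt_min one_pos (by positivity)
  have hc₀1 : c₀ ≤ 1 := min_le_left _ _
  have hmeas : AEStronglyMeasurable (fun x : ℝ => (Complex.exp (z*x) - 1) *
      ((x ^ (-(3:ℝ)/2) * (1 + b^2*x) * Real.exp (-b^2*x/2) : ℝ) : ℂ)) (volume.restrict (Ioi 0)) := by
    apply Measurable.aestronglyMeasurable; fun_prop
  rw [← Set.Ioc_union_Ioi_eq_Ioi hc₀.le]
  apply MeasureTheory.IntegrableOn.union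
  · -- on Ioc 0 c₀
    have hint : IntegrableOn (fun x : ℝ => (2*‖z‖*(1+b^2)) * x ^ (-(1:ℝ)/2))
        (Ioc 0 c₀) := by
      refine Integrable.const_mul ?_ _
      exact (intervalIntegrable_iff_integrableOn_Ioc_of_le hc₀.le).mp
        (intervalIntegral.intervalIntegrable_rpow' (by norm_num))
    refine hint.mono' (hmeas.mono_set Ioc_subset_Ioi_self) ?_
    filter_upwards [ae_restrict_mem measurableSet_Ioc] with x hx
    obtain ⟨hx0, hxc⟩ := hx
    have hE1 : Real.exp (-b^2*x/2) ≤ 1 := by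
      rw [Real.exp_le_one_iff]; nlinarith
    have hzx : ‖z * (x:ℂ)‖ ≤ 1 := by
      rw [norm_mul, Complex.norm_real, Real.norm_eq_abs, _root_.abs_of_nonneg hx0.le]
      calc ‖z‖ * x ≤ ‖z‖ * (1/(‖z‖ + 1)) := by
            apply mul_le_mul_of_nonneg_left (hxc.trans (min_le_right _ _)) (norm_nonneg z)
        _ ≤ 1 := by rw [div_eq_mul_inv, one_mul, ← div_eq_mul_inv]
                    rw [div_le_one (by positivity)]; linarith
    have h1 : ‖Complex.exp (z*x) - 1‖ ≤ 2 * (‖z‖ * x) := by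
      have := Complex.norm_exp_sub_one_le hzx
      calc ‖Complex.exp (z*↑x) - 1‖ ≤ 2 * ‖z * (↑x:ℂ)‖ := this
        _ = 2 * (‖z‖ * x) := by
            rw [norm_mul, Complex.norm_real, Real.norm_eq_abs, _root_.abs_of_nonneg hx0.le]
    have hkey : x ^ (-(3:ℝ)/2) * x = x ^ (-(1:ℝ)/2) := by
      rw [show (-(1:ℝ)/2) = (-(3:ℝ)/2) + 1 by norm_num, Real.rpow_add hx0, Real.rpow_one]
    rw [norm_mul, Complex.norm_real, Real.norm_eq_abs,
      _root_.abs_of_nonneg (by positivity : (0:ℝ) ≤ x ^ (-(3:ℝ)/2) * (1+b^2*x) * Real.exp (-b^2*x/2))]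
    calc ‖Complex.exp (z*↑x) - 1‖ * (x ^ (-(3:ℝ)/2) * (1+b^2*x) * Real.exp (-b^2*x/2))
        ≤ (2 * (‖z‖ * x)) * (x ^ (-(3:ℝ)/2) * (1+b^2*x) * Real.exp (-b^2*x/2)) := by
          apply mul_le_mul_of_nonneg_right h1 (by positivity)
      _ = (2 * ‖z‖) * ((1+b^2*x) * Real.exp (-b^2*x/2)) * x ^ (-(1:ℝ)/2) := by
          rw [← hkey]; ring
      _ ≤ (2 * ‖z‖) * ((1+b^2) * 1) * x ^ (-(1:ℝ)/2) := by
          apply mul_le_mul_of_nonneg_right _ (by positivity)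
          apply mul_le_mul_of_nonneg_left _ (by positivity)
          apply mul_le_mul _ hE1 (Real.exp_pos _).le (by nlinarith)
          nlinarith
      _ = (2*‖z‖*(1+b^2)) * x ^ (-(1:ℝ)/2) := by ring
  · -- on Ioi c₀
    set K : ℝ := c₀ ^ (-(3:ℝ)/2) + b^2 * c₀ ^ (-(1:ℝ)/2) with hK
    have hint : IntegrableOn
        (fun x : ℝ => K * (Real.exp (-(b^2/2 - z.re)*x) + Real.exp (-(b^2/2)*x)))
        (Ioi c₀) := by
      exact ((exp_neg_integrableOn_Ioi c₀ hσ).add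
        (exp_neg_integrableOn_Ioi c₀ (by positivity))).const_mul K
    refine hint.mono' (hmeas.mono_set (Ioi_subset_Ioi hc₀.le)) ?_
    filter_upwards [ae_restrict_mem measurableSet_Ioi] with x hx
    have hx0 : (0:ℝ) < x := hc₀.trans hx
    have hkey : x ^ (-(3:ℝ)/2) * x = x ^ (-(1:ℝ)/2) := by
      rw [show (-(1:ℝ)/2) = (-(3:ℝ)/2) + 1 by norm_num, Real.rpow_add hx0, Real.rpow_one]
    have h3 : x ^ (-(3:ℝ)/2) ≤ c₀ ^ (-(3:ℝ)/2) :=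
      Real.rpow_le_rpow_of_nonpos hc₀ (le_of_lt hx) (by norm_num)
    have h1 : x ^ (-(1:ℝ)/2) ≤ c₀ ^ (-(1:ℝ)/2) :=
      Real.rpow_le_rpow_of_nonpos hc₀ (le_of_lt hx) (by norm_num)
    have hnorm : ‖Complex.exp (z*↑x) - 1‖ ≤ Real.exp (z.re * x) + 1 := by
      calc ‖Complex.exp (z*↑x) - 1‖ ≤ ‖Complex.exp (z*↑x)‖ + ‖(1:ℂ)‖ := norm_sub_le _ _
        _ = Real.exp (z.re * x) + 1 := by
            rw [Complex.norm_exp, norm_one]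
            congr 2
            simp [Complex.mul_re]
    rw [norm_mul, Complex.norm_real, Real.norm_eq_abs,
      _root_.abs_of_nonneg (by positivity : (0:ℝ) ≤ x ^ (-(3:ℝ)/2) * (1+b^2*x) * Real.exp (-b^2*x/2))]
    have hEs : Real.exp (z.re * x) * Real.exp (-b^2*x/2) = Real.exp (-(b^2/2 - z.re)*x) := by
      rw [← Real.exp_add]; ring_nf
    have hEb : Real.exp (-b^2*x/2) = Real.exp (-(b^2/2)*x) := by ring_nf
    calc ‖Complex.exp (z*↑x) - 1‖ * (x ^ (-(3:ℝ)/2) * (1+b^2*x) * Real.exp (-b^2*x/2))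
        ≤ (Real.exp (z.re * x) + 1) * (x ^ (-(3:ℝ)/2) * (1+b^2*x) * Real.exp (-b^2*x/2)) := by
          apply mul_le_mul_of_nonneg_right hnorm (by positivity)
      _ = (x ^ (-(3:ℝ)/2) + b^2 * x ^ (-(1:ℝ)/2)) *
            (Real.exp (-(b^2/2 - z.re)*x) + Real.exp (-(b^2/2)*x)) := by
          rw [← hEs, ← hEb, ← hkey]; ring
      _ ≤ K * (Real.exp (-(b^2/2 - z.re)*x) + Real.exp (-(b^2/2)*x)) := by
          apply mul_le_mul_of_nonneg_right _ (by positivity)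
          exact add_le_add h3 (mul_le_mul_of_nonneg_left h1 (by positivity))

lemma aux_exp_deriv (z : ℂ) (x : ℝ) :
    HasDerivAt (fun y : ℝ => Complex.exp (z*y)) (z * Complex.exp (z*x)) x := by
  have h1 : HasDerivAt (fun w : ℂ => Complex.exp (z*w)) (z * Complex.exp (z*(x:ℂ))) (x:ℂ) := by
    simpa [mul_comm, Function.comp_def] using
      (Complex.hasDerivAt_exp (z*(x:ℂ))).comp (x:ℂ) ((hasDerivAt_id (x:ℂ)).const_mul z)
  exact h1.comp_ofReal

lemma aux_F_deriv (hb : 0 < b) {x : ℝ} (hx : 0 < x) :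
    HasDerivAt (fun y : ℝ =>
        (-2:ℂ) * (Complex.exp (z*y) - 1) * ((y ^ (-(1:ℝ)/2) * Real.exp (-b^2*y/2) : ℝ) : ℂ))
      ((Complex.exp (z*x) - 1) * ((x ^ (-(3:ℝ)/2) * (1 + b^2*x) * Real.exp (-b^2*x/2) : ℝ) : ℂ)
        - 2*z*(Complex.exp (z*x) * ((x ^ (-(1:ℝ)/2) * Real.exp (-b^2*x/2) : ℝ) : ℂ))) x := by
  have hu : HasDerivAt (fun y : ℝ => (-2:ℂ) * (Complex.exp (z*y) - 1))
      ((-2:ℂ) * (z * Complex.exp (z*x))) x := ((aux_exp_deriv z x).sub_const 1).const_mul (-2)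
  have hv1 : HasDerivAt (fun y : ℝ => y ^ (-(1:ℝ)/2)) ((-(1:ℝ)/2) * x ^ (-(3:ℝ)/2)) x := by
    have := Real.hasDerivAt_rpow_const (x := x) (p := -(1:ℝ)/2) (Or.inl hx.ne')
    simpa [show (-(1:ℝ)/2 - 1) = -(3:ℝ)/2 by norm_num] using this
  have hv2 : HasDerivAt (fun y : ℝ => Real.exp (-b^2*y/2))
      (Real.exp (-b^2*x/2) * (-b^2/2)) x := by
    have h1 : HasDerivAt (fun y : ℝ => -b^2*y/2) (-b^2/2) x := by
      simpa using ((hasDerivAt_id x).const_mul (-b^2)).div_const 2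
    simpa [mul_comm, Function.comp_def] using (Real.hasDerivAt_exp (-b^2*x/2)).comp x h1
  have hv := (hv1.mul hv2).ofReal_comp
  have hF := hu.mul hv
  have heq : ((Complex.exp (z*x) - 1) * ((x ^ (-(3:ℝ)/2) * (1 + b^2*x) * Real.exp (-b^2*x/2) : ℝ) : ℂ)
        - 2*z*(Complex.exp (z*x) * ((x ^ (-(1:ℝ)/2) * Real.exp (-b^2*x/2) : ℝ) : ℂ)))
      = ((-2:ℂ) * (z * Complex.exp (z*x))) * ((x ^ (-(1:ℝ)/2) * Real.exp (-b^2*x/2) : ℝ) : ℂ)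
        + ((-2:ℂ) * (Complex.exp (z*x) - 1)) *
          (((-(1:ℝ)/2) * x ^ (-(3:ℝ)/2) * Real.exp (-b^2*x/2)
            + x ^ (-(1:ℝ)/2) * (Real.exp (-b^2*x/2) * (-b^2/2)) : ℝ) : ℂ) := by
    have hkey : x ^ (-(1:ℝ)/2) = x ^ (-(3:ℝ)/2) * x := by
      rw [show (-(1:ℝ)/2) = (-(3:ℝ)/2) + 1 by norm_num, Real.rpow_add hx, Real.rpow_one]
    rw [hkey]
    push_cast
    ring
  rw [heq]
  exact hF


lemma aux_F_cont (hb : 0 < b) (z : ℂ) :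
    ContinuousWithinAt (fun y : ℝ =>
      (-2:ℂ) * (Complex.exp (z*y) - 1) * ((y ^ (-(1:ℝ)/2) * Real.exp (-b^2*y/2) : ℝ) : ℂ))
      (Ici 0) 0 := by
  rw [← Set.Ioi_insert, continuousWithinAt_insert_self]
  have key : Tendsto (fun y : ℝ =>
      (-2:ℂ) * (Complex.exp (z*y) - 1) * ((y ^ (-(1:ℝ)/2) * Real.exp (-b^2*y/2) : ℝ) : ℂ))
      (nhdsWithin (0:ℝ) (Ioi 0)) (nhds 0) := by
    have hslope : Tendsto (fun y : ℝ => (Complex.exp (z*y) - 1) * (y:ℂ)⁻¹)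
        (nhdsWithin (0:ℝ) (Ioi 0)) (nhds z) := by
      have hd := aux_exp_deriv z 0
      rw [hasDerivAt_iff_tendsto_slope] at hd
      have hmono : Ioi (0:ℝ) ⊆ {(0:ℝ)}ᶜ := fun y hy => (ne_of_gt hy)
      have hd2 := hd.mono_left (nhdsWithin_mono 0 hmono)
      have hval : z * Complex.exp (z*((0:ℝ):ℂ)) = z := by simp
      rw [hval] at hd2
      refine hd2.congr (fun y => ?_)
      simp only [slope_def_module]
      rw [Complex.real_smul]
      push_cast
      norm_num
      ring
    have hrest : Tendsto (fun y : ℝ => ((y ^ ((1:ℝ)/2) * Real.exp (-b^2*y/2) : ℝ) : ℂ))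
        (nhdsWithin (0:ℝ) (Ioi 0)) (nhds 0) := by
      have hc : ContinuousAt (fun y : ℝ => y ^ ((1:ℝ)/2)) 0 :=
        Real.continuousAt_rpow_const 0 _ (Or.inr (by norm_num))
      have hce : ContinuousAt (fun y : ℝ => Real.exp (-b^2*y/2)) 0 := by
        apply Continuous.continuousAt; continuity
      have h1 : Tendsto (fun y : ℝ => y ^ ((1:ℝ)/2) * Real.exp (-b^2*y/2)) (nhds (0:ℝ))
          (nhds 0) := by
        have := (hc.mul hce).tendsto
        simpa [Real.zero_rpow (by norm_num : ((1:ℝ)/2) ≠ 0), Pi.mul_def] using this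
      exact (Complex.continuous_ofReal.tendsto 0).comp (h1.mono_left nhdsWithin_le_nhds)
    have hcomb := (hslope.const_mul (-2:ℂ)).mul hrest
    rw [mul_zero] at hcomb
    refine hcomb.congr' ?_
    filter_upwards [self_mem_nhdsWithin] with y hy
    have hy0 : (0:ℝ) < y := hy
    have hyc : (y:ℂ) ≠ 0 := Complex.ofReal_ne_zero.mpr hy0.ne'
    have hkey : y ^ (-(1:ℝ)/2) = y ^ ((1:ℝ)/2) * y⁻¹ := by
      rw [show (-(1:ℝ)/2) = (1:ℝ)/2 + (-1) by norm_num, Real.rpow_add hy0, Real.rpow_neg_one]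
    rw [hkey]
    push_cast
    field_simp
  unfold ContinuousWithinAt
  convert key using 2
  simp [Real.zero_rpow (by norm_num : (-(1:ℝ)/2) ≠ 0)]

lemma aux_F_top (hb : 0 < b) (hz : z.re < b^2/2) :
    Tendsto (fun y : ℝ =>
      (-2:ℂ) * (Complex.exp (z*y) - 1) * ((y ^ (-(1:ℝ)/2) * Real.exp (-b^2*y/2) : ℝ) : ℂ))
      atTop (nhds 0) := by
  have hσ : 0 < b^2/2 - z.re := by linarith
  have hg : Tendsto (fun x : ℝ => 2*(Real.exp (-(b^2/2 - z.re)*x) + Real.exp (-(b^2/2)*x)))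
      atTop (nhds 0) := by
    have t1 : Tendsto (fun x : ℝ => Real.exp (-(b^2/2 - z.re)*x)) atTop (nhds 0) := by
      have hm : Tendsto (fun x : ℝ => (-(b^2/2 - z.re))*x) atTop atBot :=
        Filter.Tendsto.const_mul_atTop_of_neg (by linarith) tendsto_id
      have := Real.tendsto_exp_atBot.comp hm
      simpa [Function.comp_def, neg_mul] using this
    have t2 : Tendsto (fun x : ℝ => Real.exp (-(b^2/2)*x)) atTop (nhds 0) := by
      have hm : Tendsto (fun x : ℝ => (-(b^2/2))*x) atTop atBot :=
        Filter.Tendsto.const_mul_atTop_of_neg (by nlinarith [pow_pos hb 2]) tendsto_id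
      have := Real.tendsto_exp_atBot.comp hm
      simpa [Function.comp_def, neg_mul] using this
    simpa using (t1.add t2).const_mul 2
  refine squeeze_zero_norm' ?_ hg
  filter_upwards [eventually_ge_atTop (1:ℝ)] with x hx1
  have hx0 : (0:ℝ) < x := lt_of_lt_of_le one_pos hx1
  have hX1 : x ^ (-(1:ℝ)/2) ≤ 1 := Real.rpow_le_one_of_one_le_of_nonpos hx1 (by norm_num)
  have hnorm : ‖Complex.exp (z*(x:ℝ)) - 1‖ ≤ Real.exp (z.re * x) + 1 := by
    calc ‖Complex.exp (z*(x:ℝ)) - 1‖ ≤ ‖Complex.exp (z*(x:ℝ))‖ + ‖(1:ℂ)‖ := norm_sub_le _ _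
      _ = Real.exp (z.re * x) + 1 := by
          rw [Complex.norm_exp, norm_one]
          congr 2
          simp [Complex.mul_re]
  have hEs : Real.exp (z.re * x) * Real.exp (-b^2*x/2) = Real.exp (-(b^2/2 - z.re)*x) := by
    rw [← Real.exp_add]; ring_nf
  have hEb : Real.exp (-b^2*x/2) = Real.exp (-(b^2/2)*x) := by ring_nf
  rw [norm_mul, norm_mul, Complex.norm_real, Real.norm_eq_abs,
    _root_.abs_of_nonneg (by positivity : (0:ℝ) ≤ x ^ (-(1:ℝ)/2) * Real.exp (-b^2*x/2))]
  have : ‖(-2:ℂ)‖ = 2 := by norm_num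
  rw [this]
  calc 2 * ‖Complex.exp (z*(x:ℝ)) - 1‖ * (x ^ (-(1:ℝ)/2) * Real.exp (-b^2*x/2))
      ≤ 2 * (Real.exp (z.re * x) + 1) * (x ^ (-(1:ℝ)/2) * Real.exp (-b^2*x/2)) := by
        apply mul_le_mul_of_nonneg_right (by linarith) (by positivity)
    _ ≤ 2 * (Real.exp (z.re * x) + 1) * (1 * Real.exp (-b^2*x/2)) := by
        apply mul_le_mul_of_nonneg_left
          (mul_le_mul_of_nonneg_right hX1 (Real.exp_pos _).le) (by positivity)
    _ = 2*(Real.exp (-(b^2/2 - z.re)*x) + Real.exp (-(b^2/2)*x)) := by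
        rw [← hEs, ← hEb]; ring


lemma aux_main (a l : ℝ) (ha : 0 < a) (hb : 0 < b) (hl : 0 < l)
    (z : ℂ) (hz : z.re < b ^ 2 / 2)
    (hHint : IntegrableOn (fun x : ℝ =>
      Complex.exp (z*x) * ((x ^ (-(1:ℝ)/2) * Real.exp (-b^2*x/2) : ℝ) : ℂ)) (Ioi 0))
    (hAint : IntegrableOn (fun x : ℝ => (Complex.exp (z*x) - 1) *
      ((x ^ (-(3:ℝ)/2) * (1 + b^2*x) * Real.exp (-b^2*x/2) : ℝ) : ℂ)) (Ioi 0))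
    (hcont : ContinuousWithinAt (fun y : ℝ =>
      (-2:ℂ) * (Complex.exp (z*y) - 1) * ((y ^ (-(1:ℝ)/2) * Real.exp (-b^2*y/2) : ℝ) : ℂ))
      (Ici 0) 0)
    (htop : Tendsto (fun y : ℝ =>
      (-2:ℂ) * (Complex.exp (z*y) - 1) * ((y ^ (-(1:ℝ)/2) * Real.exp (-b^2*y/2) : ℝ) : ℂ))
      atTop (nhds 0))
    (hderiv : ∀ x ∈ Ioi (0:ℝ), HasDerivAt (fun y : ℝ =>
        (-2:ℂ) * (Complex.exp (z*y) - 1) * ((y ^ (-(1:ℝ)/2) * Real.exp (-b^2*y/2) : ℝ) : ℂ))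
      ((Complex.exp (z*x) - 1) * ((x ^ (-(3:ℝ)/2) * (1 + b^2*x) * Real.exp (-b^2*x/2) : ℝ) : ℂ)
        - 2*z*(Complex.exp (z*x) * ((x ^ (-(1:ℝ)/2) * Real.exp (-b^2*x/2) : ℝ) : ℂ))) x)
    (hgauss : ∀ (s : ℂ), 0 < s.re →
      ∫ x in Ioi (0:ℝ), ((x ^ (-(1:ℝ)/2) : ℝ) : ℂ) * Complex.exp (-s * x)
        = (↑π / s) ^ (1/2 : ℂ))
    (hcpow : ∀ (w : ℂ), 0 < w.re →
      (↑π / (w/2)) ^ (1/2:ℂ) = (Real.sqrt (2*π) : ℂ) * w ^ (-(1:ℂ)/2)) :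
    ∫ x in Set.Ioi (0 : ℝ),
        (Complex.exp (z * (x : ℂ)) - 1) *
          ((l * a / (2 * Real.sqrt (2 * Real.pi)) *
            x ^ (-(3 : ℝ) / 2) * (1 + b ^ 2 * x) * Real.exp (-b ^ 2 * x / 2) : ℝ) : ℂ)
      = (l : ℂ) * a * z * ((b : ℂ) ^ 2 - 2 * z) ^ (-(1 : ℂ) / 2) := by
  have hσ : 0 < b^2/2 - z.re := by linarith
  have hsre : 0 < (((b^2/2 : ℝ) : ℂ) - z).re := by
    simp only [Complex.sub_re, Complex.ofReal_re]; linarith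
  -- FTC
  have hFTC := integral_Ioi_of_hasDerivAt_of_tendsto hcont hderiv
    (hAint.sub (hHint.const_mul (2*z))) htop
  rw [MeasureTheory.integral_sub hAint (hHint.const_mul (2*z))] at hFTC
  have hF0 : (-2:ℂ) * (Complex.exp (z*((0:ℝ):ℂ)) - 1) *
      (((0:ℝ) ^ (-(1:ℝ)/2) * Real.exp (-b^2*(0:ℝ)/2) : ℝ) : ℂ) = 0 := by
    norm_num
  rw [hF0, sub_zero] at hFTC
  rw [MeasureTheory.integral_const_mul] at hFTC
  have hIA : (∫ x in Ioi (0:ℝ), (Complex.exp (z*x) - 1) *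
      ((x ^ (-(3:ℝ)/2) * (1 + b^2*x) * Real.exp (-b^2*x/2) : ℝ) : ℂ))
      = 2*z * ∫ x in Ioi (0:ℝ),
        Complex.exp (z*x) * ((x ^ (-(1:ℝ)/2) * Real.exp (-b^2*x/2) : ℝ) : ℂ) := by
    have := sub_eq_zero.mp hFTC
    linear_combination this
  -- value of H integral
  have hHval : (∫ x in Ioi (0:ℝ),
        Complex.exp (z*x) * ((x ^ (-(1:ℝ)/2) * Real.exp (-b^2*x/2) : ℝ) : ℂ))
      = (↑π / (((b^2/2 : ℝ) : ℂ) - z)) ^ (1/2 : ℂ) := by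
    rw [← hgauss (((b^2/2 : ℝ) : ℂ) - z) hsre]
    refine setIntegral_congr_fun measurableSet_Ioi fun x hx => ?_
    rw [Complex.ofReal_mul, Complex.ofReal_exp, show
      Complex.exp (z*↑x) * ((↑(x ^ (-(1:ℝ)/2)):ℂ) * Complex.exp ((-b^2*x/2 : ℝ):ℂ))
        = (↑(x ^ (-(1:ℝ)/2)):ℂ) * Complex.exp (z*↑x + ((-b^2*x/2 : ℝ):ℂ)) from by
      rw [Complex.exp_add]; ring]
    congr 2
    push_cast
    ring
  -- rewrite goal integrand
  have hcongr : (∫ x in Ioi (0:ℝ),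
        (Complex.exp (z * (x : ℂ)) - 1) *
          ((l * a / (2 * Real.sqrt (2 * Real.pi)) *
            x ^ (-(3 : ℝ) / 2) * (1 + b ^ 2 * x) * Real.exp (-b ^ 2 * x / 2) : ℝ) : ℂ))
      = ∫ x in Ioi (0:ℝ), ((l * a / (2 * Real.sqrt (2 * Real.pi)) : ℝ) : ℂ) *
          ((Complex.exp (z*x) - 1) *
            ((x ^ (-(3:ℝ)/2) * (1 + b^2*x) * Real.exp (-b^2*x/2) : ℝ) : ℂ)) := by
    refine setIntegral_congr_fun measurableSet_Ioi fun x hx => ?_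
    push_cast
    ring
  rw [hcongr, MeasureTheory.integral_const_mul, hIA, hHval]
  -- final algebra
  have hwre : 0 < ((b:ℂ)^2 - 2*z).re := by
    have : ((b:ℂ)^2 - 2*z).re = b^2 - 2*z.re := by
      simp [pow_two, Complex.mul_re, Complex.sub_re]
    rw [this]; linarith
  have hsw : (((b^2/2 : ℝ) : ℂ) - z) = ((b:ℂ)^2 - 2*z)/2 := by push_cast; ring
  rw [hsw, hcpow _ hwre]
  have hsqrt : Real.sqrt (2*π) ≠ 0 := (Real.sqrt_pos.mpr (by positivity)).ne'
  have hsqrtC : (Real.sqrt (2*π) : ℂ) ≠ 0 := Complex.ofReal_ne_zero.mpr hsqrt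
  have hs2 : ((Real.sqrt 2 : ℝ) : ℂ) ≠ 0 :=
    Complex.ofReal_ne_zero.mpr (Real.sqrt_pos.mpr two_pos).ne'
  have hsp : ((Real.sqrt π : ℝ) : ℂ) ≠ 0 :=
    Complex.ofReal_ne_zero.mpr (Real.sqrt_pos.mpr Real.pi_pos).ne'
  push_cast
  field_simp

end Stmt6Aux

/-- IG-OU cumulant function: for `a, b, λ > 0` and `Re z < b²/2`,
`∫₀^∞ (e^{zx} − 1) (λa/(2√(2π))) x^{−3/2} (1 + b²x) e^{−b²x/2} dx
  = λ a z (b² − 2z)^{−1/2}` (principal branch). -/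
theorem stmt6 (a b l : ℝ) (ha : 0 < a) (hb : 0 < b) (hl : 0 < l)
    (z : ℂ) (hz : z.re < b ^ 2 / 2) :
    ∫ x in Set.Ioi (0 : ℝ),
        (Complex.exp (z * (x : ℂ)) - 1) *
          ((l * a / (2 * Real.sqrt (2 * Real.pi)) *
            x ^ (-(3 : ℝ) / 2) * (1 + b ^ 2 * x) * Real.exp (-b ^ 2 * x / 2) : ℝ) : ℂ)
      = (l : ℂ) * a * z * ((b : ℂ) ^ 2 - 2 * z) ^ (-(1 : ℂ) / 2) := by
  exact aux_main a l ha hb hl z hz (aux_H_integrable hb hz) (aux_A_integrable hb hz)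
    (aux_F_cont hb z) (aux_F_top hb hz) (fun x hx => aux_F_deriv hb hx)
    aux_gauss aux_cpow
end

section
/- Let a, b > 0. For u ∈ ℝ, the function x ↦ (e^{ux} − 1) (a/(2√(2π))) x^{−3/2} (1 + b²x) e^{−b²x/2} is integrable on (0,∞) if and only if u < b²/2; consequently sup{u ∈ ℝ : ∫₀^∞ (e^{ux}−1)(a/(2√(2π))) x^{−3/2}(1+b²x)e^{−b²x/2} dx < ∞} = b²/2. -/
open MeasureTheory Real Set

private lemma aux_abs_exp_sub_one_le (t : ℝ) : |Real.exp t - 1| ≤ |t| * Real.exp |t| := by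
  rcases le_or_gt 0 t with h | h
  · rw [abs_of_nonneg (by nlinarith [Real.add_one_le_exp t] : (0:ℝ) ≤ Real.exp t - 1),
      abs_of_nonneg h]
    have h1 : 1 - t ≤ Real.exp (-t) := by linarith [Real.add_one_le_exp (-t)]
    have h2 : Real.exp (-t) * Real.exp t = 1 := by
      rw [← Real.exp_add]; simp
    nlinarith [Real.exp_pos t, mul_le_mul_of_nonneg_right h1 (Real.exp_pos t).le]
  · rw [abs_of_nonpos (by nlinarith [Real.exp_lt_one_iff.mpr h] : Real.exp t - 1 ≤ 0),
      abs_of_neg h]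
    have h1 : t + 1 ≤ Real.exp t := Real.add_one_le_exp t
    have h2 : 1 ≤ Real.exp (-t) := Real.one_le_exp (by linarith)
    nlinarith

private lemma aux_meas (a b u : ℝ) :
    AEStronglyMeasurable
      (fun x : ℝ => (Real.exp (u * x) - 1) *
        (a / (2 * Real.sqrt (2 * Real.pi)) *
          x ^ (-(3 : ℝ) / 2) * (1 + b ^ 2 * x) * Real.exp (-b ^ 2 * x / 2)))
      (volume.restrict (Set.Ioi 0)) := by
  refine ContinuousOn.aestronglyMeasurable ?_ measurableSet_Ioi
  intro x hx
  have hx0 : (x : ℝ) ≠ 0 := ne_of_gt hx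
  apply ContinuousAt.continuousWithinAt
  have h2 : ContinuousAt (fun x : ℝ => x ^ (-(3 : ℝ) / 2)) x :=
    Real.continuousAt_rpow_const x _ (Or.inl hx0)
  have h1 : ContinuousAt (fun x : ℝ => Real.exp (u * x) - 1) x := by fun_prop
  have h3 : ContinuousAt (fun x : ℝ => (1 + b ^ 2 * x)) x := by fun_prop
  have h4 : ContinuousAt (fun x : ℝ => Real.exp (-b ^ 2 * x / 2)) x := by fun_prop
  exact h1.mul (((continuousAt_const.mul h2).mul h3).mul h4)

private lemma aux_integrable (a b u : ℝ) (ha : 0 < a) (hb : 0 < b) (hu : u < b ^ 2 / 2) :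
    MeasureTheory.IntegrableOn
      (fun x : ℝ => (Real.exp (u * x) - 1) *
        (a / (2 * Real.sqrt (2 * Real.pi)) *
          x ^ (-(3 : ℝ) / 2) * (1 + b ^ 2 * x) * Real.exp (-b ^ 2 * x / 2)))
      (Set.Ioi 0) := by
  set C : ℝ := a / (2 * Real.sqrt (2 * Real.pi)) with hC
  have hCpos : 0 < C := by
    apply div_pos ha
    positivity
  set f : ℝ → ℝ := fun x : ℝ => (Real.exp (u * x) - 1) *
      (C * x ^ (-(3 : ℝ) / 2) * (1 + b ^ 2 * x) * Real.exp (-b ^ 2 * x / 2)) with hf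
  have hmeas := aux_meas a b u
  rw [show Set.Ioi (0:ℝ) = Set.Ioc 0 1 ∪ Set.Ioi 1 from
    (Set.Ioc_union_Ioi_eq_Ioi zero_le_one).symm]
  apply MeasureTheory.IntegrableOn.union
  · -- near 0
    have hint : IntegrableOn (fun x : ℝ => (C * (|u| * Real.exp |u|) * (1 + b ^ 2)) * x ^ (-(1:ℝ)/2)) (Set.Ioc 0 1) := by
      apply Integrable.const_mul
      have : IntegrableOn (fun x : ℝ => x ^ (-(1:ℝ)/2)) (Set.Ioo (0:ℝ) 2) :=
        (intervalIntegral.integrableOn_Ioo_rpow_iff (by norm_num)).2 (by norm_num)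
      exact this.mono_set (fun x hx => ⟨hx.1, lt_of_le_of_lt hx.2 one_lt_two⟩)
    apply hint.mono' (hmeas.mono_set Set.Ioc_subset_Ioi_self)
    filter_upwards [ae_restrict_mem measurableSet_Ioc] with x hx
    obtain ⟨hx0, hx1⟩ := hx
    have h1 : |Real.exp (u * x) - 1| ≤ |u| * Real.exp |u| * x := by
      calc |Real.exp (u * x) - 1| ≤ |u * x| * Real.exp |u * x| :=
            aux_abs_exp_sub_one_le _
        _ = |u| * x * Real.exp (|u| * x) := by
            rw [abs_mul, abs_of_pos hx0]
        _ ≤ |u| * x * Real.exp (|u| * 1) := by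
            gcongr
        _ = |u| * Real.exp |u| * x := by rw [mul_one]; ring
    have hnn : (0:ℝ) ≤ C * x ^ (-(3 : ℝ) / 2) * (1 + b ^ 2 * x) * Real.exp (-b ^ 2 * x / 2) := by
      have := Real.rpow_nonneg hx0.le (-(3:ℝ)/2)
      positivity
    rw [norm_mul, Real.norm_eq_abs, Real.norm_eq_abs, abs_of_nonneg hnn]
    calc |Real.exp (u * x) - 1| * (C * x ^ (-(3 : ℝ) / 2) * (1 + b ^ 2 * x) * Real.exp (-b ^ 2 * x / 2))
        ≤ (|u| * Real.exp |u| * x) * (C * x ^ (-(3 : ℝ) / 2) * (1 + b ^ 2) * 1) := by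
          have hr := Real.rpow_nonneg hx0.le (-(3:ℝ)/2)
          have hb2 : b ^ 2 * x ≤ b ^ 2 := by nlinarith
          have he : Real.exp (-b ^ 2 * x / 2) ≤ 1 :=
            Real.exp_le_one_iff.mpr (by nlinarith)
          gcongr
      _ = (C * (|u| * Real.exp |u|) * (1 + b ^ 2)) * (x * x ^ (-(3:ℝ)/2)) := by ring
      _ = (C * (|u| * Real.exp |u|) * (1 + b ^ 2)) * x ^ (-(1:ℝ)/2) := by
          congr 1
          rw [show (-(1:ℝ)/2) = 1 + (-(3:ℝ)/2) by norm_num, Real.rpow_add hx0, Real.rpow_one]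
  · -- near infinity
    set c : ℝ := max u 0 with hc
    have hcb : c < b ^ 2 / 2 := max_lt hu (by positivity)
    set δ : ℝ := (b ^ 2 / 2 - c) / 2 with hδ
    have hδpos : 0 < δ := by simp only [hδ]; linarith
    have hint : IntegrableOn
        (fun x : ℝ => (2 * (C * (1 + b ^ 2 / δ))) * Real.exp (-δ * x)) (Set.Ioi 1) := by
      exact (exp_neg_integrableOn_Ioi 1 hδpos).const_mul _
    apply hint.mono' (hmeas.mono_set (Set.Ioi_subset_Ioi zero_le_one))
    filter_upwards [ae_restrict_mem measurableSet_Ioi] with x hx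
    have hx1 : (1:ℝ) ≤ x := le_of_lt hx
    have hx0 : (0:ℝ) < x := lt_of_lt_of_le zero_lt_one hx1
    have hr := Real.rpow_nonneg hx0.le (-(3:ℝ)/2)
    have hnn : (0:ℝ) ≤ C * x ^ (-(3 : ℝ) / 2) * (1 + b ^ 2 * x) * Real.exp (-b ^ 2 * x / 2) := by
      positivity
    rw [norm_mul, Real.norm_eq_abs, Real.norm_eq_abs, abs_of_nonneg hnn]
    have h1 : |Real.exp (u * x) - 1| ≤ 2 * Real.exp (c * x) := by
      have e1 : Real.exp (u * x) ≤ Real.exp (c * x) := by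
        apply Real.exp_le_exp.mpr
        exact mul_le_mul_of_nonneg_right (le_max_left u 0) hx0.le
      have e2 : (1:ℝ) ≤ Real.exp (c * x) :=
        Real.one_le_exp (by positivity)
      rw [abs_sub_le_iff]
      constructor <;> nlinarith [Real.exp_pos (u * x)]
    have h2 : x ^ (-(3:ℝ)/2) ≤ 1 :=
      Real.rpow_le_one_of_one_le_of_nonpos hx1 (by norm_num)
    have h3 : 1 + b ^ 2 * x ≤ (1 + b ^ 2 / δ) * Real.exp (δ * x) := by
      have e2 : (1:ℝ) ≤ Real.exp (δ * x) := Real.one_le_exp (by positivity)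
      have e3 : δ * x ≤ Real.exp (δ * x) := by
        linarith [Real.add_one_le_exp (δ * x)]
      have e4 : b ^ 2 * x = (b ^ 2 / δ) * (δ * x) := by field_simp
      rw [mul_comm (1 + b ^ 2 / δ), mul_add, mul_one]
      rw [e4]
      have : (b ^ 2 / δ) * (δ * x) ≤ Real.exp (δ * x) * (b ^ 2 / δ) := by
        rw [mul_comm]
        gcongr
      linarith
    calc |Real.exp (u * x) - 1| * (C * x ^ (-(3 : ℝ) / 2) * (1 + b ^ 2 * x) * Real.exp (-b ^ 2 * x / 2))
        ≤ (2 * Real.exp (c * x)) * (C * 1 * ((1 + b ^ 2 / δ) * Real.exp (δ * x)) * Real.exp (-b ^ 2 * x / 2)) := by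
          gcongr
      _ = (2 * (C * (1 + b ^ 2 / δ))) * (Real.exp (c * x) * Real.exp (δ * x) * Real.exp (-b ^ 2 * x / 2)) := by ring
      _ = (2 * (C * (1 + b ^ 2 / δ))) * Real.exp (-δ * x) := by
          congr 1
          rw [← Real.exp_add, ← Real.exp_add]
          congr 1
          simp only [hδ]
          ring

private lemma aux_not_integrable (a b u : ℝ) (ha : 0 < a) (hb : 0 < b) (hu : b ^ 2 / 2 ≤ u) :
    ¬ MeasureTheory.IntegrableOn
      (fun x : ℝ => (Real.exp (u * x) - 1) *
        (a / (2 * Real.sqrt (2 * Real.pi)) *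
          x ^ (-(3 : ℝ) / 2) * (1 + b ^ 2 * x) * Real.exp (-b ^ 2 * x / 2)))
      (Set.Ioi 0) := by
  intro h
  set C : ℝ := a / (2 * Real.sqrt (2 * Real.pi)) with hC
  have hCpos : 0 < C := by
    apply div_pos ha
    positivity
  set K : ℝ := C * b ^ 2 * (1 - Real.exp (-b ^ 2 / 2)) with hK
  have hKpos : 0 < K := by
    have : Real.exp (-b ^ 2 / 2) < 1 := Real.exp_lt_one_iff.mpr (by nlinarith)
    have : 0 < 1 - Real.exp (-b ^ 2 / 2) := by linarith
    positivity
  have h1 : IntegrableOn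
      (fun x : ℝ => (Real.exp (u * x) - 1) *
        (C * x ^ (-(3 : ℝ) / 2) * (1 + b ^ 2 * x) * Real.exp (-b ^ 2 * x / 2)))
      (Set.Ioi 1) := h.mono_set (Set.Ioi_subset_Ioi zero_le_one)
  have h2 : IntegrableOn (fun x : ℝ => K * x ^ (-(1:ℝ)/2)) (Set.Ioi 1) := by
    apply h1.mono'
    · refine ContinuousOn.aestronglyMeasurable (fun x hx => ?_) measurableSet_Ioi
      have hx0 : (x:ℝ) ≠ 0 := ne_of_gt (lt_trans zero_lt_one hx)
      exact (continuousAt_const.mul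
        (Real.continuousAt_rpow_const x _ (Or.inl hx0))).continuousWithinAt
    · filter_upwards [ae_restrict_mem measurableSet_Ioi] with x hx
      have hx1 : (1:ℝ) ≤ x := le_of_lt hx
      have hx0 : (0:ℝ) < x := lt_of_lt_of_le zero_lt_one hx1
      have hr : (0:ℝ) ≤ x ^ (-(1:ℝ)/2) := Real.rpow_nonneg hx0.le _
      rw [Real.norm_eq_abs, abs_of_nonneg (by positivity)]
      have hux : b ^ 2 / 2 * x ≤ u * x := mul_le_mul_of_nonneg_right hu hx0.le
      have he1 : (1:ℝ) ≤ Real.exp (u * x) := Real.one_le_exp (by nlinarith)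
      have hfnn : 0 ≤ (Real.exp (u * x) - 1) *
          (C * x ^ (-(3 : ℝ) / 2) * (1 + b ^ 2 * x) * Real.exp (-b ^ 2 * x / 2)) := by
        have hr2 := Real.rpow_nonneg hx0.le (-(3:ℝ)/2)
        have : 0 ≤ Real.exp (u * x) - 1 := by linarith
        positivity
      -- key lower bound
      have key : Real.exp (b ^ 2 * x / 2) * (1 - Real.exp (-b ^ 2 / 2)) ≤ Real.exp (u * x) - 1 := by
        have e1 : Real.exp (b ^ 2 * x / 2) ≤ Real.exp (u * x) :=
          Real.exp_le_exp.mpr (by nlinarith)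
        have e2 : Real.exp (b ^ 2 * x / 2) * Real.exp (-b ^ 2 / 2) = Real.exp (b ^ 2 * x / 2 - b ^ 2 / 2) := by
          rw [← Real.exp_add]; ring_nf
        have e3 : (1:ℝ) ≤ Real.exp (b ^ 2 * x / 2 - b ^ 2 / 2) :=
          Real.one_le_exp (by nlinarith)
        nlinarith [Real.exp_pos (b ^ 2 * x / 2)]
      have hr2 := Real.rpow_nonneg hx0.le (-(3:ℝ)/2)
      calc K * x ^ (-(1:ℝ)/2)
          = K * (x ^ (-(3:ℝ)/2) * x) := by
            congr 1
            rw [show (-(1:ℝ)/2) = (-(3:ℝ)/2) + 1 by norm_num, Real.rpow_add hx0, Real.rpow_one]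
        _ = (Real.exp (b ^ 2 * x / 2) * (1 - Real.exp (-b ^ 2 / 2))) *
              (C * x ^ (-(3 : ℝ) / 2) * (b ^ 2 * x) * Real.exp (-b ^ 2 * x / 2)) := by
            have e5 : Real.exp (b ^ 2 * x / 2) * Real.exp (-b ^ 2 * x / 2) = 1 := by
              rw [← Real.exp_add]; ring_nf; exact Real.exp_zero
            simp only [hK]
            linear_combination
              (-(C * b ^ 2 * (1 - Real.exp (-b ^ 2 / 2)) * (x ^ (-(3:ℝ)/2) * x))) * e5
        _ ≤ (Real.exp (u * x) - 1) *
              (C * x ^ (-(3 : ℝ) / 2) * (1 + b ^ 2 * x) * Real.exp (-b ^ 2 * x / 2)) := by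
            have hb1 : Real.exp (-b ^ 2 / 2) < 1 := Real.exp_lt_one_iff.mpr (by nlinarith)
            have hpos : (0:ℝ) ≤ Real.exp (b ^ 2 * x / 2) * (1 - Real.exp (-b ^ 2 / 2)) := by
              have := Real.exp_pos (b ^ 2 * x / 2)
              nlinarith
            gcongr <;> first
              | exact hpos
              | exact key
              | linarith
              | positivity

  have h3 : IntegrableOn (fun x : ℝ => x ^ (-(1:ℝ)/2)) (Set.Ioi 1) := by
    have := h2.const_mul K⁻¹
    simp [← mul_assoc, inv_mul_cancel₀ (ne_of_gt hKpos)] at this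
    exact this
  rw [integrableOn_Ioi_rpow_iff zero_lt_one] at h3
  norm_num at h3

/-- IG-OU integrability threshold: `x ↦ (e^{ux}−1)(a/(2√(2π)))x^{−3/2}(1+b²x)e^{−b²x/2}`
is integrable on `(0,∞)` iff `u < b²/2`, and the sup of the set of such `u` is `b²/2`. -/
theorem stmt7 (a b : ℝ) (ha : 0 < a) (hb : 0 < b) :
    (∀ u : ℝ,
      MeasureTheory.IntegrableOn
        (fun x : ℝ => (Real.exp (u * x) - 1) *
          (a / (2 * Real.sqrt (2 * Real.pi)) *
            x ^ (-(3 : ℝ) / 2) * (1 + b ^ 2 * x) * Real.exp (-b ^ 2 * x / 2)))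
        (Set.Ioi 0) ↔ u < b ^ 2 / 2) ∧
    sSup {u : ℝ |
      MeasureTheory.IntegrableOn
        (fun x : ℝ => (Real.exp (u * x) - 1) *
          (a / (2 * Real.sqrt (2 * Real.pi)) *
            x ^ (-(3 : ℝ) / 2) * (1 + b ^ 2 * x) * Real.exp (-b ^ 2 * x / 2)))
        (Set.Ioi 0)} = b ^ 2 / 2 := by
  have hiff : ∀ u : ℝ,
      MeasureTheory.IntegrableOn
        (fun x : ℝ => (Real.exp (u * x) - 1) *
          (a / (2 * Real.sqrt (2 * Real.pi)) *
            x ^ (-(3 : ℝ) / 2) * (1 + b ^ 2 * x) * Real.exp (-b ^ 2 * x / 2)))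
        (Set.Ioi 0) ↔ u < b ^ 2 / 2 := by
    intro u
    constructor
    · intro h
      by_contra hle
      exact aux_not_integrable a b u ha hb (not_lt.mp hle) h
    · exact aux_integrable a b u ha hb
  refine ⟨hiff, ?_⟩
  have : {u : ℝ |
      MeasureTheory.IntegrableOn
        (fun x : ℝ => (Real.exp (u * x) - 1) *
          (a / (2 * Real.sqrt (2 * Real.pi)) *
            x ^ (-(3 : ℝ) / 2) * (1 + b ^ 2 * x) * Real.exp (-b ^ 2 * x / 2)))
        (Set.Ioi 0)} = Set.Iio (b ^ 2 / 2) := by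
    ext u
    exact hiff u
  rw [this]
  exact csSup_Iio
end

section
/- Let a, b > 0, c ∈ (0,1), and ζ ∈ ℂ with Im(ζ) > −b and Re(ζ) ≠ 0. Then ∫_c^1 (a i ζ)/(b − iζx) dx = a i · sgn(Re ζ) · [ arctan((|ζ|² + b·Im ζ)/(b·|Re ζ|)) − arctan((|ζ|²c + b·Im ζ)/(b·|Re ζ|)) ] − (a/2) · log( (|ζ|² + 2b·Im ζ + b²) / (|ζ|²c² + 2b·Im(ζ)·c + b²) ). -/
open MeasureTheory Real Complex Set intervalIntegral

/-- Closed-form evaluation of `∫_c^1 (aiζ)/(b − iζx) dx` for the gamma-OU model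
(eq-kappa-Gamma2). -/
theorem stmt8 (a b : ℝ) (ha : 0 < a) (hb : 0 < b) (c : ℝ) (hc : c ∈ Set.Ioo (0 : ℝ) 1)
    (ζ : ℂ) (him : -b < ζ.im) (hre : ζ.re ≠ 0) :
    ∫ x in c..(1 : ℝ), ((a : ℂ) * Complex.I * ζ) / ((b : ℂ) - Complex.I * ζ * (x : ℂ))
      = (a : ℂ) * Complex.I * (Real.sign ζ.re : ℝ) *
          (((Real.arctan ((Complex.normSq ζ + b * ζ.im) / (b * |ζ.re|)) : ℝ) : ℂ) -
            ((Real.arctan ((Complex.normSq ζ * c + b * ζ.im) / (b * |ζ.re|)) : ℝ) : ℂ))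
        - ((a : ℂ) / 2) *
          ((Real.log ((Complex.normSq ζ + 2 * b * ζ.im + b ^ 2) /
            (Complex.normSq ζ * c ^ 2 + 2 * b * ζ.im * c + b ^ 2)) : ℝ) : ℂ) := by
  obtain ⟨hc0, hc1⟩ := hc
  set r := ζ.re with hr
  set m := ζ.im with hm
  set K := Complex.normSq ζ with hKdef
  have hK : K = r ^ 2 + m ^ 2 := by rw [hKdef, Complex.normSq_apply]; ring
  have hrabs : 0 < |r| := abs_pos.mpr hre
  have hKpos : 0 < K := by
    rw [hK]; have : 0 < r ^ 2 := by positivity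
    nlinarith [sq_nonneg m]
  have hbm : ∀ x ∈ Set.uIcc c 1, 0 < b + m * x := by
    intro x hx
    rw [Set.uIcc_of_le hc1.le] at hx
    obtain ⟨h1, h2⟩ := hx
    rcases le_or_gt 0 m with h | h
    · nlinarith
    · nlinarith
  have hN : ∀ x ∈ Set.uIcc c 1, 0 < K * x ^ 2 + 2 * b * m * x + b ^ 2 := by
    intro x hx
    have h1 := hbm x hx
    rw [hK]
    nlinarith [sq_nonneg (r * x), mul_pos h1 h1]
  have hden : ∀ x ∈ Set.uIcc c 1, ((b : ℂ) - Complex.I * ζ * (x : ℝ)) ≠ 0 := by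
    intro x hx h
    have h1 := congrArg Complex.re h
    simp [Complex.sub_re, Complex.mul_re, Complex.mul_im] at h1
    have := hbm x hx
    rw [← hm] at h1
    nlinarith
  have hderiv : ∀ x ∈ Set.uIcc c 1,
      HasDerivAt (fun x : ℝ =>
        ((-(a / 2) * Real.log (K * x ^ 2 + 2 * b * m * x + b ^ 2) : ℝ) : ℂ) +
        ((a * Real.sign r * Real.arctan ((K * x + b * m) / (b * |r|)) : ℝ) : ℂ) * Complex.I)
        (((a : ℂ) * Complex.I * ζ) / ((b : ℂ) - Complex.I * ζ * (x : ℝ))) x := by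
    intro x hx
    have hNx := hN x hx
    have hbmx := hbm x hx
    have hN' : HasDerivAt (fun x : ℝ => K * x ^ 2 + 2 * b * m * x + b ^ 2)
        (2 * K * x + 2 * b * m) x := by
      have h1 := ((hasDerivAt_pow 2 x).const_mul K).add
        (((hasDerivAt_id x).const_mul (2 * b * m)).add_const (b ^ 2))
      have h2 : ((fun y : ℝ => K * y ^ 2) + (fun y : ℝ => 2 * b * m * id y + b ^ 2))
          = fun y : ℝ => K * y ^ 2 + 2 * b * m * y + b ^ 2 := by
        funext y; simp only [Pi.add_apply, id_eq]; ring
      rw [h2] at h1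
      exact h1.congr_deriv (by push_cast; ring)
    have hg : HasDerivAt (fun x : ℝ => -(a / 2) * Real.log (K * x ^ 2 + 2 * b * m * x + b ^ 2))
        (-(a / 2) * ((2 * K * x + 2 * b * m) / (K * x ^ 2 + 2 * b * m * x + b ^ 2))) x :=
      (hN'.log hNx.ne').const_mul (-(a / 2))
    have hu : HasDerivAt (fun x : ℝ => (K * x + b * m) / (b * |r|)) (K / (b * |r|)) x := by
      have h1 := (((hasDerivAt_id x).const_mul K).add_const (b * m)).div_const (b * |r|)
      have h2 : (fun y : ℝ => (K * id y + b * m) / (b * |r|))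
          = fun y : ℝ => (K * y + b * m) / (b * |r|) := by
        funext y; simp only [id_eq]
      rw [h2] at h1
      exact h1.congr_deriv (by ring)
    have hat : HasDerivAt (fun x : ℝ => Real.arctan ((K * x + b * m) / (b * |r|)))
        (1 / (1 + ((K * x + b * m) / (b * |r|)) ^ 2) * (K / (b * |r|))) x := hu.arctan
    have hh := hat.const_mul (a * Real.sign r)
    have h1u : 1 + ((K * x + b * m) / (b * |r|)) ^ 2
        = K * (K * x ^ 2 + 2 * b * m * x + b ^ 2) / (b ^ 2 * r ^ 2) := by
      rw [div_pow, show (b * |r|) ^ 2 = b ^ 2 * r ^ 2 by rw [mul_pow, _root_.sq_abs]]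
      rw [hK]
      field_simp
      ring
    have hval : a * Real.sign r * (1 / (1 + ((K * x + b * m) / (b * |r|)) ^ 2) * (K / (b * |r|)))
        = a * b * r / (K * x ^ 2 + 2 * b * m * x + b ^ 2) := by
      rw [h1u]
      rcases hre.lt_or_gt with hneg | hpos
      · rw [Real.sign_of_neg hneg, abs_of_neg hneg]
        field_simp
      · rw [Real.sign_of_pos hpos, abs_of_pos hpos]
        field_simp
    rw [hval] at hh
    have hF := (hg.ofReal_comp).add ((hh.ofReal_comp).mul_const Complex.I)
    refine hF.congr_deriv ?_
    rw [eq_div_iff (hden x hx)]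
    have hζ : ζ = (r : ℂ) + (m : ℂ) * Complex.I := (Complex.re_add_im ζ).symm
    have hKC : (K : ℂ) = (r : ℂ) ^ 2 + (m : ℂ) ^ 2 := by exact_mod_cast hK
    have hNC : ((K : ℂ) * (x : ℂ) ^ 2 + 2 * (b : ℂ) * (m : ℂ) * (x : ℂ) + (b : ℂ) ^ 2) ≠ 0 := by
      exact_mod_cast hNx.ne'
    push_cast
    rw [hζ]
    field_simp
    rw [hKC]
    have hNC2 : ((r : ℂ) ^ 2 + (m : ℂ) ^ 2) * (x : ℂ) ^ 2 + 2 * (b : ℂ) * (m : ℂ) * (x : ℂ) + (b : ℂ) ^ 2 ≠ 0 := by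
      rw [← hKC]; exact hNC
    field_simp
    have h3 : Complex.I ^ 3 = -Complex.I := by
      rw [show (3 : ℕ) = 2 + 1 from rfl, pow_succ, Complex.I_sq]; ring
    ring_nf
    simp only [h3, Complex.I_sq]
    have hNC3 : (r : ℂ) ^ 2 * (x : ℂ) ^ 2 + (m : ℂ) * (x : ℂ) * (b : ℂ) * 2 + (m : ℂ) ^ 2 * (x : ℂ) ^ 2 + (b : ℂ) ^ 2 ≠ 0 := by
      rw [show (r : ℂ) ^ 2 * (x : ℂ) ^ 2 + (m : ℂ) * (x : ℂ) * (b : ℂ) * 2 + (m : ℂ) ^ 2 * (x : ℂ) ^ 2 + (b : ℂ) ^ 2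
        = ((r : ℂ) ^ 2 + (m : ℂ) ^ 2) * (x : ℂ) ^ 2 + 2 * (b : ℂ) * (m : ℂ) * (x : ℂ) + (b : ℂ) ^ 2 by ring]
      exact hNC2
    linear_combination ((a : ℂ) * (r : ℂ) * Complex.I - (a : ℂ) * (m : ℂ)) * (mul_inv_cancel₀ hNC3)
  have hcont : IntervalIntegrable
      (fun x : ℝ => ((a : ℂ) * Complex.I * ζ) / ((b : ℂ) - Complex.I * ζ * (x : ℝ)))
      volume c 1 := by
    apply ContinuousOn.intervalIntegrable
    apply ContinuousOn.div continuousOn_const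
    · fun_prop
    · exact hden
  rw [intervalIntegral.integral_eq_sub_of_hasDerivAt hderiv hcont]
  have hN1 := hN 1 (by rw [Set.uIcc_of_le hc1.le]; exact ⟨hc1.le, le_refl 1⟩)
  have hNc := hN c (by rw [Set.uIcc_of_le hc1.le]; exact ⟨le_refl c, hc1.le⟩)
  rw [Real.log_div (by simpa using hN1.ne') hNc.ne']
  push_cast
  ring_nf
end

section
/- Let a > 0, 0 < α < b, c ∈ (0,1), v ∈ ℝ, and set ζ := v − iα. Then | exp( ∫_c^1 (a i ζ)/(b − iζx) dx ) | = ( (v² + (b−α)²) / (v²c² + (b−αc)²) )^{−a/2}. In particular, the function v ↦ | exp( ∫_c^1 (a i ζ)/(b − iζx) dx ) | is bounded on ℝ. -/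
open MeasureTheory Real Complex Set intervalIntegral

/-- Modulus of the non-trivial factor of the gamma-OU conditional characteristic
function: for `ζ = v − iα` with `0 < α < b`,
`|exp(∫_c^1 (aiζ)/(b−iζx) dx)| = ((v²+(b−α)²)/(v²c²+(b−αc)²))^{−a/2}`;
in particular this function of `v` is bounded on `ℝ`. -/
theorem stmt9 (a b α : ℝ) (ha : 0 < a) (hα : 0 < α) (hαb : α < b)
    (c : ℝ) (hc : c ∈ Set.Ioo (0 : ℝ) 1) :
    (∀ v : ℝ,
      ‖Complex.exp (∫ x in c..(1 : ℝ),
          ((a : ℂ) * Complex.I * ((v : ℂ) - Complex.I * α)) /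
            ((b : ℂ) - Complex.I * ((v : ℂ) - Complex.I * α) * (x : ℂ)))‖
        = ((v ^ 2 + (b - α) ^ 2) / (v ^ 2 * c ^ 2 + (b - α * c) ^ 2)) ^ (-(a / 2))) ∧
    ∃ M : ℝ, ∀ v : ℝ,
      ‖Complex.exp (∫ x in c..(1 : ℝ),
          ((a : ℂ) * Complex.I * ((v : ℂ) - Complex.I * α)) /
            ((b : ℂ) - Complex.I * ((v : ℂ) - Complex.I * α) * (x : ℂ)))‖ ≤ M := by
  obtain ⟨hc0, hc1⟩ := hc
  have key : ∀ v : ℝ,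
      ‖Complex.exp (∫ x in c..(1 : ℝ),
          ((a : ℂ) * Complex.I * ((v : ℂ) - Complex.I * α)) /
            ((b : ℂ) - Complex.I * ((v : ℂ) - Complex.I * α) * (x : ℂ)))‖
        = ((v ^ 2 + (b - α) ^ 2) / (v ^ 2 * c ^ 2 + (b - α * c) ^ 2)) ^ (-(a / 2)) := by
    intro v
    set ζ : ℂ := (v : ℂ) - Complex.I * α with hζ
    have huIcc : Set.uIcc c (1:ℝ) = Set.Icc c 1 := Set.uIcc_of_le hc1.le
    have hrecalc : ∀ x : ℝ, ((b:ℂ) - Complex.I * ζ * x).re = b - α * x := by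
      intro x; simp [hζ, Complex.sub_re, Complex.mul_re]
    have himcalc : ∀ x : ℝ, ((b:ℂ) - Complex.I * ζ * x).im = -(v * x) := by
      intro x; simp [hζ, Complex.sub_im, Complex.mul_im]
    have hre : ∀ x : ℝ, x ∈ Set.uIcc c (1:ℝ) → 0 < ((b:ℂ) - Complex.I * ζ * x).re := by
      intro x hx
      rw [huIcc] at hx
      rw [hrecalc]
      nlinarith [hx.1, hx.2, hα.le]
    have hne : ∀ x : ℝ, x ∈ Set.uIcc c (1:ℝ) → ((b:ℂ) - Complex.I * ζ * x) ≠ 0 := by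
      intro x hx h0
      have := hre x hx
      rw [h0] at this; simp at this
    have hderiv : ∀ x ∈ Set.uIcc c (1:ℝ),
        HasDerivAt (fun x : ℝ => -(a:ℂ) * Complex.log ((b:ℂ) - Complex.I * ζ * x))
          (((a:ℂ) * Complex.I * ζ) / ((b:ℂ) - Complex.I * ζ * x)) x := by
      intro x hx
      have h1 : HasDerivAt (fun x : ℝ => (b:ℂ) - Complex.I * ζ * x)
          (-(Complex.I * ζ)) x := by
        have h0 : HasDerivAt (fun x : ℝ => (x:ℂ)) 1 x := Complex.ofRealCLM.hasDerivAt
        simpa using (h0.const_mul (Complex.I * ζ)).const_sub (b:ℂ)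
      have hslit : ((b:ℂ) - Complex.I * ζ * x) ∈ Complex.slitPlane :=
        Complex.mem_slitPlane_iff.2 (Or.inl (hre x hx))
      have h2 := (Complex.hasDerivAt_log hslit).comp x h1
      have h3 := h2.const_mul (-(a:ℂ))
      exact h3.congr_deriv (by ring)
    have hcont : ContinuousOn
        (fun x : ℝ => ((a:ℂ) * Complex.I * ζ) / ((b:ℂ) - Complex.I * ζ * x))
        (Set.uIcc c (1:ℝ)) := by
      apply ContinuousOn.div continuousOn_const
      · fun_prop
      · exact hne
    have hint : (∫ x in c..(1:ℝ),
          ((a:ℂ) * Complex.I * ζ) / ((b:ℂ) - Complex.I * ζ * x))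
        = -(a:ℂ) * Complex.log ((b:ℂ) - Complex.I * ζ * (1:ℝ))
          - -(a:ℂ) * Complex.log ((b:ℂ) - Complex.I * ζ * (c:ℝ)) :=
      intervalIntegral.integral_eq_sub_of_hasDerivAt hderiv hcont.intervalIntegrable
    rw [show (∫ x in c..(1:ℝ),
          ((a : ℂ) * Complex.I * ((v : ℂ) - Complex.I * α)) /
            ((b : ℂ) - Complex.I * ((v : ℂ) - Complex.I * α) * (x : ℂ)))
        = ∫ x in c..(1:ℝ), ((a:ℂ) * Complex.I * ζ) / ((b:ℂ) - Complex.I * ζ * x) from rfl,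
      hint, Complex.norm_exp]
    set z1 : ℂ := (b:ℂ) - Complex.I * ζ * ((1:ℝ):ℂ) with hz1
    set z2 : ℂ := (b:ℂ) - Complex.I * ζ * ((c:ℝ):ℂ) with hz2
    have hz1mem : (1:ℝ) ∈ Set.uIcc c (1:ℝ) := by rw [huIcc]; exact ⟨hc1.le, le_refl _⟩
    have hz2mem : c ∈ Set.uIcc c (1:ℝ) := by rw [huIcc]; exact ⟨le_refl _, hc1.le⟩
    have habs1 : 0 < ‖z1‖ := by
      exact norm_pos_iff.mpr (hne 1 hz1mem)
    have habs2 : 0 < ‖z2‖ := by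
      exact norm_pos_iff.mpr (hne c hz2mem)
    have hRe : (-(a:ℂ) * Complex.log z1 - -(a:ℂ) * Complex.log z2).re
        = -a * (Real.log (‖z1‖) - Real.log (‖z2‖)) := by
      simp [Complex.sub_re, Complex.mul_re, Complex.log_re]
      ring
    rw [hRe]
    have hsq1 : (‖z1‖) ^ 2 = v ^ 2 + (b - α) ^ 2 := by
      rw [Complex.sq_norm, Complex.normSq_apply, hrecalc, himcalc]
      ring
    have hsq2 : (‖z2‖) ^ 2 = v ^ 2 * c ^ 2 + (b - α * c) ^ 2 := by
      rw [Complex.sq_norm, Complex.normSq_apply, hrecalc, himcalc]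
      ring
    have hpos : 0 < (v ^ 2 + (b - α) ^ 2) / (v ^ 2 * c ^ 2 + (b - α * c) ^ 2) := by
      apply div_pos
      · rw [← hsq1]; positivity
      · rw [← hsq2]; positivity
    rw [Real.rpow_def_of_pos hpos, ← hsq1, ← hsq2, Real.log_div (by positivity) (by positivity),
      Real.log_pow, Real.log_pow]
    push_cast
    ring_nf
  refine ⟨key, ((b - α) ^ 2 / (b - α * c) ^ 2) ^ (-(a / 2)), fun v => ?_⟩
  rw [key v]
  have hb1 : 0 < b - α := by linarith
  have hb2 : 0 < b - α * c := by nlinarith [hc0, hc1]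
  apply Real.rpow_le_rpow_of_nonpos
  · positivity
  · rw [div_le_div_iff₀ (by positivity) (by positivity)]
    have h1 : (b - α) * c ≤ b - α * c := by nlinarith
    have h2 : ((b - α) * c) ^ 2 ≤ (b - α * c) ^ 2 := by
      nlinarith [mul_nonneg hb1.le hc0.le]
    nlinarith [mul_le_mul_of_nonneg_left h2 (sq_nonneg v)]
  · linarith
end

section
/- Let a > 0, 0 < α < b, c ∈ (0,1). Then the function v ↦ (1/(1+|v|)) · ( (v² + (b−α)²) / (v²c² + (b−αc)²) )^{−a/2} is not integrable on ℝ, i.e. ∫_ℝ (1/(1+|v|)) · ( (v² + (b−α)²) / (v²c² + (b−αc)²) )^{−a/2} dv = ∞. -/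
/-!
Since `0 < b - α < b - αc` and `c < 1`, the ratio `(v² + (b-α)²) / (v²c² + (b-αc)²)` is bounded
above by `c⁻²` uniformly in `v`. The exponent `-a/2` is negative, so the integrand dominates a
positive multiple of `1 / (1 + |v|)`, whose integral over `ℝ` diverges like that of `x⁻¹`.
-/

open MeasureTheory Real Set

theorem not_integrable_one_div_one_add_abs : ¬ Integrable (fun v : ℝ => 1 / (1 + |v|)) := by
  intro h
  apply not_integrableOn_Ioi_inv (a := 1)
  refine (h.const_mul 2).integrableOn.mono' measurable_inv.aestronglyMeasurable ?_
  filter_upwards [ae_restrict_mem measurableSet_Ioi] with x (hx : 1 < x)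
  have hx0 : 0 < x := by linarith
  rw [norm_inv, norm_of_nonneg hx0.le, abs_of_pos hx0, inv_eq_one_div,
    mul_one_div, div_le_div_iff₀ hx0 (by linarith)]
  linarith

theorem lintegral_ofReal_one_div_one_add_abs :
    ∫⁻ v : ℝ, ENNReal.ofReal (1 / (1 + |v|)) = ⊤ := by
  by_contra h
  refine not_integrable_one_div_one_add_abs ((lintegral_ofReal_ne_top_iff_integrable ?_ ?_).1 h)
  · exact (continuous_const.div (continuous_const.add continuous_abs)
      fun v => (by positivity : (0 : ℝ) < 1 + |v|).ne').aestronglyMeasurable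
  · exact Filter.Eventually.of_forall fun v => by positivity

theorem lintegral_ofReal_eq_top_of_const_mul_le {α : Type*} [MeasurableSpace α] {μ : Measure α}
    {f g : α → ℝ} {ε : ℝ} (hε : 0 < ε) (hg : ∫⁻ x, ENNReal.ofReal (g x) ∂μ = ⊤)
    (hgf : ∀ x, ε * g x ≤ f x) : ∫⁻ x, ENNReal.ofReal (f x) ∂μ = ⊤ := by
  refine eq_top_mono (lintegral_mono fun x => ENNReal.ofReal_le_ofReal (hgf x)) ?_
  simp_rw [ENNReal.ofReal_mul hε.le]
  rw [lintegral_const_mul' _ _ ENNReal.ofReal_ne_top, hg,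
    ENNReal.mul_top (ENNReal.ofReal_pos.2 hε).ne']

theorem sq_add_sq_div_le_inv_sq {A B c : ℝ} (hc0 : 0 < c) (hc1 : c ≤ 1) (hAB : A ^ 2 ≤ B ^ 2)
    (v : ℝ) : (v ^ 2 + A ^ 2) / (v ^ 2 * c ^ 2 + B ^ 2) ≤ (c ^ 2)⁻¹ := by
  rcases (by positivity : 0 ≤ v ^ 2 * c ^ 2 + B ^ 2).eq_or_lt with hD | hD
  · rw [← hD, div_zero]
    positivity
  rw [div_le_iff₀ hD, inv_mul_eq_div, le_div_iff₀ (by positivity)]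
  have hc2 : c ^ 2 ≤ 1 := pow_le_one₀ hc0.le hc1
  nlinarith [sq_nonneg v, sq_nonneg A]

theorem inv_sq_rpow_le_div_rpow {A B c s : ℝ} (hA : A ≠ 0) (hAB : A ^ 2 ≤ B ^ 2) (hc0 : 0 < c)
    (hc1 : c ≤ 1) (hs : s ≤ 0) (v : ℝ) :
    ((c ^ 2)⁻¹) ^ s ≤ ((v ^ 2 + A ^ 2) / (v ^ 2 * c ^ 2 + B ^ 2)) ^ s := by
  have hB2 : 0 < B ^ 2 := (sq_pos_of_ne_zero hA).trans_le hAB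
  exact rpow_le_rpow_of_nonpos (by positivity) (sq_add_sq_div_le_inv_sq hc0 hc1 hAB v) hs

/-- Failure of the integrability condition in the gamma-OU case:
`∫_ℝ (1/(1+|v|)) ((v²+(b−α)²)/(v²c²+(b−αc)²))^{−a/2} dv = ∞`. -/
theorem stmt10 (a b α : ℝ) (ha : 0 < a) (hα : 0 < α) (hαb : α < b)
    (c : ℝ) (hc : c ∈ Set.Ioo (0 : ℝ) 1) :
    ∫⁻ v : ℝ, ENNReal.ofReal
        ((1 / (1 + |v|)) *
          ((v ^ 2 + (b - α) ^ 2) / (v ^ 2 * c ^ 2 + (b - α * c) ^ 2)) ^ (-(a / 2)))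
      = ⊤ := by
  obtain ⟨hc0, hc1⟩ := hc
  have hbα : 0 < b - α := sub_pos.2 hαb
  have hAB : (b - α) ^ 2 ≤ (b - α * c) ^ 2 := pow_le_pow_left₀ hbα.le (by nlinarith) 2
  refine lintegral_ofReal_eq_top_of_const_mul_le (ε := ((c ^ 2)⁻¹) ^ (-(a / 2))) (by positivity)
    lintegral_ofReal_one_div_one_add_abs fun v => ?_
  rw [mul_comm]
  exact mul_le_mul_of_nonneg_left
    (inv_sq_rpow_le_div_rpow hbα.ne' hAB hc0 hc1.le (by linarith) v) (by positivity)
end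

section
/- Let a > 0, b > 0, 0 < α < b²/2 and c ∈ (0,1). For v ∈ ℝ set ζ_v := v − iα. Then the function v ↦ (1/(1+|v|)) · | exp( ∫_c^1 (a i ζ_v) (b² − 2iζ_v x)^{−1/2} dx ) |, where the complex square root is the principal branch, is integrable on ℝ. -/
open MeasureTheory Real Complex Set intervalIntegral

-- re of principal square root
lemma re_cpow_half (z : ℂ) (hz : z ≠ 0) :
    (z ^ ((1:ℂ)/2)).re = Real.sqrt ((‖z‖ + z.re)/2) := by
  set s := z ^ ((1:ℂ)/2) with hs
  have hs2 : s * s = z := by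
    rw [hs, ← Complex.cpow_add _ _ hz]
    norm_num
  have habs : s.re^2 + s.im^2 = ‖z‖ := by
    have : Complex.normSq s ^ 2 = Complex.normSq z := by
      rw [← hs2, Complex.normSq_mul]; ring
    have h1 : Complex.normSq s = ‖z‖ := by
      have h2 : ‖z‖ = Real.sqrt (Complex.normSq z) := Complex.norm_def z
      rw [h2, ← this]
      rw [Real.sqrt_sq (Complex.normSq_nonneg s)]
    simpa [Complex.normSq_apply, pow_two] using h1
  have hre : s.re^2 - s.im^2 = z.re := by
    have := congrArg Complex.re hs2
    simpa [Complex.mul_re, pow_two] using this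
  have hsre : s.re ^ 2 = (‖z‖ + z.re)/2 := by linarith
  have hnn : 0 ≤ s.re := by
    rw [hs, Complex.cpow_def_of_ne_zero hz, Complex.exp_re]
    have him : (Complex.log z * ((1:ℂ)/2)).im = z.arg / 2 := by
      simp [Complex.mul_im, Complex.log_im, Complex.log_re]
      ring
    rw [him]
    have h1 := Complex.neg_pi_lt_arg z
    have h2 := Complex.arg_le_pi z
    have hpi := Real.pi_pos
    have : (0:ℝ) ≤ Real.cos (z.arg / 2) :=
      Real.cos_nonneg_of_neg_pi_div_two_le_of_le (by linarith) (by linarith)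
    positivity
  rw [← hsre, Real.sqrt_sq hnn]

open MeasureTheory Real Set intervalIntegral

-- re/im of W
lemma W_re (b α v t : ℝ) :
    ((b:ℂ)^2 - 2*Complex.I*((v:ℂ) - Complex.I*α)*(t:ℂ)).re = b^2 - 2*α*t := by
  simp [Complex.mul_re, Complex.mul_im, ← Complex.ofReal_pow]

lemma W_im (b α v t : ℝ) :
    ((b:ℂ)^2 - 2*Complex.I*((v:ℂ) - Complex.I*α)*(t:ℂ)).im = -(2*v*t) := by
  simp [Complex.mul_re, Complex.mul_im, ← Complex.ofReal_pow]

-- FTC computation of the integral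
lemma key_integral (a b α v c : ℝ) (hα : 0 < α) (hαb : α < b ^ 2 / 2)
    (hc0 : 0 < c) (hc1 : c < 1) :
    (∫ x in c..(1 : ℝ),
        ((a : ℂ) * Complex.I * ((v : ℂ) - Complex.I * α)) *
          ((b : ℂ) ^ 2 - 2 * Complex.I * ((v : ℂ) - Complex.I * α) * (x : ℂ))
            ^ (-(1 : ℂ) / 2))
    = (-(a:ℂ) * (((b:ℂ)^2 - 2*Complex.I*((v:ℂ) - Complex.I*α)*((1:ℝ):ℂ)) ^ ((1:ℂ)/2)))
      - (-(a:ℂ) * (((b:ℂ)^2 - 2*Complex.I*((v:ℂ) - Complex.I*α)*((c:ℝ):ℂ)) ^ ((1:ℂ)/2))) := by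
  set ζ : ℂ := (v : ℂ) - Complex.I * α with hζ
  have hslit : ∀ x : ℝ, x ∈ Set.uIcc c 1 →
      ((b:ℂ)^2 - 2*Complex.I*ζ*(x:ℂ)) ∈ Complex.slitPlane := by
    intro x hx
    rw [Set.uIcc_of_le hc1.le] at hx
    refine Complex.mem_slitPlane_iff.mpr (Or.inl ?_)
    rw [W_re]
    nlinarith [hx.1, hx.2]
  have hbase : Continuous fun x : ℝ => (b:ℂ)^2 - 2*Complex.I*ζ*(x:ℂ) := by
    fun_prop
  refine intervalIntegral.integral_eq_sub_of_hasDerivAt (f := fun x : ℝ =>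
      -(a:ℂ) * (((b:ℂ)^2 - 2*Complex.I*ζ*(x:ℂ)) ^ ((1:ℂ)/2))) ?_ ?_
  · intro x hx
    have hlin : HasDerivAt (fun z : ℂ => (b:ℂ)^2 - 2*Complex.I*ζ*z) (-(2*Complex.I*ζ)) (x:ℂ) := by
      simpa using ((hasDerivAt_id ((x:ℝ):ℂ)).const_mul (2*Complex.I*ζ)).const_sub ((b:ℂ)^2)
    have hcp := (hlin.cpow_const (c := (1:ℂ)/2) (hslit x hx)).const_mul (-(a:ℂ))
    have hR := hcp.comp_ofReal
    refine hR.congr_deriv ?_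
    have he : ((1:ℂ)/2 - 1) = -(1:ℂ)/2 := by norm_num
    rw [he]
    ring
  · apply ContinuousOn.intervalIntegrable
    exact continuousOn_const.mul ((hbase.continuousOn.cpow continuousOn_const) hslit)

set_option maxHeartbeats 1000000 in
/-- Integrability condition in the IG-OU case: with `ζ_v = v − iα`, `0 < α < b²/2`,
the function `v ↦ (1/(1+|v|)) |exp(∫_c^1 (aiζ_v)(b²−2iζ_v x)^{−1/2} dx)|`
is integrable on `ℝ`. -/
theorem stmt11 (a b α : ℝ) (ha : 0 < a) (hb : 0 < b) (hα : 0 < α)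
    (hαb : α < b ^ 2 / 2) (c : ℝ) (hc : c ∈ Set.Ioo (0 : ℝ) 1) :
    MeasureTheory.Integrable (fun v : ℝ =>
      (1 / (1 + |v|)) *
        ‖Complex.exp (∫ x in c..(1 : ℝ),
          ((a : ℂ) * Complex.I * ((v : ℂ) - Complex.I * α)) *
            ((b : ℂ) ^ 2 - 2 * Complex.I * ((v : ℂ) - Complex.I * α) * (x : ℂ))
              ^ (-(1 : ℂ) / 2))‖) := by
  obtain ⟨hc0, hc1⟩ := hc
  set W : ℝ → ℝ → ℂ := fun v t => (b:ℂ)^2 - 2*Complex.I*((v:ℂ) - Complex.I*α)*(t:ℂ) with hW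
  -- non-vanishing at endpoints
  have hWre : ∀ v t : ℝ, 0 < t → t ≤ 1 → 0 < (W v t).re := by
    intro v t ht0 ht1
    rw [hW]; rw [W_re]; nlinarith
  have hne : ∀ v t : ℝ, 0 < t → t ≤ 1 → W v t ≠ 0 := by
    intro v t ht0 ht1 h
    have := hWre v t ht0 ht1
    rw [h] at this; simp at this
  -- the closed form
  set g : ℝ → ℝ := fun v => (1 / (1 + |v|)) *
      ‖Complex.exp ((-(a:ℂ) * ((W v 1) ^ ((1:ℂ)/2)))
        - (-(a:ℂ) * ((W v c) ^ ((1:ℂ)/2))))‖ with hg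
  have hcongr : ∀ v : ℝ, (1 / (1 + |v|)) *
        ‖Complex.exp (∫ x in c..(1 : ℝ),
          ((a : ℂ) * Complex.I * ((v : ℂ) - Complex.I * α)) *
            ((b : ℂ) ^ 2 - 2 * Complex.I * ((v : ℂ) - Complex.I * α) * (x : ℂ))
              ^ (-(1 : ℂ) / 2))‖ = g v := by
    intro v
    rw [key_integral a b α v c hα hαb hc0 hc1, hg, hW]
  -- bound on the real part of the exponent
  set k : ℝ := a * (1 - Real.sqrt c) with hk
  have hsc1 : Real.sqrt c < 1 := by
    rw [show (1:ℝ) = Real.sqrt 1 by simp]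
    exact Real.sqrt_lt_sqrt hc0.le hc1
  have hkpos : 0 < k := by
    have := hsc1; rw [hk]; nlinarith
  have hRe : ∀ v : ℝ, ((-(a:ℂ) * ((W v 1) ^ ((1:ℂ)/2)))
        - (-(a:ℂ) * ((W v c) ^ ((1:ℂ)/2)))).re ≤ a*b - k * Real.sqrt |v| := by
    intro v
    have hre1 : ((-(a:ℂ) * ((W v 1) ^ ((1:ℂ)/2)))
        - (-(a:ℂ) * ((W v c) ^ ((1:ℂ)/2)))).re
        = a * ((W v c) ^ ((1:ℂ)/2)).re - a * ((W v 1) ^ ((1:ℂ)/2)).re := by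
      simp [Complex.sub_re, Complex.mul_re]
      ring
    rw [hre1]
    -- upper bound at c
    have hScle : ((W v c) ^ ((1:ℂ)/2)).re ≤ b + Real.sqrt c * Real.sqrt |v| := by
      rw [re_cpow_half _ (hne v c hc0 hc1.le)]
      have habs : ‖W v c‖ ≤ b^2 + 2*c*(|v| + α) := by
        rw [hW]
        calc ‖(b:ℂ)^2 - 2*Complex.I*((v:ℂ) - Complex.I*α)*(c:ℂ)‖
            ≤ ‖(b:ℂ)^2‖ + ‖2*Complex.I*((v:ℂ) - Complex.I*α)*(c:ℂ)‖ := by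
              exact norm_sub_le _ _
          _ ≤ b^2 + 2*c*(|v| + α) := by
              have h1 : ‖(b:ℂ)^2‖ = b^2 := by
                rw [← Complex.ofReal_pow, Complex.norm_real, Real.norm_eq_abs]
                exact abs_of_nonneg (by positivity)
              have h2 : ‖(v:ℂ) - Complex.I*α‖ ≤ |v| + α := by
                calc ‖(v:ℂ) - Complex.I*α‖
                    ≤ ‖(v:ℂ)‖ + ‖Complex.I*(α:ℂ)‖ := by
                      exact norm_sub_le _ _
                  _ = |v| + α := by
                      simp [Complex.norm_real, _root_.abs_of_nonneg hα.le]
              have h3 : ‖2*Complex.I*((v:ℂ) - Complex.I*α)*(c:ℂ)‖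
                  = 2 * ‖(v:ℂ) - Complex.I*α‖ * c := by
                simp [map_mul, Complex.norm_real, _root_.abs_of_nonneg hc0.le]
              rw [h1, h3]
              nlinarith
      have hrec : (W v c).re = b^2 - 2*α*c := by rw [hW]; exact W_re b α v c
      have h4 : (‖W v c‖ + (W v c).re)/2 ≤ b^2 + c*|v| := by
        rw [hrec]; nlinarith
      have h5 : b^2 + c*|v| ≤ (b + Real.sqrt c * Real.sqrt |v|)^2 := by
        have e1 : Real.sqrt c ^ 2 = c := Real.sq_sqrt hc0.le
        have e2 : Real.sqrt |v| ^ 2 = |v| := Real.sq_sqrt (abs_nonneg v)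
        have e3 : (Real.sqrt c * Real.sqrt |v|)^2 = c * |v| := by
          rw [mul_pow, e1, e2]
        nlinarith [e3, mul_nonneg (Real.sqrt_nonneg c) (Real.sqrt_nonneg |v|), hb.le]
      calc Real.sqrt ((‖W v c‖ + (W v c).re)/2)
          ≤ Real.sqrt ((b + Real.sqrt c * Real.sqrt |v|)^2) :=
            Real.sqrt_le_sqrt (le_trans h4 h5)
        _ = b + Real.sqrt c * Real.sqrt |v| := Real.sqrt_sq (by positivity)
    -- lower bound at 1
    have hS1ge : Real.sqrt |v| ≤ ((W v 1) ^ ((1:ℂ)/2)).re := by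
      rw [re_cpow_half _ (hne v 1 one_pos le_rfl)]
      apply Real.sqrt_le_sqrt
      have him : (W v 1).im = -(2*v) := by
        rw [hW]
        simpa using W_im b α v 1
      have habsim := Complex.abs_im_le_norm (W v 1)
      rw [him] at habsim
      have : 2*|v| ≤ ‖W v 1‖ := by
        calc 2*|v| = |(-(2*v))| := by rw [abs_neg, abs_mul]; simp
          _ ≤ _ := habsim
      have hre1' := hWre v 1 one_pos le_rfl
      linarith
    nlinarith [Real.sqrt_nonneg |v|]
  -- continuity of g
  have hWcont : ∀ t : ℝ, Continuous fun v : ℝ => W v t := by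
    intro t; rw [hW]; fun_prop
  have hgcont : Continuous g := by
    rw [hg]
    have h1 : Continuous fun v : ℝ => 1 / (1 + |v|) := by
      apply Continuous.div continuous_const (by continuity)
      intro v; positivity
    have hsq : ∀ t : ℝ, 0 < t → t ≤ 1 →
        Continuous fun v : ℝ => (W v t) ^ ((1:ℂ)/2) := by
      intro t ht0 ht1
      exact (hWcont t).cpow continuous_const
        (fun v => Complex.mem_slitPlane_iff.mpr (Or.inl (hWre v t ht0 ht1)))
    refine h1.mul (continuous_norm.comp (Complex.continuous_exp.comp ?_))
    exact (continuous_const.mul (hsq 1 one_pos le_rfl)).sub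
      (continuous_const.mul (hsq c hc0 hc1.le))
  -- bound g
  have hgb : ∀ v : ℝ, g v ≤ Real.exp (a*b - k*Real.sqrt |v|) := by
    intro v
    have h0 : g v = (1/(1+|v|)) * Real.exp ((-(a:ℂ) * ((W v 1) ^ ((1:ℂ)/2)))
        - (-(a:ℂ) * ((W v c) ^ ((1:ℂ)/2)))).re := by
      simp only [hg, Complex.norm_exp]
    have h1 : (1:ℝ)/(1+|v|) ≤ 1 := by
      rw [div_le_one (by positivity)]
      simp [abs_nonneg]
    have h2 : Real.exp ((-(a:ℂ) * ((W v 1) ^ ((1:ℂ)/2)))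
        - (-(a:ℂ) * ((W v c) ^ ((1:ℂ)/2)))).re ≤ Real.exp (a*b - k*Real.sqrt |v|) :=
      Real.exp_le_exp.mpr (hRe v)
    rw [h0]
    have h3 : (0:ℝ) ≤ 1/(1+|v|) := by positivity
    nlinarith [Real.exp_pos ((-(a:ℂ) * ((W v 1) ^ ((1:ℂ)/2)))
        - (-(a:ℂ) * ((W v c) ^ ((1:ℂ)/2)))).re]
  -- majorant
  set M : ℝ := Real.exp (a*b) * (1 + 256/k^4) with hM
  have hmaj : ∀ v : ℝ, Real.exp (a*b - k*Real.sqrt |v|) ≤ M * (1+v^2)⁻¹ := by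
    intro v
    set t := Real.sqrt |v| with ht
    have ht0 : 0 ≤ t := Real.sqrt_nonneg _
    have ht2 : t^2 = |v| := Real.sq_sqrt (abs_nonneg v)
    have ht4 : t^4 = v^2 := by
      have h5 : t^4 = (t^2)^2 := by ring
      rw [h5, ht2, _root_.sq_abs]
    have hexp1 : Real.exp (-(k*t)) ≤ 1 := by
      calc Real.exp (-(k*t)) ≤ Real.exp 0 :=
            Real.exp_le_exp.mpr (by nlinarith)
        _ = 1 := Real.exp_zero
    have hexp2 : t^4 * Real.exp (-(k*t)) ≤ 256/k^4 := by
      have h4 : (k*t/4 + 1)^4 ≤ Real.exp (k*t) := by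
        have h5 : Real.exp (k*t) = Real.exp (k*t/4)^4 := by
          rw [← Real.exp_nat_mul]
          norm_num
          ring
        rw [h5]
        exact pow_le_pow_left₀ (by positivity) (Real.add_one_le_exp (k*t/4)) 4
      have h6 : (k*t)^4 ≤ 256 * Real.exp (k*t) := by
        have h9 : (k*t/4)^4 ≤ (k*t/4 + 1)^4 :=
          pow_le_pow_left₀ (by positivity) (by linarith) 4
        have h10 : (k*t/4)^4 = (k*t)^4/256 := by ring
        rw [h10] at h9
        linarith
      have hek := Real.exp_pos (k*t)
      rw [Real.exp_neg, ← div_eq_mul_inv, div_le_div_iff₀ hek (pow_pos hkpos 4)]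
      calc t^4 * k^4 = (k*t)^4 := by ring
        _ ≤ 256 * Real.exp (k*t) := h6
    have hv : (0:ℝ) < 1 + v^2 := by positivity
    rw [← div_eq_mul_inv, le_div_iff₀ hv]
    have hsplit : Real.exp (a*b - k*t) = Real.exp (a*b) * Real.exp (-(k*t)) := by
      rw [← Real.exp_add]; ring_nf
    rw [hsplit]
    have h7 : Real.exp (-(k*t)) * (1+v^2) ≤ 1 + 256/k^4 := by
      rw [ht4] at hexp2
      nlinarith [hexp1, hexp2, (Real.exp_pos (-(k*t))).le]
    have h8 := (Real.exp_pos (a*b)).le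
    rw [hM]
    nlinarith [h7, h8]
  have hgint : MeasureTheory.Integrable g := by
    refine MeasureTheory.Integrable.mono' (integrable_inv_one_add_sq.const_mul M)
      hgcont.aestronglyMeasurable (Filter.Eventually.of_forall fun v => ?_)
    have hgnn : 0 ≤ g v := by rw [hg]; positivity
    rw [Real.norm_eq_abs, _root_.abs_of_nonneg hgnn]
    exact le_trans (hgb v) (hmaj v)
  exact hgint.congr (Filter.Eventually.of_forall fun v => (hcongr v).symm)
end

section
/- Let b > 0, 0 < α < b²/2 and c ∈ (0,1). Then there exist constants C > 0 and v₀ > 0 such that for all x ∈ [c,1] and all v ∈ ℝ with |v| ≥ v₀, setting A := b² − 2αx and B := 2vx, one has −|v| · √( (−A + √(A²+B²)) / (A²+B²) ) + α · √( (A + √(A²+B²)) / (A²+B²) ) < C ( −√|v| + 1/√|v| ). -/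
open Real Set

set_option maxHeartbeats 1000000

/-- The key estimate in the IG-OU case (Example 3.4): there are constants
`C > 0`, `v₀ > 0` such that for all `x ∈ [c,1]` and `|v| ≥ v₀`, with
`A = b² − 2αx`, `B = 2vx`,
`−|v|√((−A+√(A²+B²))/(A²+B²)) + α√((A+√(A²+B²))/(A²+B²)) < C(−√|v| + 1/√|v|)`. -/
theorem stmt12 (b α : ℝ) (hb : 0 < b) (hα : 0 < α) (hαb : α < b ^ 2 / 2)
    (c : ℝ) (hc : c ∈ Set.Ioo (0 : ℝ) 1) :
    ∃ C > (0 : ℝ), ∃ v₀ > (0 : ℝ), ∀ x ∈ Set.Icc c 1, ∀ v : ℝ, v₀ ≤ |v| →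
      -|v| * Real.sqrt
          ((-(b ^ 2 - 2 * α * x) +
              Real.sqrt ((b ^ 2 - 2 * α * x) ^ 2 + (2 * v * x) ^ 2)) /
            ((b ^ 2 - 2 * α * x) ^ 2 + (2 * v * x) ^ 2)) +
        α * Real.sqrt
          (((b ^ 2 - 2 * α * x) +
              Real.sqrt ((b ^ 2 - 2 * α * x) ^ 2 + (2 * v * x) ^ 2)) /
            ((b ^ 2 - 2 * α * x) ^ 2 + (2 * v * x) ^ 2))
      < C * (-Real.sqrt |v| + 1 / Real.sqrt |v|) := by
  obtain ⟨hc0, hc1⟩ := hc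
  have hsc : 0 < Real.sqrt c := Real.sqrt_pos.mpr hc0
  set d : ℝ := α / Real.sqrt c with hd
  have hd0 : 0 < d := div_pos hα hsc
  refine ⟨1/6, by norm_num, b^2/c + 6*d + 1, by positivity, ?_⟩
  intro x hx v hv
  obtain ⟨hcx, hx1⟩ := hx
  have hx0 : 0 < x := lt_of_lt_of_le hc0 hcx
  set w := |v| with hwdef
  have hw1 : b^2/c + 6*d + 1 ≤ w := hv
  have hwpos : 0 < w := lt_of_lt_of_le (by positivity) hv
  set A := b ^ 2 - 2 * α * x with hA
  set B := 2 * v * x with hB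
  have hA0 : 0 < A := by nlinarith [mul_le_mul_of_nonneg_left hx1 hα.le]
  have hAb : A ≤ b^2 := by nlinarith [mul_pos hα hx0]
  set S := A ^ 2 + B ^ 2 with hS
  set R := Real.sqrt S with hR
  have hS0 : 0 < S := by positivity
  have hR0 : 0 < R := Real.sqrt_pos.mpr hS0
  have hRS : R^2 = S := Real.sq_sqrt hS0.le
  have hBw : |B| = 2*w*x := by
    rw [hB, hwdef, abs_mul, abs_mul, abs_of_nonneg hx0.le]
    norm_num
  have hbw : b^2 ≤ c * w := by
    have h1 : b^2/c ≤ w := by linarith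
    calc b^2 = c*(b^2/c) := by field_simp
      _ ≤ c*w := by nlinarith [mul_le_mul_of_nonneg_left h1 hc0.le]
  have hRlow : 2*c*w ≤ R := by
    have h1 : |B| ≤ R := by
      rw [hR]
      have h2 := Real.sqrt_le_sqrt (show B^2 ≤ S by nlinarith)
      rwa [Real.sqrt_sq_eq_abs] at h2
    have : 2*c*w ≤ |B| := by rw [hBw]; nlinarith [mul_le_mul_of_nonneg_left hcx hwpos.le]
    linarith
  have hRhigh : R ≤ 3*w := by
    have h1 : R ≤ A + |B| := by
      rw [hR]
      have h2 : S ≤ (A + |B|)^2 := by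
        have h3 : |B|^2 = B^2 := sq_abs B
        nlinarith [mul_nonneg hA0.le (abs_nonneg B)]
      calc Real.sqrt S ≤ Real.sqrt ((A+|B|)^2) := Real.sqrt_le_sqrt h2
        _ = A + |B| := Real.sqrt_sq (by positivity)
    have h4 : b^2 ≤ w := by nlinarith [mul_pos (sub_pos.mpr hc1) hwpos]
    rw [hBw] at h1
    nlinarith [mul_le_mul_of_nonneg_left hx1 hwpos.le]
  have hAR : 2*A ≤ R := by linarith
  have hsw : 0 < Real.sqrt w := Real.sqrt_pos.mpr hwpos
  have hsw2 : (Real.sqrt w)^2 = w := Real.sq_sqrt hwpos.le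
  have hss : Real.sqrt w * Real.sqrt w = w := Real.mul_self_sqrt hwpos.le
  have sqrt9 : Real.sqrt 9 = 3 := by
    rw [show (9:ℝ) = 3^2 by norm_num, Real.sqrt_sq (by norm_num : (0:ℝ) ≤ 3)]
  -- bound for the first sqrt from below
  have hb1 : 1/(3*Real.sqrt w) ≤ Real.sqrt ((-A + R)/S) := by
    have key : 1/(9*w) ≤ (-A + R)/S := by
      rw [div_le_div_iff₀ (by positivity) hS0, ← hRS]
      nlinarith [mul_nonneg (sub_nonneg.mpr hRhigh) hR0.le,
        mul_nonneg (sub_nonneg.mpr hAR) hwpos.le]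
    have h5 := Real.sqrt_le_sqrt key
    have h6 : Real.sqrt (1/(9*w)) = 1/(3*Real.sqrt w) := by
      rw [one_div, Real.sqrt_inv, Real.sqrt_mul (by norm_num : (0:ℝ) ≤ 9), sqrt9, one_div]
    rwa [h6] at h5
  -- bound for the second sqrt from above
  have hb2 : Real.sqrt ((A + R)/S) ≤ 1/(Real.sqrt c * Real.sqrt w) := by
    have key : (A + R)/S ≤ 1/(c*w) := by
      rw [div_le_div_iff₀ hS0 (by positivity), ← hRS]
      nlinarith [mul_nonneg (sub_nonneg.mpr hAR) (sub_nonneg.mpr hRlow),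
        mul_nonneg (sub_nonneg.mpr hAR) hR0.le,
        mul_nonneg (sub_nonneg.mpr hRlow) hR0.le]
    have h5 := Real.sqrt_le_sqrt key
    have h6 : Real.sqrt (1/(c*w)) = 1/(Real.sqrt c * Real.sqrt w) := by
      rw [one_div, Real.sqrt_inv, Real.sqrt_mul hc0.le, one_div]
    calc Real.sqrt ((A + R)/S) ≤ Real.sqrt (1/(c*w)) := h5
      _ = 1/(Real.sqrt c * Real.sqrt w) := h6
  -- combine
  have t1 : -w * Real.sqrt ((-A + R)/S) ≤ -(Real.sqrt w)/3 := by
    have h7 : w * (1/(3*Real.sqrt w)) ≤ w * Real.sqrt ((-A + R)/S) :=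
      mul_le_mul_of_nonneg_left hb1 hwpos.le
    have h8 : w * (1/(3*Real.sqrt w)) = Real.sqrt w / 3 := by
      rw [mul_one_div]
      field_simp
      linear_combination (-1 : ℝ) * hss
    nlinarith
  have t2 : α * Real.sqrt ((A + R)/S) ≤ d / Real.sqrt w := by
    have h7 : α * Real.sqrt ((A + R)/S) ≤ α * (1/(Real.sqrt c * Real.sqrt w)) :=
      mul_le_mul_of_nonneg_left hb2 hα.le
    have h8 : α * (1/(Real.sqrt c * Real.sqrt w)) = d / Real.sqrt w := by
      rw [hd]; field_simp
    linarith
  have final : -(Real.sqrt w)/3 + d / Real.sqrt w < 1/6 * (-Real.sqrt w + 1/Real.sqrt w) := by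
    have hid : d / Real.sqrt w - (1/6) * (1/Real.sqrt w) = (d - 1/6)/Real.sqrt w := by
      ring
    have hineq : (d - 1/6)/Real.sqrt w < Real.sqrt w / 6 := by
      rw [div_lt_div_iff₀ hsw (by norm_num : (0:ℝ) < 6)]
      have hbc : 0 < b^2/c := div_pos (pow_pos hb 2) hc0
      linarith [hss]
    linarith [hid, hineq]
  linarith
end

section
/- Let a, b, λ > 0, ρ ≤ 0 and z ∈ ℂ with Re(z) < 0. Then ∫₀^∞ (e^{zx} − 1)(e^{ρx} − 1) · (λa/(2√(2π))) x^{−3/2} (1 + b²x) e^{−b²x/2} dx = λ a ( (z+ρ)(b² − 2(z+ρ))^{−1/2} − z(b² − 2z)^{−1/2} − ρ(b² − 2ρ)^{−1/2} ), where the complex square roots are principal branches. -/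
open MeasureTheory Real Complex Set

section IGOUAux
open Filter

lemma mul_cpow_ofReal_pos' {r : ℝ} (hr : 0 < r) {u : ℂ} (hu : u ≠ 0) (s : ℂ) :
    ((r : ℂ) * u) ^ s = (r : ℂ) ^ s * u ^ s := by
  have hr0 : (r : ℂ) ≠ 0 := by exact_mod_cast hr.ne'
  rw [Complex.cpow_def_of_ne_zero (mul_ne_zero hr0 hu),
    Complex.cpow_def_of_ne_zero hr0, Complex.cpow_def_of_ne_zero hu,
    Complex.log_ofReal_mul hr hu, Complex.ofReal_log hr.le, add_mul, Complex.exp_add]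

lemma hasDerivAt_cexp_neg (p : ℂ) (x : ℝ) :
    HasDerivAt (fun t : ℝ => Complex.exp (-(p * t))) (-p * Complex.exp (-(p * x))) x := by
  have h := (((hasDerivAt_id x).ofReal_comp).const_mul (-p)).cexp
  simp only [id_eq, Complex.ofReal_one, mul_one, neg_mul] at h
  simpa [mul_comm] using h

lemma hasDerivAt_rpowC (r : ℝ) {x : ℝ} (hx : 0 < x) :
    HasDerivAt (fun t : ℝ => ((t ^ r : ℝ) : ℂ)) ((r * x ^ (r - 1) : ℝ) : ℂ) x :=
  (Real.hasDerivAt_rpow_const (Or.inl hx.ne')).ofReal_comp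

lemma real_int_aux {s c : ℝ} (hs : -1 < s) (hc : 0 < c) :
    IntegrableOn (fun x : ℝ => x ^ s * Real.exp (-(c * x))) (Ioi 0) := by
  have h := integrableOn_rpow_mul_exp_neg_mul_rpow hs zero_lt_one hc
  refine h.congr_fun (fun x hx => ?_) measurableSet_Ioi
  simp only [Real.rpow_one]; ring_nf

lemma contOn_rpowC_cexp (s : ℝ) (p : ℂ) :
    ContinuousOn (fun x : ℝ => ((x ^ s : ℝ) : ℂ) * Complex.exp (-(p * x))) (Ioi 0) := by
  apply ContinuousOn.mul
  · exact Complex.continuous_ofReal.comp_continuousOn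
      (fun x hx => (Real.continuousAt_rpow_const x s (Or.inl (ne_of_gt hx))).continuousWithinAt)
  · exact (Complex.continuous_exp.comp
      ((continuous_const.mul Complex.continuous_ofReal).neg)).continuousOn

lemma norm_rpowC_cexp {s : ℝ} {p : ℂ} {x : ℝ} (hx : 0 < x) :
    ‖((x ^ s : ℝ) : ℂ) * Complex.exp (-(p * x))‖ = x ^ s * Real.exp (-(p.re * x)) := by
  rw [norm_mul, Complex.norm_exp]
  simp only [Complex.norm_real, Real.norm_eq_abs]
  rw [_root_.abs_of_nonneg (Real.rpow_nonneg hx.le s)]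
  congr 1
  simp

lemma integrableOn_rpowC_cexp {p : ℂ} (hp : 0 < p.re) {s : ℝ} (hs : -1 < s) :
    IntegrableOn (fun x : ℝ => ((x ^ s : ℝ) : ℂ) * Complex.exp (-(p * x))) (Ioi 0) := by
  refine Integrable.mono' (real_int_aux hs hp)
    ((contOn_rpowC_cexp s p).aestronglyMeasurable measurableSet_Ioi) ?_
  filter_upwards [ae_restrict_mem measurableSet_Ioi] with x hx
  rw [norm_rpowC_cexp hx]

lemma cpow_neg_half_eq {p : ℂ} (hp : 0 < p.re) :
    (p⁻¹) ^ ((1:ℂ)/2) = p ^ (-(1:ℂ)/2) := by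
  have harg : p.arg ≠ π := by
    intro h
    rw [Complex.arg_eq_pi_iff] at h
    linarith [h.1]
  rw [Complex.inv_cpow p _ harg, ← Complex.cpow_neg]
  norm_num

lemma integral_rpow_half_cexp {p : ℂ} (hp : 0 < p.re) :
    ∫ x in Ioi (0:ℝ), ((x ^ (-(1:ℝ)/2) : ℝ) : ℂ) * Complex.exp (-(p * x))
      = (Real.sqrt π : ℂ) * p ^ (-(1:ℂ)/2) := by
  have hp0 : p ≠ 0 := fun h => by simp [h] at hp
  have sub := integral_comp_rpow_Ioi
    (fun y : ℝ => ((y ^ (-(1:ℝ)/2) : ℝ) : ℂ) * Complex.exp (-(p * y))) (two_ne_zero (α := ℝ))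
  rw [← sub]
  have hcongr : ∀ x ∈ Ioi (0:ℝ),
      (|(2:ℝ)| * x ^ ((2:ℝ) - 1)) • ((((x ^ (2:ℝ)) ^ (-(1:ℝ)/2) : ℝ) : ℂ)
          * Complex.exp (-(p * ((x ^ (2:ℝ) : ℝ) : ℂ))))
        = 2 * Complex.exp (-p * (x:ℂ) ^ 2) := by
    intro x hx
    rw [mem_Ioi] at hx
    have h1 : (x ^ (2:ℝ)) ^ (-(1:ℝ)/2) = x⁻¹ := by
      rw [← Real.rpow_mul hx.le]
      norm_num
      rw [← Real.rpow_neg_one]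
    have h2 : ((x ^ (2:ℝ) : ℝ) : ℂ) = (x:ℂ) ^ 2 := by
      rw [show x ^ (2:ℝ) = x ^ (2:ℕ) from Real.rpow_natCast x 2]
      push_cast; ring
    have hx0 : (x:ℂ) ≠ 0 := by exact_mod_cast hx.ne'
    rw [h1, h2, show |(2:ℝ)| = 2 from abs_of_pos (by norm_num),
      show (2:ℝ) - 1 = 1 by norm_num, Real.rpow_one, real_smul, neg_mul]
    push_cast
    field_simp
  rw [setIntegral_congr_fun measurableSet_Ioi hcongr, MeasureTheory.integral_const_mul,
    integral_gaussian_complex_Ioi hp]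
  have hpi : ((π:ℝ):ℂ) / p = ((π:ℝ):ℂ) * p⁻¹ := div_eq_mul_inv _ _
  rw [hpi, mul_cpow_ofReal_pos' Real.pi_pos (inv_ne_zero hp0),
    cpow_neg_half_eq hp]
  have : ((π:ℝ):ℂ) ^ ((1:ℂ)/2) = (Real.sqrt π : ℂ) := by
    rw [Real.sqrt_eq_rpow, Complex.ofReal_cpow Real.pi_pos.le]
    norm_num
  rw [this]; ring

lemma hasDerivAt_cexp_aff (A B : ℂ) (t : ℝ) :
    HasDerivAt (fun s : ℝ => Complex.exp (A * s + B)) (A * Complex.exp (A * t + B)) t := by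
  have h := ((((hasDerivAt_id t).ofReal_comp).const_mul A).add_const B).cexp
  simp only [id_eq, Complex.ofReal_one, mul_one] at h
  simpa [mul_comm] using h

lemma cexp_sub_bound {p q : ℂ} {c : ℝ} (hp : c ≤ p.re) (hq : c ≤ q.re) {x : ℝ} (hx : 0 ≤ x) :
    ‖Complex.exp (-(p * x)) - Complex.exp (-(q * x))‖
      ≤ ‖p - q‖ * x * Real.exp (-(c * x)) := by
  set A : ℂ := -(p - q) * x with hA
  set B : ℂ := -(q * x) with hB
  set g : ℝ → ℂ := fun t => Complex.exp (A * t + B) with hg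
  have h10 : g 1 - g 0 = Complex.exp (-(p * x)) - Complex.exp (-(q * x)) := by
    simp only [hg, Complex.ofReal_one, Complex.ofReal_zero, mul_one, mul_zero, zero_add]
    congr 2
    ring
  have hderiv : ∀ t ∈ Icc (0:ℝ) 1, HasDerivWithinAt g (A * Complex.exp (A * t + B)) (Icc 0 1) t :=
    fun t _ => (hasDerivAt_cexp_aff A B t).hasDerivWithinAt
  have hbound : ∀ t ∈ Ico (0:ℝ) 1,
      ‖A * Complex.exp (A * t + B)‖ ≤ ‖p - q‖ * x * Real.exp (-(c * x)) := by
    intro t ht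
    rw [norm_mul, Complex.norm_exp]
    have h1 : ‖A‖ = ‖p - q‖ * x := by
      rw [hA, norm_mul, norm_neg, Complex.norm_real, Real.norm_eq_abs, _root_.abs_of_nonneg hx]
    have h2 : (A * t + B).re ≤ -(c * x) := by
      simp only [hA, hB, Complex.add_re, Complex.mul_re, Complex.neg_re, Complex.sub_re,
        Complex.ofReal_re, Complex.ofReal_im, Complex.mul_im, Complex.sub_im, Complex.neg_im,
        mul_zero, zero_mul, sub_zero, add_zero]
      have ht0 := ht.1
      have ht1 := ht.2.le
      nlinarith [mul_nonneg (mul_nonneg hx ht.1) (sub_nonneg.mpr hp), mul_nonneg (mul_nonneg hx (sub_nonneg.mpr ht.2.le)) (sub_nonneg.mpr hq)]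
    rw [h1]
    exact mul_le_mul_of_nonneg_left (Real.exp_le_exp.mpr h2)
      (mul_nonneg (norm_nonneg _) hx)
  have := norm_image_sub_le_of_norm_deriv_le_segment' hderiv hbound 1 (right_mem_Icc.mpr zero_le_one)
  rw [h10] at this
  simpa using this

lemma contOn_hfun (p q : ℂ) (s : ℝ) :
    ContinuousOn (fun x : ℝ => ((x ^ s : ℝ) : ℂ)
      * (Complex.exp (-(p * x)) - Complex.exp (-(q * x)))) (Ioi 0) := by
  have h1 := contOn_rpowC_cexp s p
  have h2 := contOn_rpowC_cexp s q
  have := h1.sub h2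
  refine this.congr fun x hx => ?_
  rw [Pi.sub_apply]
  ring

lemma integrableOn_h {p q : ℂ} (hp : 0 < p.re) (hq : 0 < q.re) :
    IntegrableOn (fun x : ℝ => ((x ^ (-(3:ℝ)/2) : ℝ) : ℂ)
      * (Complex.exp (-(p * x)) - Complex.exp (-(q * x)))) (Ioi 0) := by
  set c := min p.re q.re with hc
  have hc0 : 0 < c := lt_min hp hq
  refine Integrable.mono'
    (((real_int_aux (by norm_num : (-1:ℝ) < -(1:ℝ)/2) hc0).const_mul ‖p - q‖))
    ((contOn_hfun p q _).aestronglyMeasurable measurableSet_Ioi) ?_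
  filter_upwards [ae_restrict_mem measurableSet_Ioi] with x hx
  rw [mem_Ioi] at hx
  rw [norm_mul, Complex.norm_real, Real.norm_eq_abs,
    _root_.abs_of_nonneg (Real.rpow_nonneg hx.le _)]
  calc x ^ (-(3:ℝ)/2) * ‖Complex.exp (-(p * x)) - Complex.exp (-(q * x))‖
      ≤ x ^ (-(3:ℝ)/2) * (‖p - q‖ * x * Real.exp (-(c * x))) := by
        exact mul_le_mul_of_nonneg_left
          (cexp_sub_bound (min_le_left _ _) (min_le_right _ _) hx.le)
          (Real.rpow_nonneg hx.le _)
    _ = ‖p - q‖ * (x ^ (-(1:ℝ)/2) * Real.exp (-(c * x))) := by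
        have hxx : x ^ (-(3:ℝ)/2) * x = x ^ (-(1:ℝ)/2) := by
          rw [← Real.rpow_add_one hx.ne']; norm_num
        calc x ^ (-(3:ℝ)/2) * (‖p - q‖ * x * Real.exp (-(c * x)))
            = ‖p - q‖ * (x ^ (-(3:ℝ)/2) * x * Real.exp (-(c * x))) := by ring
          _ = ‖p - q‖ * (x ^ (-(1:ℝ)/2) * Real.exp (-(c * x))) := by rw [hxx]

lemma integral_h {p q : ℂ} (hp : 0 < p.re) (hq : 0 < q.re) :
    ∫ x in Ioi (0:ℝ), ((x ^ (-(3:ℝ)/2) : ℝ) : ℂ)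
        * (Complex.exp (-(p * x)) - Complex.exp (-(q * x)))
      = 2 * (Real.sqrt π : ℂ) * (q ^ ((1:ℂ)/2) - p ^ ((1:ℂ)/2)) := by
  have hp0 : p ≠ 0 := fun h => by simp [h] at hp
  have hq0 : q ≠ 0 := fun h => by simp [h] at hq
  set c := min p.re q.re with hc
  have hc0 : 0 < c := lt_min hp hq
  set Ep : ℝ → ℂ := fun x => Complex.exp (-(p * x)) with hEp
  set Eq' : ℝ → ℂ := fun x => Complex.exp (-(q * x)) with hEq
  set f : ℝ → ℂ := fun x => (-2 : ℂ) * ((x ^ (-(1:ℝ)/2) : ℝ) : ℂ) * (Ep x - Eq' x) with hf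
  set h : ℝ → ℂ := fun x => ((x ^ (-(3:ℝ)/2) : ℝ) : ℂ) * (Ep x - Eq' x) with hh
  set k : ℝ → ℂ := fun x => (-2 : ℂ) * ((x ^ (-(1:ℝ)/2) : ℝ) : ℂ)
      * (-p * Ep x - -q * Eq' x) with hk
  have hf0 : f 0 = 0 := by
    simp [hf, Real.zero_rpow (by norm_num : (-(1:ℝ)/2) ≠ 0)]
  -- derivative
  have hderiv : ∀ x ∈ Ioi (0:ℝ), HasDerivAt f (h x + k x) x := by
    intro x hx
    rw [mem_Ioi] at hx
    have h1 : HasDerivAt (fun t : ℝ => (-2 : ℂ) * ((t ^ (-(1:ℝ)/2) : ℝ) : ℂ))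
        ((-2 : ℂ) * ((-(1:ℝ)/2 * x ^ (-(1:ℝ)/2 - 1) : ℝ) : ℂ)) x :=
      (hasDerivAt_rpowC (-(1:ℝ)/2) hx).const_mul (-2 : ℂ)
    have h2 : HasDerivAt (fun t : ℝ => Ep t - Eq' t) (-p * Ep x - -q * Eq' x) x :=
      (hasDerivAt_cexp_neg p x).sub (hasDerivAt_cexp_neg q x)
    have := h1.mul h2
    refine this.congr_deriv ?_
    have e1 : ((-(1:ℝ)/2 * x ^ (-(1:ℝ)/2 - 1) : ℝ) : ℂ)
        = (-(1:ℝ)/2 : ℝ) * ((x ^ (-(3:ℝ)/2) : ℝ) : ℂ) := by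
      push_cast
      norm_num
    rw [e1]
    push_cast
    simp only [hh, hk]
    ring
  -- tendsto at 0
  have hcont : ContinuousWithinAt f (Ici 0) 0 := by
    rw [ContinuousWithinAt, hf0]
    apply squeeze_zero_norm' (a := fun x => 2 * ‖p - q‖ * x ^ ((1:ℝ)/2))
    · filter_upwards [self_mem_nhdsWithin] with x (hx : x ∈ Ici (0:ℝ))
      rw [mem_Ici] at hx
      rcases eq_or_lt_of_le hx with rfl | hx0
      · simp [hf, Real.zero_rpow (by norm_num : (-(1:ℝ)/2) ≠ 0),
          Real.zero_rpow (by norm_num : ((1:ℝ)/2) ≠ 0)]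
      · have hb := cexp_sub_bound (c := c) (min_le_left _ _) (min_le_right _ _) hx0.le
        have hexp : Real.exp (-(c * x)) ≤ 1 := by
          rw [Real.exp_le_one_iff]
          nlinarith [hc0.le, hx0.le]
        calc ‖f x‖ = 2 * x ^ (-(1:ℝ)/2) * ‖Ep x - Eq' x‖ := by
              rw [hf]
              simp only [norm_mul, Complex.norm_real, Real.norm_eq_abs]
              rw [_root_.abs_of_nonneg (Real.rpow_nonneg hx0.le _)]
              simp [mul_assoc]
          _ ≤ 2 * x ^ (-(1:ℝ)/2) * (‖p - q‖ * x * Real.exp (-(c * x))) := by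
              apply mul_le_mul_of_nonneg_left hb
              positivity
          _ ≤ 2 * ‖p - q‖ * (x ^ (-(1:ℝ)/2) * x) := by
              nlinarith [Real.rpow_nonneg hx0.le (-(1:ℝ)/2), norm_nonneg (p - q),
                Real.exp_pos (-(c * x)), mul_nonneg (Real.rpow_nonneg hx0.le (-(1:ℝ)/2)) hx0.le,
                mul_le_mul_of_nonneg_left hexp
                  (mul_nonneg (mul_nonneg (norm_nonneg (p-q)) (Real.rpow_nonneg hx0.le (-(1:ℝ)/2))) hx0.le)]
          _ = 2 * ‖p - q‖ * x ^ ((1:ℝ)/2) := by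
              rw [← Real.rpow_add_one hx0.ne']
              norm_num
    · have : Tendsto (fun x : ℝ => x ^ ((1:ℝ)/2)) (nhdsWithin 0 (Ici 0)) (nhds 0) := by
        have := (Real.continuousAt_rpow_const 0 ((1:ℝ)/2) (Or.inr (by norm_num))).tendsto
        rw [Real.zero_rpow (by norm_num : ((1:ℝ)/2) ≠ 0)] at this
        exact this.mono_left nhdsWithin_le_nhds
      simpa using (this.const_mul (2 * ‖p - q‖))
  -- tendsto at top
  have htop : Tendsto f atTop (nhds 0) := by
    apply squeeze_zero_norm' (a := fun x => 2 * (Real.exp (-(p.re * x)) + Real.exp (-(q.re * x))))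
    · filter_upwards [eventually_ge_atTop (1:ℝ)] with x hx1
      have hx0 : (0:ℝ) < x := lt_of_lt_of_le zero_lt_one hx1
      have hr1 : x ^ (-(1:ℝ)/2) ≤ 1 :=
        Real.rpow_le_one_of_one_le_of_nonpos hx1 (by norm_num)
      have hEpn : ‖Ep x‖ = Real.exp (-(p.re * x)) := by
        rw [hEp]
        simp only [Complex.norm_exp]
        congr 1
        simp
      have hEqn : ‖Eq' x‖ = Real.exp (-(q.re * x)) := by
        rw [hEq]
        simp only [Complex.norm_exp]
        congr 1
        simp
      calc ‖f x‖ = 2 * x ^ (-(1:ℝ)/2) * ‖Ep x - Eq' x‖ := by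
            rw [hf]
            simp only [norm_mul, Complex.norm_real, Real.norm_eq_abs]
            rw [_root_.abs_of_nonneg (Real.rpow_nonneg hx0.le _)]
            simp [mul_assoc]
        _ ≤ 2 * 1 * (‖Ep x‖ + ‖Eq' x‖) := by
            apply mul_le_mul (by nlinarith [Real.rpow_nonneg hx0.le (-(1:ℝ)/2)])
              (norm_sub_le _ _) (norm_nonneg _) (by norm_num)
        _ = 2 * (Real.exp (-(p.re * x)) + Real.exp (-(q.re * x))) := by
            rw [hEpn, hEqn]; ring
    · have hexp : ∀ c : ℝ, 0 < c → Tendsto (fun x : ℝ => Real.exp (-(c * x))) atTop (nhds 0) := by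
        intro c hc
        have h1 : Tendsto (fun x : ℝ => c * x) atTop atTop :=
          Tendsto.const_mul_atTop hc tendsto_id
        have := Real.tendsto_exp_neg_atTop_nhds_zero.comp h1
        exact this
      have := ((hexp p.re hp).add (hexp q.re hq)).const_mul 2
      simpa using this
  -- integrability
  have hint_h := integrableOn_h hp hq
  have hint_k : IntegrableOn k (Ioi 0) := by
    have h1 := (integrableOn_rpowC_cexp hp (by norm_num : (-1:ℝ) < -(1:ℝ)/2)).const_mul (2 * p)
    have h2 := (integrableOn_rpowC_cexp hq (by norm_num : (-1:ℝ) < -(1:ℝ)/2)).const_mul (-2 * q)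
    have h12 : IntegrableOn (fun x : ℝ => (2 * p) * (((x ^ (-(1:ℝ)/2) : ℝ) : ℂ) * Complex.exp (-(p * x)))
        + (-2 * q) * (((x ^ (-(1:ℝ)/2) : ℝ) : ℂ) * Complex.exp (-(q * x)))) (Ioi 0) := h1.add h2
    refine h12.congr_fun (fun x hx => ?_) measurableSet_Ioi
    simp only [hk, hEp, hEq]
    ring
  have hint : IntegrableOn (fun x => h x + k x) (Ioi 0) := hint_h.add hint_k
  have key := integral_Ioi_of_hasDerivAt_of_tendsto hcont hderiv hint htop
  rw [hf0, sub_zero] at key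
  rw [MeasureTheory.integral_add hint_h hint_k] at key
  -- compute ∫ k
  have hkval : ∫ x in Ioi (0:ℝ), k x
      = 2 * (Real.sqrt π : ℂ) * (p ^ ((1:ℂ)/2) - q ^ ((1:ℂ)/2)) := by
    have e : ∀ x : ℝ, k x = (2 * p) * (((x ^ (-(1:ℝ)/2) : ℝ) : ℂ) * Ep x)
        + (-2 * q) * (((x ^ (-(1:ℝ)/2) : ℝ) : ℂ) * Eq' x) := by
      intro x; simp only [hk]; ring
    rw [show (fun x : ℝ => k x) = _ from funext e]
    rw [MeasureTheory.integral_add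
      ((integrableOn_rpowC_cexp hp (by norm_num)).const_mul (2 * p))
      ((integrableOn_rpowC_cexp hq (by norm_num)).const_mul (-2 * q)),
      MeasureTheory.integral_const_mul, MeasureTheory.integral_const_mul,
      integral_rpow_half_cexp hp, integral_rpow_half_cexp hq]
    have ep : p * p ^ (-(1:ℂ)/2) = p ^ ((1:ℂ)/2) := by
      rw [show ((1:ℂ)/2) = 1 + (-(1:ℂ)/2) by norm_num, Complex.cpow_add _ _ hp0,
        Complex.cpow_one]
    have eq2 : q * q ^ (-(1:ℂ)/2) = q ^ ((1:ℂ)/2) := by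
      rw [show ((1:ℂ)/2) = 1 + (-(1:ℂ)/2) by norm_num, Complex.cpow_add _ _ hq0,
        Complex.cpow_one]
    rw [show (2 * p) * ((Real.sqrt π : ℂ) * p ^ (-(1:ℂ)/2))
        = 2 * (Real.sqrt π : ℂ) * (p * p ^ (-(1:ℂ)/2)) by ring, ep]
    rw [show (-2 * q) * ((Real.sqrt π : ℂ) * q ^ (-(1:ℂ)/2))
        = -(2 * (Real.sqrt π : ℂ)) * (q * q ^ (-(1:ℂ)/2)) by ring, eq2]
    ring
  have : ∫ x in Ioi (0:ℝ), h x = -(∫ x in Ioi (0:ℝ), k x) := by linear_combination key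
  rw [hh] at this
  rw [this, hkval]
  ring

lemma psi {b : ℝ} (hb : 0 < b) {w : ℂ} (hw : w.re ≤ 0) :
    IntegrableOn (fun x : ℝ => (Complex.exp (w * x) - 1) *
      ((x ^ (-(3:ℝ)/2) * (1 + b ^ 2 * x) * Real.exp (-b ^ 2 * x / 2) : ℝ) : ℂ)) (Ioi 0) ∧
    ∫ x in Ioi (0:ℝ), (Complex.exp (w * x) - 1) *
      ((x ^ (-(3:ℝ)/2) * (1 + b ^ 2 * x) * Real.exp (-b ^ 2 * x / 2) : ℝ) : ℂ)
      = (Real.sqrt (2*π) : ℂ) * (2 * w) * ((b:ℂ) ^ 2 - 2 * w) ^ (-(1:ℂ)/2) := by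
  have hb2 : (0:ℝ) < b ^ 2 := by positivity
  set q : ℂ := ((b ^ 2 / 2 : ℝ) : ℂ) with hqdef
  set p : ℂ := q - w with hpdef
  have hq : 0 < q.re := by
    simp only [hqdef, Complex.ofReal_re]
    nlinarith
  have hp : 0 < p.re := by
    simp only [hpdef, Complex.sub_re]
    have : 0 < q.re := hq
    linarith
  set u : ℂ := (b:ℂ) ^ 2 - 2 * w with hudef
  have hu' : u = ((b ^ 2 : ℝ) : ℂ) - 2 * w := by rw [hudef]; push_cast; ring
  have hure : 0 < u.re := by
    rw [hu']
    simp only [Complex.sub_re, Complex.mul_re, Complex.ofReal_re, Complex.ofReal_im,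
      Complex.re_ofNat, Complex.im_ofNat, mul_zero, zero_mul, sub_zero]
    nlinarith
  have hu0 : u ≠ 0 := fun h => by rw [h] at hure; simp at hure
  -- pointwise decomposition
  have hpt : ∀ x ∈ Ioi (0:ℝ),
      (Complex.exp (w * x) - 1) *
        ((x ^ (-(3:ℝ)/2) * (1 + b ^ 2 * x) * Real.exp (-b ^ 2 * x / 2) : ℝ) : ℂ)
      = ((x ^ (-(3:ℝ)/2) : ℝ) : ℂ) * (Complex.exp (-(p * x)) - Complex.exp (-(q * x)))
        + ((b ^ 2 : ℝ) : ℂ) * (((x ^ (-(1:ℝ)/2) : ℝ) : ℂ) * Complex.exp (-(p * x)))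
        - ((b ^ 2 : ℝ) : ℂ) * (((x ^ (-(1:ℝ)/2) : ℝ) : ℂ) * Complex.exp (-(q * x))) := by
    intro x hx
    rw [mem_Ioi] at hx
    have e2 : ((Real.exp (-b ^ 2 * x / 2) : ℝ) : ℂ) = Complex.exp (-(q * x)) := by
      rw [Complex.ofReal_exp]
      congr 1
      rw [hqdef]
      push_cast
      ring
    have e1 : Complex.exp (w * x) * Complex.exp (-(q * x)) = Complex.exp (-(p * x)) := by
      rw [← Complex.exp_add]
      congr 1
      rw [hpdef]
      ring
    have hxx : x ^ (-(3:ℝ)/2) * x = x ^ (-(1:ℝ)/2) := by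
      rw [← Real.rpow_add_one hx.ne']; norm_num
    have e3 : ((x ^ (-(3:ℝ)/2) * (1 + b ^ 2 * x) : ℝ) : ℂ)
        = ((x ^ (-(3:ℝ)/2) : ℝ) : ℂ) + ((b ^ 2 : ℝ) : ℂ) * ((x ^ (-(1:ℝ)/2) : ℝ) : ℂ) := by
      push_cast [← hxx]
      ring
    calc (Complex.exp (w * x) - 1) *
        ((x ^ (-(3:ℝ)/2) * (1 + b ^ 2 * x) * Real.exp (-b ^ 2 * x / 2) : ℝ) : ℂ)
        = (Complex.exp (w * x) - 1) *
          (((x ^ (-(3:ℝ)/2) * (1 + b ^ 2 * x) : ℝ) : ℂ) * Complex.exp (-(q * x))) := by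
          rw [← e2]; push_cast; ring
      _ = _ := by
          rw [e3]
          linear_combination (((x ^ (-(3:ℝ)/2) : ℝ) : ℂ)
            + ((b ^ 2 : ℝ) : ℂ) * ((x ^ (-(1:ℝ)/2) : ℝ) : ℂ)) * e1
  -- integrability
  have i1 := integrableOn_h hp hq
  have i2 := (integrableOn_rpowC_cexp hp (by norm_num : (-1:ℝ) < -(1:ℝ)/2)).const_mul
    ((b ^ 2 : ℝ) : ℂ)
  have i3 := (integrableOn_rpowC_cexp hq (by norm_num : (-1:ℝ) < -(1:ℝ)/2)).const_mul
    ((b ^ 2 : ℝ) : ℂ)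
  have i12 : IntegrableOn (fun x : ℝ =>
      ((x ^ (-(3:ℝ)/2) : ℝ) : ℂ) * (Complex.exp (-(p * x)) - Complex.exp (-(q * x)))
        + ((b ^ 2 : ℝ) : ℂ) * (((x ^ (-(1:ℝ)/2) : ℝ) : ℂ) * Complex.exp (-(p * x)))) (Ioi 0) :=
    i1.add i2
  have i123 : IntegrableOn (fun x : ℝ =>
      ((x ^ (-(3:ℝ)/2) : ℝ) : ℂ) * (Complex.exp (-(p * x)) - Complex.exp (-(q * x)))
        + ((b ^ 2 : ℝ) : ℂ) * (((x ^ (-(1:ℝ)/2) : ℝ) : ℂ) * Complex.exp (-(p * x)))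
        - ((b ^ 2 : ℝ) : ℂ) * (((x ^ (-(1:ℝ)/2) : ℝ) : ℂ) * Complex.exp (-(q * x)))) (Ioi 0) :=
    i12.sub i3
  have hint : IntegrableOn (fun x : ℝ => (Complex.exp (w * x) - 1) *
      ((x ^ (-(3:ℝ)/2) * (1 + b ^ 2 * x) * Real.exp (-b ^ 2 * x / 2) : ℝ) : ℂ)) (Ioi 0) :=
    i123.congr_fun (fun x hx => (hpt x hx).symm) measurableSet_Ioi
  refine ⟨hint, ?_⟩
  rw [setIntegral_congr_fun measurableSet_Ioi hpt]
  rw [MeasureTheory.integral_sub i12 i3, MeasureTheory.integral_add i1 i2,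
    MeasureTheory.integral_const_mul, MeasureTheory.integral_const_mul,
    integral_h hp hq, integral_rpow_half_cexp hp, integral_rpow_half_cexp hq]
  -- now pure cpow algebra
  have hhalf : (0:ℝ) < 1/2 := by norm_num
  have hpu : p = ((1/2 : ℝ) : ℂ) * u := by
    rw [hpdef, hqdef, hudef]; push_cast; ring
  have hqu : q = ((1/2 : ℝ) : ℂ) * ((b:ℂ) ^ 2) := by
    rw [hqdef]; push_cast; ring
  have hb2C : ((b:ℂ) ^ 2) ≠ 0 := by
    intro h
    have : (b:ℂ) = 0 := by
      exact pow_eq_zero_iff (by norm_num) |>.mp h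
    exact hb.ne' (by exact_mod_cast this)
  have hcast_half : (((1/2 : ℝ)) : ℂ) ^ ((1:ℂ)/2) = (((1/2 : ℝ) ^ ((1/2 : ℝ)) : ℝ) : ℂ) := by
    rw [Complex.ofReal_cpow (by norm_num : (0:ℝ) ≤ 1/2)]
    norm_num
  have hcast_halfneg : (((1/2 : ℝ)) : ℂ) ^ (-(1:ℂ)/2) = (((1/2 : ℝ) ^ (-(1/2 : ℝ)) : ℝ) : ℂ) := by
    rw [Complex.ofReal_cpow (by norm_num : (0:ℝ) ≤ 1/2)]
    norm_num
  have hreal1 : (b ^ 2 : ℝ) ^ ((1/2 : ℝ)) = b := by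
    rw [← Real.sqrt_eq_rpow, Real.sqrt_sq hb.le]
  have hreal2 : (b ^ 2 : ℝ) ^ (-(1/2 : ℝ)) = b⁻¹ := by
    rw [Real.rpow_neg (by positivity), ← Real.sqrt_eq_rpow, Real.sqrt_sq hb.le]
  have hbsq_half : ((b:ℂ) ^ 2) ^ ((1:ℂ)/2) = (b:ℂ) := by
    rw [show (b:ℂ) ^ 2 = ((b ^ 2 : ℝ) : ℂ) by push_cast; ring,
      show ((1:ℂ)/2) = (((1/2 : ℝ)) : ℂ) by norm_num,
      ← Complex.ofReal_cpow (by positivity : (0:ℝ) ≤ b ^ 2), hreal1]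
  have hbsq_halfneg : ((b:ℂ) ^ 2) ^ (-(1:ℂ)/2) = ((b⁻¹ : ℝ) : ℂ) := by
    rw [show (-(1:ℂ)/2) = -((1:ℂ)/2) by norm_num, Complex.cpow_neg, hbsq_half,
      ← Complex.ofReal_inv]
  have hpow_p : p ^ ((1:ℂ)/2) = (((1/2 : ℝ) ^ ((1/2 : ℝ)) : ℝ) : ℂ) * u ^ ((1:ℂ)/2) := by
    rw [hpu, mul_cpow_ofReal_pos' hhalf hu0, hcast_half]
  have hpow_pneg : p ^ (-(1:ℂ)/2) = (((1/2 : ℝ) ^ (-(1/2 : ℝ)) : ℝ) : ℂ) * u ^ (-(1:ℂ)/2) := by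
    rw [hpu, mul_cpow_ofReal_pos' hhalf hu0, hcast_halfneg]
  have hpow_q : q ^ ((1:ℂ)/2) = (((1/2 : ℝ) ^ ((1/2 : ℝ)) : ℝ) : ℂ) * (b:ℂ) := by
    rw [hqu, mul_cpow_ofReal_pos' hhalf hb2C, hcast_half, hbsq_half]
  have hpow_qneg : q ^ (-(1:ℂ)/2) = (((1/2 : ℝ) ^ (-(1/2 : ℝ)) : ℝ) : ℂ) * ((b⁻¹ : ℝ) : ℂ) := by
    rw [hqu, mul_cpow_ofReal_pos' hhalf hb2C, hcast_halfneg, hbsq_halfneg]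
  have hS : u ^ ((1:ℂ)/2) = u * u ^ (-(1:ℂ)/2) := by
    rw [show ((1:ℂ)/2) = 1 + (-(1:ℂ)/2) by norm_num, Complex.cpow_add _ _ hu0,
      Complex.cpow_one]
  have h2pos : (0:ℝ) < Real.sqrt 2 := Real.sqrt_pos.mpr (by norm_num)
  have h22 : Real.sqrt 2 * Real.sqrt 2 = 2 := Real.mul_self_sqrt (by norm_num)
  have lr1 : 2 * Real.sqrt π * ((1/2 : ℝ) ^ ((1/2 : ℝ))) = Real.sqrt (2*π) := by
    rw [← Real.sqrt_eq_rpow, show (1/2 : ℝ) = 2⁻¹ by norm_num, Real.sqrt_inv,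
      Real.sqrt_mul (by norm_num : (0:ℝ) ≤ 2)]
    field_simp
    linear_combination -h22
  have lr2 : Real.sqrt π * ((1/2 : ℝ) ^ (-(1/2 : ℝ))) = Real.sqrt (2*π) := by
    rw [Real.rpow_neg (by norm_num : (0:ℝ) ≤ 1/2), ← Real.sqrt_eq_rpow,
      show (1/2 : ℝ) = 2⁻¹ by norm_num, Real.sqrt_inv, inv_inv,
      Real.sqrt_mul (by norm_num : (0:ℝ) ≤ 2)]
    ring
  have hbu : ((b ^ 2 : ℝ) : ℂ) - u = 2 * w := by
    rw [hudef]; push_cast; ring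
  rw [hpow_p, hpow_pneg, hpow_q, hpow_qneg, hS]
  have hbC0 : (b:ℂ) ≠ 0 := by exact_mod_cast hb.ne'
  -- final ring manipulation
  have expand : 2 * (Real.sqrt π : ℂ) * ((((1/2 : ℝ) ^ ((1/2 : ℝ)) : ℝ) : ℂ) * (b:ℂ)
        - (((1/2 : ℝ) ^ ((1/2 : ℝ)) : ℝ) : ℂ) * (u * u ^ (-(1:ℂ)/2)))
      + ((b ^ 2 : ℝ) : ℂ) * ((Real.sqrt π : ℂ) * ((((1/2 : ℝ) ^ (-(1/2 : ℝ)) : ℝ) : ℂ)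
          * u ^ (-(1:ℂ)/2)))
      - ((b ^ 2 : ℝ) : ℂ) * ((Real.sqrt π : ℂ) * ((((1/2 : ℝ) ^ (-(1/2 : ℝ)) : ℝ) : ℂ)
          * ((b⁻¹ : ℝ) : ℂ)))
      = (Real.sqrt (2*π) : ℂ) * (2 * w) * u ^ (-(1:ℂ)/2) := by
    have c1 : ((2 : ℂ) * (Real.sqrt π : ℂ) * (((1/2 : ℝ) ^ ((1/2 : ℝ)) : ℝ) : ℂ))
        = (Real.sqrt (2*π) : ℂ) := by
      rw [← lr1]; push_cast; ring
    have c2 : ((Real.sqrt π : ℂ) * (((1/2 : ℝ) ^ (-(1/2 : ℝ)) : ℝ) : ℂ))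
        = (Real.sqrt (2*π) : ℂ) := by
      rw [← lr2]; push_cast; ring
    have c3 : ((b ^ 2 : ℝ) : ℂ) * ((b⁻¹ : ℝ) : ℂ) = (b:ℂ) := by
      push_cast
      field_simp
    calc 2 * (Real.sqrt π : ℂ) * ((((1/2 : ℝ) ^ ((1/2 : ℝ)) : ℝ) : ℂ) * (b:ℂ)
        - (((1/2 : ℝ) ^ ((1/2 : ℝ)) : ℝ) : ℂ) * (u * u ^ (-(1:ℂ)/2)))
      + ((b ^ 2 : ℝ) : ℂ) * ((Real.sqrt π : ℂ) * ((((1/2 : ℝ) ^ (-(1/2 : ℝ)) : ℝ) : ℂ)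
          * u ^ (-(1:ℂ)/2)))
      - ((b ^ 2 : ℝ) : ℂ) * ((Real.sqrt π : ℂ) * ((((1/2 : ℝ) ^ (-(1/2 : ℝ)) : ℝ) : ℂ)
          * ((b⁻¹ : ℝ) : ℂ)))
        = (2 * (Real.sqrt π : ℂ) * (((1/2 : ℝ) ^ ((1/2 : ℝ)) : ℝ) : ℂ)) * ((b:ℂ) - u * u ^ (-(1:ℂ)/2))
          + ((Real.sqrt π : ℂ) * (((1/2 : ℝ) ^ (-(1/2 : ℝ)) : ℝ) : ℂ))
            * (((b ^ 2 : ℝ) : ℂ) * u ^ (-(1:ℂ)/2) - ((b ^ 2 : ℝ) : ℂ) * ((b⁻¹ : ℝ) : ℂ)) := by ring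
      _ = (Real.sqrt (2*π) : ℂ) * ((b:ℂ) - u * u ^ (-(1:ℂ)/2))
          + (Real.sqrt (2*π) : ℂ) * (((b ^ 2 : ℝ) : ℂ) * u ^ (-(1:ℂ)/2) - (b:ℂ)) := by
          rw [c1, c2, c3]
      _ = (Real.sqrt (2*π) : ℂ) * ((((b ^ 2 : ℝ) : ℂ) - u) * u ^ (-(1:ℂ)/2)) := by ring
      _ = (Real.sqrt (2*π) : ℂ) * (2 * w) * u ^ (-(1:ℂ)/2) := by rw [hbu]; ring
  exact expand

end IGOUAux

/-- Cross-integral for the IG-OU Lévy measure: for `a, b, λ > 0`, `ρ ≤ 0`,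
`Re z < 0`,
`∫₀^∞ (e^{zx}−1)(e^{ρx}−1) (λa/(2√(2π))) x^{−3/2}(1+b²x)e^{−b²x/2} dx
  = λa((z+ρ)(b²−2(z+ρ))^{−1/2} − z(b²−2z)^{−1/2} − ρ(b²−2ρ)^{−1/2})`
(principal branches). -/
theorem stmt15 (a b l : ℝ) (ha : 0 < a) (hb : 0 < b) (hl : 0 < l)
    (ρ : ℝ) (hρ : ρ ≤ 0) (z : ℂ) (hz : z.re < 0) :
    ∫ x in Set.Ioi (0 : ℝ),
        (Complex.exp (z * (x : ℂ)) - 1) * (Complex.exp ((ρ : ℂ) * (x : ℂ)) - 1) *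
          ((l * a / (2 * Real.sqrt (2 * Real.pi)) *
            x ^ (-(3 : ℝ) / 2) * (1 + b ^ 2 * x) * Real.exp (-b ^ 2 * x / 2) : ℝ) : ℂ)
      = (l : ℂ) * a *
          ((z + ρ) * ((b : ℂ) ^ 2 - 2 * (z + ρ)) ^ (-(1 : ℂ) / 2)
            - z * ((b : ℂ) ^ 2 - 2 * z) ^ (-(1 : ℂ) / 2)
            - (ρ : ℂ) * ((b : ℂ) ^ 2 - 2 * (ρ : ℂ)) ^ (-(1 : ℂ) / 2)) := by
  set S : ℝ := Real.sqrt (2 * Real.pi) with hS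
  have hSpos : (0:ℝ) < S := Real.sqrt_pos.mpr (by positivity)
  set K : ℝ := l * a / (2 * S) with hK
  have h1 := psi hb (w := z + (ρ:ℂ))
    (by simp only [Complex.add_re, Complex.ofReal_re]; linarith)
  have h2 := psi hb (w := z) hz.le
  have h3 := psi hb (w := (ρ:ℂ)) (by simpa using hρ)
  set g : ℂ → ℝ → ℂ := fun w x => (Complex.exp (w * x) - 1) *
      ((x ^ (-(3:ℝ)/2) * (1 + b ^ 2 * x) * Real.exp (-b ^ 2 * x / 2) : ℝ) : ℂ) with hg
  have hpt : ∀ x ∈ Ioi (0:ℝ),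
      (Complex.exp (z * (x : ℂ)) - 1) * (Complex.exp ((ρ : ℂ) * (x : ℂ)) - 1) *
          ((l * a / (2 * Real.sqrt (2 * Real.pi)) *
            x ^ (-(3 : ℝ) / 2) * (1 + b ^ 2 * x) * Real.exp (-b ^ 2 * x / 2) : ℝ) : ℂ)
        = (K : ℂ) * (g (z + ρ) x - g z x - g (ρ:ℂ) x) := by
    intro x _
    have he : Complex.exp (z * x) * Complex.exp ((ρ:ℂ) * x)
        = Complex.exp ((z + (ρ:ℂ)) * x) := by
      rw [← Complex.exp_add]
      congr 1
      ring
    simp only [hg]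
    rw [show ((l * a / (2 * Real.sqrt (2 * Real.pi)) *
        x ^ (-(3 : ℝ) / 2) * (1 + b ^ 2 * x) * Real.exp (-b ^ 2 * x / 2) : ℝ) : ℂ)
      = (K : ℂ) * ((x ^ (-(3:ℝ)/2) * (1 + b ^ 2 * x) * Real.exp (-b ^ 2 * x / 2) : ℝ) : ℂ) by
        rw [hK]; push_cast; ring]
    linear_combination ((K : ℂ) *
      ((x ^ (-(3:ℝ)/2) * (1 + b ^ 2 * x) * Real.exp (-b ^ 2 * x / 2) : ℝ) : ℂ)) * he
  rw [setIntegral_congr_fun measurableSet_Ioi hpt]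
  have h12 : IntegrableOn (fun x : ℝ => g (z + ρ) x - g z x) (Ioi 0) := h1.1.sub h2.1
  rw [MeasureTheory.integral_const_mul,
    MeasureTheory.integral_sub h12 h3.1,
    MeasureTheory.integral_sub h1.1 h2.1, h1.2, h2.2, h3.2]
  have hs0 : ((S : ℝ) : ℂ) ≠ 0 := by exact_mod_cast hSpos.ne'
  have hKc : ((K : ℝ) : ℂ) = (l : ℂ) * (a : ℂ) / (2 * (S : ℂ)) := by
    rw [hK]; push_cast; ring
  rw [hKc]
  rw [show Real.sqrt (2 * Real.pi) = S from rfl]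
  field_simp
end

section
/- Let λ > 0, τ > 0, ρ ≤ 0, and let ν be a measure on (0,∞) with 0 < ∫₀^∞ x dν(x) < ∞. Then (1/λ)(1 − (1−e^{−λτ})/(λτ)) ∫₀^∞ x dν(x) − 2 ∫₀^∞ (1 + ρx − e^{ρx}) dν(x) > 0, both integrals being absolutely convergent. -/
open MeasureTheory Real Set

/-- Strict positivity of the constant `C_V` in the BNS squared VIX: for `λ, τ > 0`,
`ρ ≤ 0` and a measure `ν` on `(0,∞)` with `0 < ∫ x dν < ∞`,
`(1/λ)(1 − (1−e^{−λτ})/(λτ)) ∫₀^∞ x dν − 2∫₀^∞ (1+ρx−e^{ρx}) dν > 0`,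
both integrals being absolutely convergent. -/
theorem stmt16 (l τ ρ : ℝ) (hl : 0 < l) (hτ : 0 < τ) (hρ : ρ ≤ 0)
    (ν : MeasureTheory.Measure ℝ) (hsupp : ν (Set.Iic 0) = 0)
    (hint : MeasureTheory.Integrable (fun x : ℝ => x) ν)
    (hpos : 0 < ∫ x, x ∂ν) :
    MeasureTheory.Integrable (fun x : ℝ => 1 + ρ * x - Real.exp (ρ * x)) ν ∧
    0 < (1 / l) * (1 - (1 - Real.exp (-l * τ)) / (l * τ)) * (∫ x, x ∂ν)
        - 2 * ∫ x, (1 + ρ * x - Real.exp (ρ * x)) ∂ν := by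
  have hae : ∀ᵐ x ∂ν, 0 < x := by
    have h := (MeasureTheory.measure_eq_zero_iff_ae_notMem.mp hsupp)
    filter_upwards [h] with x hx
    simpa [Set.mem_Iic, not_le] using hx
  have hbd : ∀ᵐ x ∂ν, ‖1 + ρ * x - Real.exp (ρ * x)‖ ≤ |ρ| * |x| := by
    filter_upwards [hae] with x hx
    have hρx : ρ * x ≤ 0 := mul_nonpos_of_nonpos_of_nonneg hρ hx.le
    have h1 : 1 + ρ * x - Real.exp (ρ * x) ≤ 0 := by
      have := Real.add_one_le_exp (ρ * x); linarith
    have h2 : Real.exp (ρ * x) ≤ 1 := Real.exp_le_one_iff.mpr hρx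
    rw [Real.norm_eq_abs, abs_of_nonpos h1, abs_of_nonpos hρ, abs_of_nonneg hx.le]
    nlinarith
  have hintf : MeasureTheory.Integrable (fun x : ℝ => 1 + ρ * x - Real.exp (ρ * x)) ν := by
    refine MeasureTheory.Integrable.mono' ((hint.abs).const_mul |ρ|) ?_ hbd
    exact (Continuous.aestronglyMeasurable (by continuity))
  refine ⟨hintf, ?_⟩
  have hInt_nonpos : (∫ x, (1 + ρ * x - Real.exp (ρ * x)) ∂ν) ≤ 0 := by
    refine MeasureTheory.integral_nonpos_of_ae ?_
    filter_upwards with x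
    simp only [Pi.zero_apply]
    have := Real.add_one_le_exp (ρ * x); linarith
  have hlτ : 0 < l * τ := mul_pos hl hτ
  have hA : 0 < 1 - (1 - Real.exp (-l * τ)) / (l * τ) := by
    have hexp : -l * τ + 1 < Real.exp (-l * τ) :=
      Real.add_one_lt_exp (by nlinarith)
    have : (1 - Real.exp (-l * τ)) / (l * τ) < 1 := by
      rw [div_lt_one hlτ]; nlinarith
    linarith
  have h1l : 0 < 1 / l := by positivity
  nlinarith [mul_pos (mul_pos h1l hA) hpos]
end

section
/- Let μ be a probability measure on [0,∞) with ∫₀^∞ x dμ(x) < ∞, let B_V > 0, C_V ≥ 0, K ≥ √C_V, s > 0, and let γ be the standard Gaussian measure N(0, s) on ℝ. Set A(u) := (√|B_V u + C_V| − K)·1_{u > (K²−C_V)/B_V} for u ∈ ℝ. Then lim_{ε→0⁺} ∫₀^∞ ∫_ℝ A(x + εy) dγ(y) dμ(x) = ∫₀^∞ (√(B_V x + C_V) − K)⁺ dμ(x). -/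
/-!
For `B > 0` and `K ≥ 0` the extended payoff coincides on all of `ℝ` with
`g(u) = (√(B u + C) − K)⁺`: both vanish exactly when `B u + C ≤ K²`. So the claim is the
convergence `∫∫ g(x + εy) dγ(y) dμ(x) → ∫ g dμ` for a continuous `g` of linear growth. Pointwise
in `x` this is dominated convergence against `a + b|x| + b|y|` (integrable since `γ` has a first
moment); the resulting bound `a + b|x| + b ∫|y| dγ` is `μ`-integrable because `μ` has a first
moment too, so a second dominated convergence finishes the proof.
-/

open MeasureTheory Real Set Filter

open Topology

lemma sqrt_le_one_add_abs (t : ℝ) : √t ≤ 1 + |t| :=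
  sqrt_le_iff.mpr ⟨by positivity, by nlinarith [abs_nonneg t, le_abs_self t]⟩

lemma payoffExt_eq_max {B C K : ℝ} (hB : 0 < B) (hK : 0 ≤ K) (u : ℝ) :
    payoffExt B C K u = max (√(B * u + C) - K) 0 := by
  have hthreshold : (K ^ 2 - C) / B < u ↔ K ^ 2 < B * u + C := by
    rw [div_lt_iff₀ hB, sub_lt_iff_lt_add, mul_comm]
  unfold payoffExt
  split_ifs with h
  · have hK2 := hthreshold.mp h
    have hlt : K < √(B * u + C) := lt_sqrt hK |>.mpr hK2
    rw [abs_of_pos ((sq_nonneg K).trans_lt hK2), max_eq_left (by linarith)]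
  · have hle : √(B * u + C) ≤ K := sqrt_le_left hK |>.mpr (not_lt.mp (mt hthreshold.mpr h))
    rw [max_eq_right (by linarith)]

lemma abs_max_sqrt_sub_le {B C K : ℝ} (hK : 0 ≤ K) (u : ℝ) :
    |max (√(B * u + C) - K) 0| ≤ (1 + |C|) + |B| * |u| := by
  have hlin : |B * u + C| ≤ |B| * |u| + |C| := by
    simpa only [abs_mul] using abs_add_le (B * u) C
  rw [abs_of_nonneg (le_max_right _ _)]
  refine max_le ?_ (by positivity)
  linarith [sqrt_le_one_add_abs (B * u + C)]

section Smoothing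

variable {f : ℝ → ℝ} {a b : ℝ}

lemma abs_comp_add_mul_le (hb : 0 ≤ b) (hgrowth : ∀ u, |f u| ≤ a + b * |u|) {ε : ℝ}
    (hε : |ε| ≤ 1) (x y : ℝ) : |f (x + ε * y)| ≤ a + b * |x| + b * |y| := by
  have hshift : |x + ε * y| ≤ |x| + |y| :=
    calc |x + ε * y| ≤ |x| + |ε| * |y| := by simpa only [abs_mul] using abs_add_le x (ε * y)
      _ ≤ |x| + |y| := by gcongr; exact mul_le_of_le_one_left (abs_nonneg y) hε
  calc |f (x + ε * y)| ≤ a + b * |x + ε * y| := hgrowth _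
    _ ≤ a + b * |x| + b * |y| := by nlinarith

variable {ν : Measure ℝ} [IsProbabilityMeasure ν]

lemma eventually_abs_le_one_nhds_zero : ∀ᶠ ε : ℝ in 𝓝 0, |ε| ≤ 1 := by
  filter_upwards [Metric.closedBall_mem_nhds (0 : ℝ) one_pos] with ε hε
  simpa using hε

lemma tendsto_integral_comp_add_mul (hf : Continuous f) (hb : 0 ≤ b)
    (hgrowth : ∀ u, |f u| ≤ a + b * |u|) (hν : Integrable id ν) (x : ℝ) :
    Tendsto (fun ε => ∫ y, f (x + ε * y) ∂ν) (𝓝 0) (𝓝 (f x)) := by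
  have hlim : Tendsto (fun ε => ∫ y, f (x + ε * y) ∂ν) (𝓝 0) (𝓝 (∫ _, f x ∂ν)) := by
    refine tendsto_integral_filter_of_dominated_convergence (fun y => a + b * |x| + b * |y|)
      (Eventually.of_forall fun ε => (hf.comp (by fun_prop)).aestronglyMeasurable) ?_
      ((integrable_const _).add (hν.abs.const_mul b)) (ae_of_all _ fun y => ?_)
    · filter_upwards [eventually_abs_le_one_nhds_zero] with ε hε
      exact ae_of_all _ (abs_comp_add_mul_le hb hgrowth hε x)
    · have hpath : Tendsto (fun ε : ℝ => x + ε * y) (𝓝 0) (𝓝 x) :=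
        (by fun_prop : Continuous fun ε : ℝ => x + ε * y).tendsto' 0 x (by simp)
      exact (hf.tendsto x).comp hpath
  simpa using hlim

lemma abs_integral_comp_add_mul_le (hb : 0 ≤ b) (hgrowth : ∀ u, |f u| ≤ a + b * |u|)
    (hν : Integrable id ν) {ε : ℝ} (hε : |ε| ≤ 1) (x : ℝ) :
    |∫ y, f (x + ε * y) ∂ν| ≤ a + b * |x| + b * ∫ y, |y| ∂ν := by
  have habs : Integrable (fun y : ℝ => |y|) ν := hν.abs
  have hbound : Integrable (fun y => a + b * |x| + b * |y|) ν :=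
    (integrable_const _).add (habs.const_mul b)
  calc |∫ y, f (x + ε * y) ∂ν| ≤ ∫ y, |f (x + ε * y)| ∂ν := abs_integral_le_integral_abs
    _ ≤ ∫ y, (a + b * |x| + b * |y|) ∂ν :=
        integral_mono_of_nonneg (ae_of_all _ fun _ => abs_nonneg _) hbound
          (ae_of_all _ (abs_comp_add_mul_le hb hgrowth hε x))
    _ = a + b * |x| + b * ∫ y, |y| ∂ν := by
        rw [integral_add (integrable_const _) (habs.const_mul b), integral_const,
          integral_const_mul]
        simp

theorem tendsto_integral_integral_comp_add_mul (hf : Continuous f) (hb : 0 ≤ b)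
    (hgrowth : ∀ u, |f u| ≤ a + b * |u|) (hν : Integrable id ν) {μ : Measure ℝ}
    [IsFiniteMeasure μ] (hμ : Integrable id μ) :
    Tendsto (fun ε => ∫ x, ∫ y, f (x + ε * y) ∂ν ∂μ) (𝓝 0) (𝓝 (∫ x, f x ∂μ)) := by
  refine tendsto_integral_filter_of_dominated_convergence
    (fun x => a + b * |x| + b * ∫ y, |y| ∂ν) (Eventually.of_forall fun ε => ?_) ?_
    (((integrable_const a).add (hμ.abs.const_mul b)).add (integrable_const _))
    (ae_of_all _ (tendsto_integral_comp_add_mul hf hb hgrowth hν))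
  · exact (StronglyMeasurable.integral_prod_right' (f := fun p : ℝ × ℝ => f (p.1 + ε * p.2))
      (hf.comp (by fun_prop)).stronglyMeasurable).aestronglyMeasurable
  · filter_upwards [eventually_abs_le_one_nhds_zero] with ε hε
    exact ae_of_all _ (abs_integral_comp_add_mul_le hb hgrowth hν hε)

end Smoothing

theorem stmt18_general (μ : MeasureTheory.Measure ℝ) [IsProbabilityMeasure μ]
    (hmean : MeasureTheory.Integrable (fun x : ℝ => x) μ)
    (B C K : ℝ) (hB : 0 < B) (hK : Real.sqrt C ≤ K)
    (s : ℝ) :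
    Filter.Tendsto
      (fun ε : ℝ => ∫ x, ∫ y, payoffExt B C K (x + ε * y)
        ∂(ProbabilityTheory.gaussianReal 0 s.toNNReal) ∂μ)
      (nhdsWithin 0 (Set.Ioi 0))
      (nhds (∫ x, max (Real.sqrt (B * x + C) - K) 0 ∂μ)) := by
  have hK0 : 0 ≤ K := (sqrt_nonneg C).trans hK
  rw [funext (payoffExt_eq_max (C := C) hB hK0)]
  exact (tendsto_integral_integral_comp_add_mul (by fun_prop) (abs_nonneg B)
    (abs_max_sqrt_sub_le hK0) ((ProbabilityTheory.memLp_id_gaussianReal 1).integrable le_rfl)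
    hmean).mono_left nhdsWithin_le_nhds

/-- Convergence of the Gaussian-smoothed price to the true price
(`lim_{ε→0} P_t^{(ε)} = P_t`): for a probability measure `μ` on `[0,∞)` with
finite mean and `γ = N(0,s)`,
`lim_{ε→0⁺} ∫₀^∞ ∫_ℝ A(x+εy) dγ(y) dμ(x) = ∫₀^∞ (√(B x + C) − K)⁺ dμ(x)`. -/
theorem stmt18 (μ : MeasureTheory.Measure ℝ) [IsProbabilityMeasure μ]
    (hsupp : μ (Set.Iio 0) = 0)
    (hmean : MeasureTheory.Integrable (fun x : ℝ => x) μ)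
    (B C K : ℝ) (hB : 0 < B) (hC : 0 ≤ C) (hK : Real.sqrt C ≤ K)
    (s : ℝ) (hs : 0 < s) :
    Filter.Tendsto
      (fun ε : ℝ => ∫ x, ∫ y, payoffExt B C K (x + ε * y)
        ∂(ProbabilityTheory.gaussianReal 0 s.toNNReal) ∂μ)
      (nhdsWithin 0 (Set.Ioi 0))
      (nhds (∫ x, max (Real.sqrt (B * x + C) - K) 0 ∂μ)) :=
  stmt18_general μ hmean B C K hB hK s
end
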